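/- arXiv:2308.07859 — 10 statements merged into one kernel-verified Lean document; each statement's English description precedes it below -/
import Mathlib

section
/- Let n ≥ 1 and let J_1, J_2 be disjoint subsets of {1,…,n}. Let N, M be (n+1)×(n+1) complex matrices such that N_{a,b} = 0 unless a < b and {a, a+1, …, b−1} ⊆ J_1, and M_{a,b} = 0 unless a > b and {b, b+1, …, a−1} ⊆ J_2. Then (I + N)(I + M) = (I + M)(I + N). -/
open Matrix BigOperators

/-- Let `J₁, J₂` be disjoint subsets of `{1,…,n}`.  If `N` is supported on positions
`(a, b)` (1-based) with `a < b` and `{a,…,b-1} ⊆ J₁`, and `M` is supported on positions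
`(a, b)` with `a > b` and `{b,…,a-1} ⊆ J₂`, then `(I + N)(I + M) = (I + M)(I + N)`.
Positions are encoded by `p q : Fin (n+1)`, with 1-based indices `p + 1`, `q + 1`. -/
theorem stmt3 (n : ℕ) (hn : 1 ≤ n) (J₁ J₂ : Finset ℕ)
    (hJ₁ : J₁ ⊆ Finset.Icc 1 n) (hJ₂ : J₂ ⊆ Finset.Icc 1 n) (hdisj : Disjoint J₁ J₂)
    (N M : Matrix (Fin (n + 1)) (Fin (n + 1)) ℂ)
    (hN : ∀ p q : Fin (n + 1),
      ¬((p : ℕ) < (q : ℕ) ∧ Finset.Ico ((p : ℕ) + 1) ((q : ℕ) + 1) ⊆ J₁) → N p q = 0)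
    (hM : ∀ p q : Fin (n + 1),
      ¬((q : ℕ) < (p : ℕ) ∧ Finset.Ico ((q : ℕ) + 1) ((p : ℕ) + 1) ⊆ J₂) → M p q = 0) :
    (1 + N) * (1 + M) = (1 + M) * (1 + N) := by
  have hNM : N * M = 0 := by
    ext p q
    simp only [Matrix.mul_apply, Matrix.zero_apply]
    apply Finset.sum_eq_zero
    intro k _
    by_cases h1 : (p : ℕ) < (k : ℕ) ∧ Finset.Ico ((p : ℕ) + 1) ((k : ℕ) + 1) ⊆ J₁
    · by_cases h2 : (q : ℕ) < (k : ℕ) ∧ Finset.Ico ((q : ℕ) + 1) ((k : ℕ) + 1) ⊆ J₂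
      · exfalso
        have hk1 : (k : ℕ) ∈ J₁ := h1.2 (Finset.mem_Ico.mpr ⟨h1.1, Nat.lt_succ_self _⟩)
        have hk2 : (k : ℕ) ∈ J₂ := h2.2 (Finset.mem_Ico.mpr ⟨h2.1, Nat.lt_succ_self _⟩)
        exact (Finset.disjoint_left.mp hdisj hk1) hk2
      · rw [hM k q h2, mul_zero]
    · rw [hN p k h1, zero_mul]
  have hMN : M * N = 0 := by
    ext p q
    simp only [Matrix.mul_apply, Matrix.zero_apply]
    apply Finset.sum_eq_zero
    intro k _
    by_cases h1 : (k : ℕ) < (p : ℕ) ∧ Finset.Ico ((k : ℕ) + 1) ((p : ℕ) + 1) ⊆ J₂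
    · by_cases h2 : (k : ℕ) < (q : ℕ) ∧ Finset.Ico ((k : ℕ) + 1) ((q : ℕ) + 1) ⊆ J₁
      · exfalso
        have hk2 : (k : ℕ) + 1 ∈ J₂ := h1.2 (Finset.mem_Ico.mpr ⟨le_refl _, Nat.succ_lt_succ h1.1⟩)
        have hk1 : (k : ℕ) + 1 ∈ J₁ := h2.2 (Finset.mem_Ico.mpr ⟨le_refl _, Nat.succ_lt_succ h2.1⟩)
        exact (Finset.disjoint_left.mp hdisj hk1) hk2
      · rw [hN k q h2, mul_zero]
    · rw [hM p k h1, zero_mul]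
  have e1 : (1 + N) * (1 + M) = 1 + N + M + N * M := by noncomm_ring
  have e2 : (1 + M) * (1 + N) = 1 + M + N + M * N := by noncomm_ring
  rw [e1, e2, hNM, hMN, add_zero, add_zero, add_right_comm]
end

section
/- Let n ≥ 1 and let J_1, J_2 be disjoint subsets of {1,…,n}. Let x_1, x_2 be regular upper unitriangular (n+1)×(n+1) complex matrices of type J_1 and let y_1, y_2 be regular lower unitriangular matrices of type J_2. Then x_1 y_1 and x_2 y_2 are similar, i.e., there exists an invertible complex matrix g with g (x_1 y_1) g^{-1} = x_2 y_2. -/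
open Matrix BigOperators

/-- `x` is a regular upper unitriangular `(n+1) × (n+1)` complex matrix of type
`J ⊆ {1,…,n}`: all diagonal entries equal `1`; an off-diagonal entry `x_{a,b}`
(1-based indices `a = p + 1`, `b = q + 1`) vanishes unless `a < b` and
`{a,…,b-1} ⊆ J`; and `x_{a,a+1} ≠ 0` for every `a ∈ J`. -/
def RegUpper (n : ℕ) (J : Finset ℕ) (x : Matrix (Fin (n + 1)) (Fin (n + 1)) ℂ) : Prop :=
  (∀ p, x p p = 1) ∧
  (∀ p q : Fin (n + 1), p ≠ q →
      ¬((p : ℕ) < (q : ℕ) ∧ Finset.Ico ((p : ℕ) + 1) ((q : ℕ) + 1) ⊆ J) → x p q = 0) ∧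
  (∀ p q : Fin (n + 1), (p : ℕ) + 1 ∈ J → (q : ℕ) = (p : ℕ) + 1 → x p q ≠ 0)

/-- `y` is a regular lower unitriangular matrix of type `J` iff its transpose is a regular
upper unitriangular matrix of type `J`. -/
def RegLower (n : ℕ) (J : Finset ℕ) (y : Matrix (Fin (n + 1)) (Fin (n + 1)) ℂ) : Prop :=
  RegUpper n J yᵀ

namespace Stmt4Aux

/-- Upper unitriangular with off-diagonal support in `J`-intervals. -/
def SuppU (n : ℕ) (J : Finset ℕ) (u : Matrix (Fin (n + 1)) (Fin (n + 1)) ℂ) : Prop :=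
  (∀ p, u p p = 1) ∧
  (∀ p q : Fin (n + 1), p ≠ q →
      ¬((p : ℕ) < (q : ℕ) ∧ Finset.Ico ((p : ℕ) + 1) ((q : ℕ) + 1) ⊆ J) → u p q = 0)

lemma SuppU.supp {n : ℕ} {J : Finset ℕ} {u : Matrix (Fin (n + 1)) (Fin (n + 1)) ℂ}
    (hu : SuppU n J u) {p q : Fin (n + 1)} (hpq : p ≠ q) (h : u p q ≠ 0) :
    (p : ℕ) < (q : ℕ) ∧ Finset.Ico ((p : ℕ) + 1) ((q : ℕ) + 1) ⊆ J := by
  by_contra hc; exact h (hu.2 p q hpq hc)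

/-- Commutation of upper `J₁`-supported with lower `J₂`-supported unitriangular matrices. -/
lemma comm_mul {n : ℕ} {J₁ J₂ : Finset ℕ} (hd : Disjoint J₁ J₂)
    {u w : Matrix (Fin (n + 1)) (Fin (n + 1)) ℂ}
    (hu : SuppU n J₁ u) (hw : SuppU n J₂ wᵀ) : u * w = w * u := by
  have hwe : ∀ p q : Fin (n + 1), p ≠ q → w p q ≠ 0 →
      (q : ℕ) < (p : ℕ) ∧ Finset.Ico ((q : ℕ) + 1) ((p : ℕ) + 1) ⊆ J₂ := by
    intro p q hpq h
    exact hw.supp (by simpa [ne_comm] using hpq : q ≠ p) (by simpa [Matrix.transpose_apply] using h)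
  ext p q
  rw [mul_apply, mul_apply]
  by_cases hpq : p = q
  · subst hpq
    rw [Finset.sum_eq_single p, Finset.sum_eq_single p]
    · have hwd : w p p = 1 := hw.1 p
      rw [hu.1, hwd, mul_one]
    · intro r _ hr
      by_cases h1 : w p r = 0
      · simp [h1]
      by_cases h2 : u r p = 0
      · simp [h2]
      exfalso
      obtain ⟨hlt1, hs1⟩ := hwe p r (Ne.symm hr) h1
      obtain ⟨hlt2, hs2⟩ := hu.supp hr h2
      have : (r : ℕ) + 1 ∈ J₁ := hs2 (by simp [Finset.mem_Ico]; omega)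
      have : (r : ℕ) + 1 ∈ J₂ := hs1 (by simp [Finset.mem_Ico]; omega) |> fun h => h
      exact (Finset.disjoint_left.mp hd ‹(r : ℕ) + 1 ∈ J₁› ‹(r : ℕ) + 1 ∈ J₂›)
    · simp
    · intro r _ hr
      by_cases h1 : u p r = 0
      · simp [h1]
      by_cases h2 : w r p = 0
      · simp [h2]
      exfalso
      obtain ⟨hlt1, hs1⟩ := hu.supp (Ne.symm hr) h1
      obtain ⟨hlt2, hs2⟩ := hwe r p hr h2
      have m1 : (r : ℕ) ∈ J₁ := hs1 (by simp [Finset.mem_Ico]; omega)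
      have m2 : (r : ℕ) ∈ J₂ := hs2 (by simp [Finset.mem_Ico]; omega)
      exact Finset.disjoint_left.mp hd m1 m2
    · simp
  · have key1 : ∀ r : Fin (n + 1), u p r * w r q =
        (if r = q then u p q else 0) + (if r = p then w p q else 0) := by
      intro r
      by_cases h1 : r = q
      · subst h1
        have hwr : w r r = 1 := hw.1 r
        rw [hwr, mul_one, if_pos rfl, if_neg (fun h : r = p => hpq h.symm), add_zero]
      · by_cases h2 : r = p
        · subst h2
          rw [hu.1, one_mul, if_neg h1, if_pos rfl, zero_add]
        · rw [if_neg h1, if_neg h2, add_zero]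
          by_cases h3 : u p r = 0
          · simp [h3]
          by_cases h4 : w r q = 0
          · simp [h4]
          exfalso
          obtain ⟨hlt1, hs1⟩ := hu.supp (Ne.symm h2) h3
          obtain ⟨hlt2, hs2⟩ := hwe r q (fun h => h1 h) h4
          have m1 : (r : ℕ) ∈ J₁ := hs1 (by simp [Finset.mem_Ico]; omega)
          have m2 : (r : ℕ) ∈ J₂ := hs2 (by simp [Finset.mem_Ico]; omega)
          exact Finset.disjoint_left.mp hd m1 m2
    have key2 : ∀ r : Fin (n + 1), w p r * u r q =
        (if r = p then u p q else 0) + (if r = q then w p q else 0) := by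
      intro r
      by_cases h1 : r = p
      · subst h1
        have hwr : w r r = 1 := hw.1 r
        rw [hwr, one_mul, if_pos rfl, if_neg hpq, add_zero]
      · by_cases h2 : r = q
        · subst h2
          rw [hu.1, mul_one, if_neg h1, if_pos rfl, zero_add]
        · rw [if_neg h1, if_neg h2, add_zero]
          by_cases h3 : w p r = 0
          · simp [h3]
          by_cases h4 : u r q = 0
          · simp [h4]
          exfalso
          obtain ⟨hlt1, hs1⟩ := hwe p r (fun h => h1 h.symm) h3
          obtain ⟨hlt2, hs2⟩ := hu.supp h2 h4
          have m1 : (r : ℕ) + 1 ∈ J₂ := hs1 (by simp [Finset.mem_Ico]; omega)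
          have m2 : (r : ℕ) + 1 ∈ J₁ := hs2 (by simp [Finset.mem_Ico]; omega)
          exact Finset.disjoint_left.mp hd m2 m1
    simp only [key1, key2, Finset.sum_add_distrib, Finset.sum_ite_eq' Finset.univ,
      Finset.mem_univ, if_true]

/-! ### run lengths -/

open scoped Classical in

def runlen (n : ℕ) (J : Finset ℕ) (v : ℕ) : ℕ :=
  Nat.findGreatest (fun k => Finset.Ico v (v + k) ⊆ J) n

lemma runlen_subset (n : ℕ) (J : Finset ℕ) (v : ℕ) :
    Finset.Ico v (v + runlen n J v) ⊆ J := by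
  exact Nat.findGreatest_spec (P := fun k => Finset.Ico v (v + k) ⊆ J)
    (Nat.zero_le n) (by simp)

lemma runlen_card_le {n : ℕ} {J : Finset ℕ} (hJ : J ⊆ Finset.Icc 1 n) {v k : ℕ}
    (h : Finset.Ico v (v + k) ⊆ J) : k ≤ n := by
  have := Finset.card_le_card (h.trans hJ)
  simpa [Nat.card_Ico, Nat.card_Icc] using this

lemma runlen_end_notMem {n : ℕ} {J : Finset ℕ} (hJ : J ⊆ Finset.Icc 1 n) (v : ℕ) :
    v + runlen n J v ∉ J := by
  intro hmem
  have hsub : Finset.Ico v (v + (runlen n J v + 1)) ⊆ J := by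
    intro t ht
    simp only [Finset.mem_Ico] at ht
    rcases Nat.lt_or_ge t (v + runlen n J v) with h | h
    · exact runlen_subset n J v (by simp [Finset.mem_Ico]; omega)
    · have : t = v + runlen n J v := by omega
      rwa [this]
  have hle : runlen n J v + 1 ≤ n := runlen_card_le hJ hsub
  exact Nat.findGreatest_is_greatest (P := fun k => Finset.Ico v (v + k) ⊆ J)
    (Nat.lt_succ_self _) hle hsub

lemma runlen_mem {n : ℕ} {J : Finset ℕ} (hJ : J ⊆ Finset.Icc 1 n) {v : ℕ} (hv : v ∈ J) :
    runlen n J v = runlen n J (v + 1) + 1 := by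
  set a := runlen n J (v + 1) with ha
  have hsub : Finset.Ico v (v + (a + 1)) ⊆ J := by
    intro t ht
    simp only [Finset.mem_Ico] at ht
    rcases Nat.eq_or_lt_of_le ht.1 with h | h
    · rwa [← h]
    · exact runlen_subset n J (v + 1) (by simp [Finset.mem_Ico]; omega)
  have hge : a + 1 ≤ runlen n J v :=
    Nat.le_findGreatest (P := fun k => Finset.Ico v (v + k) ⊆ J)
      (runlen_card_le hJ hsub) hsub
  have hle : runlen n J v ≤ a + 1 := by
    by_contra hc
    push_neg at hc
    have hmem : v + 1 + a ∈ J := by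
      apply runlen_subset n J v
      simp [Finset.mem_Ico]; omega
    exact runlen_end_notMem hJ (v + 1) hmem
  omega

/-! ### powers of strictly supported nilpotents -/

def StrictSupp (n : ℕ) (J : Finset ℕ) (N : Matrix (Fin (n + 1)) (Fin (n + 1)) ℂ) : Prop :=
  ∀ p q : Fin (n + 1), N p q ≠ 0 →
    (p : ℕ) < (q : ℕ) ∧ Finset.Ico ((p : ℕ) + 1) ((q : ℕ) + 1) ⊆ J

lemma pow_supp {n : ℕ} {J : Finset ℕ} {N : Matrix (Fin (n + 1)) (Fin (n + 1)) ℂ}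
    (hN : StrictSupp n J N) (k : ℕ) :
    ∀ p q : Fin (n + 1), (N ^ k) p q ≠ 0 →
      (p : ℕ) + k ≤ (q : ℕ) ∧ Finset.Ico ((p : ℕ) + 1) ((q : ℕ) + 1) ⊆ J := by
  induction k with
  | zero =>
    intro p q h
    rw [pow_zero] at h
    have hpq : p = q := by
      by_contra hc
      exact h (Matrix.one_apply_ne hc)
    subst hpq
    simp
  | succ k ih =>
    intro p q h
    rw [pow_succ, mul_apply] at h
    obtain ⟨r, -, hr⟩ := Finset.exists_ne_zero_of_sum_ne_zero h
    have h1 : (N ^ k) p r ≠ 0 := fun hz => hr (by rw [hz, zero_mul])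
    have h2 : N r q ≠ 0 := fun hz => hr (by rw [hz, mul_zero])
    obtain ⟨ha1, ha2⟩ := ih p r h1
    obtain ⟨hb1, hb2⟩ := hN r q h2
    refine ⟨by omega, ?_⟩
    intro t ht
    simp only [Finset.mem_Ico] at ht
    rcases Nat.lt_or_ge t ((r : ℕ) + 1) with hcase | hcase
    · exact ha2 (by simp [Finset.mem_Ico]; omega)
    · exact hb2 (by simp [Finset.mem_Ico]; omega)

lemma key_step {n : ℕ} {J : Finset ℕ} {N : Matrix (Fin (n + 1)) (Fin (n + 1)) ℂ}
    (hN : StrictSupp n J N) {k : ℕ} {p' p r : Fin (n + 1)}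
    (h1 : (p : ℕ) = (p' : ℕ) + 1) (h2 : (r : ℕ) = (p : ℕ) + k) :
    (N ^ (k + 1)) p' r = N p' p * (N ^ k) p r := by
  rw [pow_succ', mul_apply]
  apply Finset.sum_eq_single p
  · intro s _ hs
    by_cases hz1 : N p' s = 0
    · rw [hz1, zero_mul]
    by_cases hz2 : (N ^ k) s r = 0
    · rw [hz2, mul_zero]
    exfalso
    have hb1 := (hN p' s hz1).1
    have hb2 := (pow_supp hN k s r hz2).1
    exact hs (Fin.ext (by omega))
  · intro h; exact absurd (Finset.mem_univ p) h

/-! ### the canonical form and the clearing lemma -/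

def canon (n : ℕ) (J : Finset ℕ) (x : Matrix (Fin (n + 1)) (Fin (n + 1)) ℂ) :
    Matrix (Fin (n + 1)) (Fin (n + 1)) ℂ :=
  Matrix.of fun p q : Fin (n + 1) =>
    if p = q then 1 else if (q : ℕ) = (p : ℕ) + 1 ∧ (q : ℕ) ∈ J then x p q else 0

lemma canon_suppU (n : ℕ) (J : Finset ℕ) (x : Matrix (Fin (n + 1)) (Fin (n + 1)) ℂ) :
    SuppU n J (canon n J x) := by
  constructor
  · intro p; simp [canon]
  · intro p q hpq hc
    simp only [canon, Matrix.of_apply, if_neg hpq]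
    rw [if_neg]
    rintro ⟨h1, h2⟩
    apply hc
    refine ⟨by omega, ?_⟩
    intro t ht
    simp only [Finset.mem_Ico] at ht
    have : t = (q : ℕ) := by omega
    rwa [this]

lemma clear {n : ℕ} {J : Finset ℕ} (hJ : J ⊆ Finset.Icc 1 n)
    (x : Matrix (Fin (n + 1)) (Fin (n + 1)) ℂ) (hx : RegUpper n J x) :
    ∃ u : Matrix (Fin (n + 1)) (Fin (n + 1)) ℂ,
      SuppU n J u ∧ x * u = u * canon n J x := by
  classical
  set N : Matrix (Fin (n + 1)) (Fin (n + 1)) ℂ := x - 1 with hNdef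
  have hNx : ∀ p q : Fin (n + 1), p ≠ q → N p q = x p q := by
    intro p q hpq
    simp [hNdef, Matrix.sub_apply, Matrix.one_apply_ne hpq]
  have hN : StrictSupp n J N := by
    intro p q h
    have hpq : p ≠ q := by
      rintro rfl
      apply h
      simp [hNdef, Matrix.sub_apply, Matrix.one_apply_eq, hx.1 p]
    rw [hNx p q hpq] at h
    by_contra hc
    exact h (hx.2.1 p q hpq hc)
  -- block data
  set L : Fin (n + 1) → ℕ := fun q => runlen n J ((q : ℕ) + 1) with hLdef
  have hE : ∀ q : Fin (n + 1), (q : ℕ) + L q ≤ n := by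
    intro q
    rcases Nat.eq_zero_or_pos (L q) with h | h
    · omega
    · have hm : (q : ℕ) + L q ∈ J := by
        apply runlen_subset n J ((q : ℕ) + 1)
        simp only [Finset.mem_Ico]
        have hLrw : L q = runlen n J ((q : ℕ) + 1) := rfl
        omega
      have := hJ hm
      simp only [Finset.mem_Icc] at this
      omega
  set E : Fin (n + 1) → Fin (n + 1) := fun q => ⟨(q : ℕ) + L q, by
    have := hE q; omega⟩ with hEdef
  have hEval : ∀ q, ((E q : Fin (n + 1)) : ℕ) = (q : ℕ) + L q := fun q => rfl
  set c : Fin (n + 1) → ℂ := fun q => (N ^ L q) q (E q) with hcdef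
  -- c is nonzero
  have hc : ∀ q, c q ≠ 0 := by
    suffices h : ∀ k, ∀ q : Fin (n + 1), L q = k → c q ≠ 0 by
      intro q; exact h (L q) q rfl
    intro k
    induction k with
    | zero =>
      intro q hLq
      have hEq : E q = q := Fin.ext (by rw [hEval, hLq]; omega)
      show (N ^ L q) q (E q) ≠ 0
      rw [hLq, hEq, pow_zero, Matrix.one_apply_eq]
      exact one_ne_zero
    | succ k ih =>
      intro q hLq
      have hq1n : (q : ℕ) + 1 ≤ n := by have := hE q; omega
      have hq1J : (q : ℕ) + 1 ∈ J := by
        apply runlen_subset n J ((q : ℕ) + 1)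
        simp only [Finset.mem_Ico]
        have hLrw : L q = runlen n J ((q : ℕ) + 1) := rfl
        omega
      set q'' : Fin (n + 1) := ⟨(q : ℕ) + 1, by omega⟩ with hq''
      have hq''val : ((q'' : Fin (n + 1)) : ℕ) = (q : ℕ) + 1 := rfl
      have hLq'' : L q'' = k := by
        have h1 : runlen n J ((q : ℕ) + 1) = runlen n J ((q : ℕ) + 1 + 1) + 1 :=
          runlen_mem hJ hq1J
        show runlen n J (((q'' : Fin (n + 1)) : ℕ) + 1) = k
        rw [hq''val]
        have h2 : L q = runlen n J ((q : ℕ) + 1) := rfl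
        omega
      have hEq'' : E q'' = E q := Fin.ext (by rw [hEval, hEval, hq''val, hLq'', hLq]; omega)
      have hstep : (N ^ (k + 1)) q (E q) = N q q'' * (N ^ k) q'' (E q) :=
        key_step hN (by rw [hq''val]) (by rw [hEval, hq''val, hLq]; omega)
      have hxne : x q q'' ≠ 0 := hx.2.2 q q'' hq1J hq''val
      have hqne : q ≠ q'' := by
        intro h
        have : (q : ℕ) = (q : ℕ) + 1 := by conv_lhs => rw [h]
        omega
      have hNe : N q q'' = x q q'' := hNx q q'' hqne
      have hceq : c q = x q q'' * c q'' := by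
        show (N ^ L q) q (E q) = x q q'' * (N ^ L q'') q'' (E q'')
        rw [hLq, hLq'', hEq'', hstep, hNe]
      rw [hceq]
      exact mul_ne_zero hxne (ih q'' hLq'')
  -- the matrix u
  set u : Matrix (Fin (n + 1)) (Fin (n + 1)) ℂ :=
    Matrix.of fun p q : Fin (n + 1) => (c q)⁻¹ * (N ^ L q) p (E q) with hudef
  have hu : SuppU n J u := by
    constructor
    · intro p
      show (c p)⁻¹ * (N ^ L p) p (E p) = 1
      exact inv_mul_cancel₀ (hc p)
    · intro p q hpq hcond
      show (c q)⁻¹ * (N ^ L q) p (E q) = 0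
      rcases eq_or_ne ((N ^ L q) p (E q)) 0 with h | h
      · rw [h, mul_zero]
      exfalso
      obtain ⟨h1, h2⟩ := pow_supp hN (L q) p (E q) h
      rw [hEval] at h1 h2
      apply hcond
      have hne : (p : ℕ) ≠ (q : ℕ) := fun hh => hpq (Fin.ext hh)
      constructor
      · omega
      · intro t ht
        apply h2
        simp only [Finset.mem_Ico] at ht ⊢
        omega
  refine ⟨u, hu, ?_⟩
  -- main identity
  set C' : Matrix (Fin (n + 1)) (Fin (n + 1)) ℂ :=
    Matrix.of fun p q : Fin (n + 1) =>
      if (q : ℕ) = (p : ℕ) + 1 ∧ (q : ℕ) ∈ J then x p q else 0 with hC'def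
  have hxN : x = N + 1 := by simp [hNdef]
  have hcanon : canon n J x = C' + 1 := by
    ext p q
    simp only [canon, Matrix.of_apply, Matrix.add_apply, hC'def]
    by_cases hpq : p = q
    · subst hpq
      rw [if_pos rfl, Matrix.one_apply_eq, if_neg (by rintro ⟨h, -⟩; omega)]
      ring
    · rw [if_neg hpq, Matrix.one_apply_ne hpq, add_zero]
  rw [hcanon, hxN, add_mul, one_mul, mul_add, mul_one]
  congr 1
  ext p q
  rw [mul_apply, mul_apply]
  -- LHS : (N * u) p q = (c q)⁻¹ * (N ^ (L q + 1)) p (E q)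
  have hLHS : ∑ r, N p r * u r q = (c q)⁻¹ * (N ^ (L q + 1)) p (E q) := by
    rw [pow_succ', mul_apply, Finset.mul_sum]
    apply Finset.sum_congr rfl
    intro r _
    show N p r * ((c q)⁻¹ * (N ^ L q) r (E q)) = _
    ring
  rw [hLHS]
  by_cases hqJ : (q : ℕ) ∈ J
  · -- q ∈ J : single contribution at q' = q - 1
    have hq1 : 1 ≤ (q : ℕ) := by
      have := hJ hqJ
      simp only [Finset.mem_Icc] at this
      omega
    set q' : Fin (n + 1) := ⟨(q : ℕ) - 1, by omega⟩ with hq'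
    have hq'val : ((q' : Fin (n + 1)) : ℕ) = (q : ℕ) - 1 := rfl
    have hq'val1 : ((q' : Fin (n + 1)) : ℕ) + 1 = (q : ℕ) := by rw [hq'val]; omega
    have hLq' : L q' = L q + 1 := by
      show runlen n J (((q' : Fin (n + 1)) : ℕ) + 1) = runlen n J ((q : ℕ) + 1) + 1
      rw [hq'val1]
      exact runlen_mem hJ hqJ
    have hEq' : E q' = E q := Fin.ext (by rw [hEval, hEval, hLq']; omega)
    have hstep : (N ^ (L q + 1)) q' (E q) = N q' q * (N ^ (L q)) q (E q) :=
      key_step hN hq'val1.symm (by rw [hEval])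
    have hq'ne : q' ≠ q := by
      intro h
      have : ((q' : Fin (n + 1)) : ℕ) = (q : ℕ) := by rw [h]
      omega
    have hNq' : N q' q = x q' q := hNx q' q hq'ne
    have hxne : x q' q ≠ 0 := hx.2.2 q' q (by rw [hq'val1]; exact hqJ) hq'val1.symm
    have hRHS : ∑ r, u p r * C' r q = u p q' * x q' q := by
      have hsingle : ∑ r, u p r * C' r q = u p q' * C' q' q := by
        apply Finset.sum_eq_single q'
        · intro r _ hr
          have hno : ¬((q : ℕ) = (r : ℕ) + 1 ∧ (q : ℕ) ∈ J) := by
            rintro ⟨h1, -⟩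
            exact hr (Fin.ext (by omega))
          show u p r * (if (q : ℕ) = (r : ℕ) + 1 ∧ (q : ℕ) ∈ J then x r q else 0) = 0
          rw [if_neg hno, mul_zero]
        · intro h; exact absurd (Finset.mem_univ q') h
      rw [hsingle]
      show u p q' * (if (q : ℕ) = ((q' : Fin (n + 1)) : ℕ) + 1 ∧ (q : ℕ) ∈ J
        then x q' q else 0) = _
      rw [if_pos ⟨by omega, hqJ⟩]
    rw [hRHS]
    have hcq' : c q' = x q' q * c q := by
      show (N ^ L q') q' (E q') = x q' q * (N ^ L q) q (E q)
      rw [hLq', hEq', hstep, hNq']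
    have hup : u p q' = (x q' q * c q)⁻¹ * (N ^ (L q + 1)) p (E q) := by
      show (c q')⁻¹ * (N ^ L q') p (E q') = _
      rw [hcq', hLq', hEq']
    rw [hup]
    have hcq := hc q
    field_simp
  · -- q ∉ J : both sides vanish
    have hzero : (N ^ (L q + 1)) p (E q) = 0 := by
      by_contra h
      obtain ⟨h1, h2⟩ := pow_supp hN (L q + 1) p (E q) h
      rw [hEval] at h1 h2
      exact hqJ (h2 (by simp only [Finset.mem_Ico]; omega))
    rw [hzero, mul_zero]
    symm
    apply Finset.sum_eq_zero
    intro r _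
    show u p r * (if (q : ℕ) = (r : ℕ) + 1 ∧ (q : ℕ) ∈ J then x r q else 0) = 0
    rw [if_neg (by rintro ⟨-, h⟩; exact hqJ h), mul_zero]

/-! ### determinants and units -/

lemma SuppU.det_one {n : ℕ} {J : Finset ℕ} {u : Matrix (Fin (n + 1)) (Fin (n + 1)) ℂ}
    (hu : SuppU n J u) : u.det = 1 := by
  have hbt : u.BlockTriangular id := by
    intro i j hij
    have hij' : (j : ℕ) < (i : ℕ) := hij
    apply hu.2 i j (by intro h; subst h; exact absurd hij' (lt_irrefl _))
    rintro ⟨hlt, -⟩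
    omega
  rw [Matrix.det_of_upperTriangular hbt]
  exact Finset.prod_eq_one fun i _ => hu.1 i

lemma SuppU.isUnit {n : ℕ} {J : Finset ℕ} {u : Matrix (Fin (n + 1)) (Fin (n + 1)) ℂ}
    (hu : SuppU n J u) : IsUnit u :=
  (Matrix.isUnit_iff_isUnit_det u).mpr (by rw [hu.det_one]; exact isUnit_one)

lemma SuppU.isUnit_transpose {n : ℕ} {J : Finset ℕ}
    {v : Matrix (Fin (n + 1)) (Fin (n + 1)) ℂ} (hv : SuppU n J v) : IsUnit vᵀ :=
  (Matrix.isUnit_iff_isUnit_det vᵀ).mpr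
    (by rw [Matrix.det_transpose, hv.det_one]; exact isUnit_one)

/-! ### noncommutative algebra helpers -/

lemma inv_comm {R : Type*} [Ring R] (g : Rˣ) (A B : R) (h : A * ↑g = ↑g * B) :
    (↑g⁻¹ : R) * A = B * ↑g⁻¹ := by
  calc (↑g⁻¹ : R) * A = ↑g⁻¹ * (A * ↑g * ↑g⁻¹) := by
        rw [mul_assoc (A) (↑g : R) _, Units.mul_inv, mul_one]
  _ = ↑g⁻¹ * (↑g * B * ↑g⁻¹) := by rw [h]
  _ = B * ↑g⁻¹ := by rw [← mul_assoc, ← mul_assoc, Units.inv_mul, one_mul]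

lemma conj_eq {R : Type*} [Ring R] (g : Rˣ) (A B : R) (h : ↑g * A = B * ↑g) :
    (↑g : R) * A * ↑g⁻¹ = B := by
  rw [h, mul_assoc, Units.mul_inv, mul_one]

lemma pair {R : Type*} [Monoid R] {a b A B C : R}
    (h1 : b * A = B * b) (h2 : a * B = C * a) : (a * b) * A = C * (a * b) := by
  rw [mul_assoc, h1, ← mul_assoc, h2, mul_assoc]

-- MORE
end Stmt4Aux

open Stmt4Aux

/-- For disjoint `J₁, J₂ ⊆ {1,…,n}`, any two products `x·y` with `x` regular upper
unitriangular of type `J₁` and `y` regular lower unitriangular of type `J₂` are similar. -/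
theorem stmt4 (n : ℕ) (hn : 1 ≤ n) (J₁ J₂ : Finset ℕ)
    (hJ₁ : J₁ ⊆ Finset.Icc 1 n) (hJ₂ : J₂ ⊆ Finset.Icc 1 n) (hdisj : Disjoint J₁ J₂)
    (x₁ x₂ y₁ y₂ : Matrix (Fin (n + 1)) (Fin (n + 1)) ℂ)
    (hx₁ : RegUpper n J₁ x₁) (hx₂ : RegUpper n J₁ x₂)
    (hy₁ : RegLower n J₂ y₁) (hy₂ : RegLower n J₂ y₂) :
    ∃ g : (Matrix (Fin (n + 1)) (Fin (n + 1)) ℂ)ˣ,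
      (g : Matrix (Fin (n + 1)) (Fin (n + 1)) ℂ) * (x₁ * y₁) *
          ((g⁻¹ : (Matrix (Fin (n + 1)) (Fin (n + 1)) ℂ)ˣ) :
            Matrix (Fin (n + 1)) (Fin (n + 1)) ℂ) = x₂ * y₂ := by
  classical
  obtain ⟨u₁, hu₁, hrel₁⟩ := clear hJ₁ x₁ hx₁
  obtain ⟨u₂, hu₂, hrel₂⟩ := clear hJ₁ x₂ hx₂
  obtain ⟨v₁, hv₁, hrel₃⟩ := clear hJ₂ y₁ᵀ hy₁
  obtain ⟨v₂, hv₂, hrel₄⟩ := clear hJ₂ y₂ᵀ hy₂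
  set P₁ := canon n J₁ x₁ with hP₁
  set P₂ := canon n J₁ x₂ with hP₂
  set Q₁ := (canon n J₂ y₁ᵀ)ᵀ with hQ₁
  set Q₂ := (canon n J₂ y₂ᵀ)ᵀ with hQ₂
  set w₁ := v₁ᵀ with hw₁def
  set w₂ := v₂ᵀ with hw₂def
  have hrelW₁ : w₁ * y₁ = Q₁ * w₁ := by
    have := congrArg Matrix.transpose hrel₃
    simpa [Matrix.transpose_mul, hw₁def, hQ₁] using this
  have hrelW₂ : w₂ * y₂ = Q₂ * w₂ := by
    have := congrArg Matrix.transpose hrel₄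
    simpa [Matrix.transpose_mul, hw₂def, hQ₂] using this
  -- supports
  have hy₁S : SuppU n J₂ y₁ᵀ := ⟨hy₁.1, hy₁.2.1⟩
  have hy₂S : SuppU n J₂ y₂ᵀ := ⟨hy₂.1, hy₂.2.1⟩
  have hw₁S : SuppU n J₂ w₁ᵀ := by rw [hw₁def, Matrix.transpose_transpose]; exact hv₁
  have hw₂S : SuppU n J₂ w₂ᵀ := by rw [hw₂def, Matrix.transpose_transpose]; exact hv₂
  -- commutation relations
  have hcomm₁ : u₁ * y₁ = y₁ * u₁ := comm_mul hdisj hu₁ hy₁S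
  have hcomm₂ : u₂ * y₂ = y₂ * u₂ := comm_mul hdisj hu₂ hy₂S
  have hcommPW₁ : P₁ * w₁ = w₁ * P₁ := comm_mul hdisj (canon_suppU n J₁ x₁) hw₁S
  have hcommPW₂ : P₂ * w₂ = w₂ * P₂ := comm_mul hdisj (canon_suppU n J₁ x₂) hw₂S
  -- the diagonal matrix
  set ρ : ℕ → ℂ := fun k =>
    if h : k + 1 ≤ n then
      (if k + 1 ∈ J₁ then x₁ ⟨k, by omega⟩ ⟨k + 1, by omega⟩ / x₂ ⟨k, by omega⟩ ⟨k + 1, by omega⟩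
       else if k + 1 ∈ J₂ then
         y₂ ⟨k + 1, by omega⟩ ⟨k, by omega⟩ / y₁ ⟨k + 1, by omega⟩ ⟨k, by omega⟩
       else 1)
    else 1 with hρdef
  set d : ℕ → ℂ := fun k => Nat.rec (motive := fun _ => ℂ) 1 (fun m ih => ih * ρ m) k with hddef
  have hdstep : ∀ m : ℕ, d (m + 1) = d m * ρ m := fun m => rfl
  have hρne : ∀ k, ρ k ≠ 0 := by
    intro k
    show (if h : k + 1 ≤ n then _ else 1) ≠ 0
    split_ifs with h h1 h2
    · apply div_ne_zero
      · exact hx₁.2.2 ⟨k, by omega⟩ ⟨k + 1, by omega⟩ h1 rfl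
      · exact hx₂.2.2 ⟨k, by omega⟩ ⟨k + 1, by omega⟩ h1 rfl
    · apply div_ne_zero
      · exact hy₂.2.2 ⟨k, by omega⟩ ⟨k + 1, by omega⟩ h2 rfl
      · exact hy₁.2.2 ⟨k, by omega⟩ ⟨k + 1, by omega⟩ h2 rfl
    · exact one_ne_zero
    · exact one_ne_zero
  have hdne : ∀ k, d k ≠ 0 := by
    intro k
    induction k with
    | zero => exact one_ne_zero
    | succ m ih => rw [hdstep]; exact mul_ne_zero ih (hρne m)
  set Dm : Matrix (Fin (n + 1)) (Fin (n + 1)) ℂ :=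
    Matrix.diagonal (fun p : Fin (n + 1) => d (p : ℕ)) with hDmdef
  have hDP : Dm * P₁ = P₂ * Dm := by
    ext p q
    rw [hDmdef, Matrix.diagonal_mul, Matrix.mul_diagonal]
    rw [hP₁, hP₂]
    simp only [canon, Matrix.of_apply]
    by_cases hpq : p = q
    · subst hpq; rw [if_pos rfl, if_pos rfl, mul_one, one_mul]
    · rw [if_neg hpq, if_neg hpq]
      by_cases hcond : (q : ℕ) = (p : ℕ) + 1 ∧ (q : ℕ) ∈ J₁
      · rw [if_pos hcond, if_pos hcond]
        obtain ⟨hq, hqJ⟩ := hcond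
        have hp1n : (p : ℕ) + 1 ≤ n := by
          have := hJ₁ hqJ
          simp only [Finset.mem_Icc] at this
          omega
        have hρp : ρ (p : ℕ) = x₁ p q / x₂ p q := by
          show (if h : (p : ℕ) + 1 ≤ n then _ else 1) = _
          rw [dif_pos hp1n, if_pos (by rw [← hq]; exact (hq ▸ hqJ))]
          have e1 : (⟨(p : ℕ), by omega⟩ : Fin (n + 1)) = p := Fin.ext rfl
          have e2 : (⟨(p : ℕ) + 1, by omega⟩ : Fin (n + 1)) = q := Fin.ext hq.symm
          rw [e1, e2]
        have hx2ne : x₂ p q ≠ 0 := hx₂.2.2 p q (hq ▸ hqJ) hq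
        rw [hq, hdstep, hρp]
        field_simp
      · rw [if_neg hcond, if_neg hcond, mul_zero, zero_mul]
  have hDQ : Dm * Q₁ = Q₂ * Dm := by
    ext p q
    rw [hDmdef, Matrix.diagonal_mul, Matrix.mul_diagonal]
    rw [hQ₁, hQ₂]
    simp only [Matrix.transpose_apply, canon, Matrix.of_apply]
    by_cases hpq : q = p
    · subst hpq; rw [if_pos rfl, if_pos rfl, mul_one, one_mul]
    · rw [if_neg hpq, if_neg hpq]
      by_cases hcond : (p : ℕ) = (q : ℕ) + 1 ∧ (p : ℕ) ∈ J₂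
      · rw [if_pos hcond, if_pos hcond]
        obtain ⟨hp, hpJ⟩ := hcond
        have hq1n : (q : ℕ) + 1 ≤ n := by
          have := hJ₂ hpJ
          simp only [Finset.mem_Icc] at this
          omega
        have hnotJ₁ : (q : ℕ) + 1 ∉ J₁ := by
          intro hmem
          exact Finset.disjoint_left.mp hdisj hmem (hp ▸ hpJ)
        have hρq : ρ (q : ℕ) = y₂ p q / y₁ p q := by
          show (if h : (q : ℕ) + 1 ≤ n then _ else 1) = _
          rw [dif_pos hq1n, if_neg hnotJ₁, if_pos (hp ▸ hpJ)]
          have e1 : (⟨(q : ℕ), by omega⟩ : Fin (n + 1)) = q := Fin.ext rfl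
          have e2 : (⟨(q : ℕ) + 1, by omega⟩ : Fin (n + 1)) = p := Fin.ext hp.symm
          rw [e1, e2]
        have hy1ne : y₁ p q ≠ 0 := hy₁.2.2 q p (hp ▸ hpJ) hp
        rw [hp, hdstep, hρq]
        field_simp
      · rw [if_neg hcond, if_neg hcond, mul_zero, zero_mul]
  -- units
  have hU₁ : IsUnit u₁ := hu₁.isUnit
  have hU₂ : IsUnit u₂ := hu₂.isUnit
  have hW₁ : IsUnit w₁ := hv₁.isUnit_transpose
  have hW₂ : IsUnit w₂ := hv₂.isUnit_transpose
  have hDu : IsUnit Dm := by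
    apply (Matrix.isUnit_iff_isUnit_det Dm).mpr
    rw [hDmdef, Matrix.det_diagonal]
    rw [isUnit_iff_ne_zero]
    exact Finset.prod_ne_zero_iff.mpr fun i _ => hdne (i : ℕ)
  -- the five chain relations
  have f1 : (x₁ * y₁) * u₁ = u₁ * (P₁ * y₁) := by
    calc (x₁ * y₁) * u₁ = x₁ * (y₁ * u₁) := by rw [mul_assoc]
    _ = x₁ * (u₁ * y₁) := by rw [← hcomm₁]
    _ = (x₁ * u₁) * y₁ := by rw [mul_assoc]
    _ = (u₁ * P₁) * y₁ := by rw [hrel₁]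
    _ = u₁ * (P₁ * y₁) := by rw [mul_assoc]
  have f2 : w₁ * (P₁ * y₁) = (P₁ * Q₁) * w₁ := by
    calc w₁ * (P₁ * y₁) = (w₁ * P₁) * y₁ := by rw [mul_assoc]
    _ = (P₁ * w₁) * y₁ := by rw [hcommPW₁]
    _ = P₁ * (w₁ * y₁) := by rw [mul_assoc]
    _ = P₁ * (Q₁ * w₁) := by rw [hrelW₁]
    _ = (P₁ * Q₁) * w₁ := by rw [mul_assoc]
  have f3 : Dm * (P₁ * Q₁) = (P₂ * Q₂) * Dm := by
    calc Dm * (P₁ * Q₁) = (Dm * P₁) * Q₁ := by rw [mul_assoc]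
    _ = (P₂ * Dm) * Q₁ := by rw [hDP]
    _ = P₂ * (Dm * Q₁) := by rw [mul_assoc]
    _ = P₂ * (Q₂ * Dm) := by rw [hDQ]
    _ = (P₂ * Q₂) * Dm := by rw [mul_assoc]
  have f4 : (P₂ * Q₂) * w₂ = w₂ * (P₂ * y₂) := by
    calc (P₂ * Q₂) * w₂ = P₂ * (Q₂ * w₂) := by rw [mul_assoc]
    _ = P₂ * (w₂ * y₂) := by rw [← hrelW₂]
    _ = (P₂ * w₂) * y₂ := by rw [mul_assoc]
    _ = (w₂ * P₂) * y₂ := by rw [hcommPW₂]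
    _ = w₂ * (P₂ * y₂) := by rw [mul_assoc]
  have f5 : u₂ * (P₂ * y₂) = (x₂ * y₂) * u₂ := by
    calc u₂ * (P₂ * y₂) = (u₂ * P₂) * y₂ := by rw [mul_assoc]
    _ = (x₂ * u₂) * y₂ := by rw [← hrel₂]
    _ = x₂ * (u₂ * y₂) := by rw [mul_assoc]
    _ = x₂ * (y₂ * u₂) := by rw [hcomm₂]
    _ = (x₂ * y₂) * u₂ := by rw [mul_assoc]
  -- assemble
  set g : (Matrix (Fin (n + 1)) (Fin (n + 1)) ℂ)ˣ :=
    hU₂.unit * (hW₂.unit⁻¹ * (hDu.unit * (hW₁.unit * hU₁.unit⁻¹))) with hgdef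
  refine ⟨g, conj_eq g _ _ ?_⟩
  have h1 := inv_comm hU₁.unit (x₁ * y₁) (P₁ * y₁) (by rw [IsUnit.unit_spec]; exact f1)
  have h2 : (hW₁.unit : Matrix (Fin (n + 1)) (Fin (n + 1)) ℂ) * (P₁ * y₁) =
      (P₁ * Q₁) * (hW₁.unit : Matrix (Fin (n + 1)) (Fin (n + 1)) ℂ) := by
    rw [IsUnit.unit_spec]; exact f2
  have h3 : (hDu.unit : Matrix (Fin (n + 1)) (Fin (n + 1)) ℂ) * (P₁ * Q₁) =
      (P₂ * Q₂) * (hDu.unit : Matrix (Fin (n + 1)) (Fin (n + 1)) ℂ) := by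
    rw [IsUnit.unit_spec]; exact f3
  have h4 := inv_comm hW₂.unit (P₂ * Q₂) (P₂ * y₂) (by rw [IsUnit.unit_spec]; exact f4)
  have h5 : (hU₂.unit : Matrix (Fin (n + 1)) (Fin (n + 1)) ℂ) * (P₂ * y₂) =
      (x₂ * y₂) * (hU₂.unit : Matrix (Fin (n + 1)) (Fin (n + 1)) ℂ) := by
    rw [IsUnit.unit_spec]; exact f5
  have hgval : (g : Matrix (Fin (n + 1)) (Fin (n + 1)) ℂ) =
      (hU₂.unit : Matrix (Fin (n + 1)) (Fin (n + 1)) ℂ) *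
        ((↑(hW₂.unit⁻¹) : Matrix (Fin (n + 1)) (Fin (n + 1)) ℂ) *
          ((hDu.unit : Matrix (Fin (n + 1)) (Fin (n + 1)) ℂ) *
            ((hW₁.unit : Matrix (Fin (n + 1)) (Fin (n + 1)) ℂ) *
              (↑(hU₁.unit⁻¹) : Matrix (Fin (n + 1)) (Fin (n + 1)) ℂ)))) := by
    rw [hgdef]
    simp [Units.val_mul]
  rw [hgval]
  exact pair (pair (pair (pair h1 h2) h3) h4) h5
end

section
/- Let n ≥ 1 and let J_1, J_2 be disjoint subsets of {1,…,n}. Let i_1,…,i_k and i'_1,…,i'_{k'} be sequences in {1,…,n} each with set of values exactly J_1, let j_1,…,j_l and j'_1,…,j'_{l'} be sequences each with set of values exactly J_2, and let a_t, a'_t, b_s, b'_s be positive real numbers. Then the (n+1)×(n+1) complex matrices [∏_{t=1}^{k}(I + a_t E_{i_t,i_t+1})]·[∏_{s=1}^{l}(I + b_s E_{j_s+1,j_s})] and [∏_{t=1}^{k'}(I + a'_t E_{i'_t,i'_t+1})]·[∏_{s=1}^{l'}(I + b'_s E_{j'_s+1,j'_s})] are similar. -/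
open Matrix BigOperators

/-- The `(n+1) × (n+1)` complex matrix with entry `1` in (1-based) position `(a, b)`
and `0` elsewhere. -/
noncomputable def Ecplx (n a b : ℕ) : Matrix (Fin (n + 1)) (Fin (n + 1)) ℂ :=
  Matrix.of fun p q => if (p : ℕ) + 1 = a ∧ (q : ℕ) + 1 = b then 1 else 0

/-!
The labels in `J₁` and `J₂` are disjoint, so the upper product is `1 + A` and the lower one
`1 + B` with `A * B = B * A = 0`, and the matrix is `1 + A + B`. The superdiagonal of `A` (the
subdiagonal of `B`) is a sum of positive numbers, hence nonzero, exactly at the labels in `J₁`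
(in `J₂`). A diagonal conjugation turns these entries into `1`. Then a unipotent matrix
`1 + X`, with `X` supported inside the blocks of `J₁`, conjugates `A` to the nilpotent Jordan
matrix of those blocks; it fixes `B` because `X * B = B * X = 0`. The transposed argument does the
same for `B`. So every such product is conjugate to `1 + chainShift J₁ + (chainShift J₂)ᵀ`.
-/

section ChainUpper

variable {R : Type*} [CommRing R] {m : ℕ} {J J₁ J₂ : Finset ℕ}

/-- Indices are `0, …, m - 1` and the edge between `r - 1` and `r` carries the label `r`, so
`Finset.Ioc p q ⊆ J` says that `p ≤ q` lie in one block of the partition cut out by `J`. -/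
def IsChainUpper (J : Finset ℕ) (A : Matrix (Fin m) (Fin m) R) : Prop :=
  ∀ p q, A p q ≠ 0 → (p : ℕ) < q ∧ Finset.Ioc (p : ℕ) q ⊆ J

def chainShift (J : Finset ℕ) : Matrix (Fin m) (Fin m) R :=
  of fun p q => if (q : ℕ) = p + 1 ∧ (q : ℕ) ∈ J then 1 else 0

lemma Ioc_subset_of_Ioc_subset_of_Ioc_subset {p r q : ℕ} (hpr : p ≤ r) (hrq : r ≤ q)
    (h₁ : Finset.Ioc p r ⊆ J) (h₂ : Finset.Ioc r q ⊆ J) : Finset.Ioc p q ⊆ J := by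
  rw [← Finset.Ioc_union_Ioc_eq_Ioc hpr hrq]
  exact Finset.union_subset h₁ h₂

lemma exists_ne_zero_of_mul_apply_ne_zero {ι : Type*} [Fintype ι] {A B : Matrix ι ι R} {p q : ι}
    (h : (A * B) p q ≠ 0) : ∃ r, A p r ≠ 0 ∧ B r q ≠ 0 := by
  obtain ⟨r, -, hr⟩ := Finset.exists_ne_zero_of_sum_ne_zero h
  exact ⟨r, left_ne_zero_of_mul hr, right_ne_zero_of_mul hr⟩

namespace IsChainUpper

variable {A B X : Matrix (Fin m) (Fin m) R}

lemma zero : IsChainUpper J (0 : Matrix (Fin m) (Fin m) R) :=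
  fun _ _ h => absurd rfl h

lemma add (hA : IsChainUpper J A) (hB : IsChainUpper J B) : IsChainUpper J (A + B) := by
  intro p q h
  by_cases hAp : A p q = 0
  · exact hB p q (by simpa [hAp] using h)
  · exact hA p q hAp

lemma mul (hA : IsChainUpper J A) (hB : IsChainUpper J B) : IsChainUpper J (A * B) := by
  intro p q h
  obtain ⟨r, hpr, hrq⟩ := exists_ne_zero_of_mul_apply_ne_zero h
  obtain ⟨hlt₁, hsub₁⟩ := hA p r hpr
  obtain ⟨hlt₂, hsub₂⟩ := hB r q hrq
  exact ⟨hlt₁.trans hlt₂, Ioc_subset_of_Ioc_subset_of_Ioc_subset hlt₁.le hlt₂.le hsub₁ hsub₂⟩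

lemma diagonal_mul_mul (hA : IsChainUpper J A) (d e : Fin m → R) :
    IsChainUpper J (diagonal d * A * diagonal e) := by
  intro p q h
  rw [mul_diagonal, diagonal_mul] at h
  exact hA p q (right_ne_zero_of_mul (left_ne_zero_of_mul h))

lemma superdiag_mul_eq_zero (hA : IsChainUpper J A) (hB : IsChainUpper J B) {p q : Fin m}
    (hq : (q : ℕ) = p + 1) : (A * B) p q = 0 := by
  by_contra h
  obtain ⟨r, hpr, hrq⟩ := exists_ne_zero_of_mul_apply_ne_zero h
  have := (hA p r hpr).1
  have := (hB r q hrq).1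
  omega

/-- The middle index `r` of a nonzero term `A p r * B r q` would be a label in `J₁ ∩ J₂`. -/
lemma mul_lower_eq_zero (hd : Disjoint J₁ J₂) (hA : IsChainUpper J₁ A)
    (hB : IsChainUpper J₂ Bᵀ) : A * B = 0 := by
  ext p q
  by_contra h
  obtain ⟨r, hpr, hrq⟩ := exists_ne_zero_of_mul_apply_ne_zero h
  obtain ⟨hlt₁, hsub₁⟩ := hA p r hpr
  obtain ⟨hlt₂, hsub₂⟩ := hB q r hrq
  exact Finset.disjoint_left.mp hd (hsub₁ (Finset.mem_Ioc.mpr ⟨hlt₁, le_rfl⟩))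
    (hsub₂ (Finset.mem_Ioc.mpr ⟨hlt₂, le_rfl⟩))

lemma lower_mul_eq_zero (hd : Disjoint J₁ J₂) (hA : IsChainUpper J₁ A)
    (hB : IsChainUpper J₂ Bᵀ) : B * A = 0 := by
  ext p q
  by_contra h
  obtain ⟨r, hpr, hrq⟩ := exists_ne_zero_of_mul_apply_ne_zero h
  obtain ⟨hlt₁, hsub₁⟩ := hB r p hpr
  obtain ⟨hlt₂, hsub₂⟩ := hA r q hrq
  exact Finset.disjoint_left.mp hd (hsub₂ (Finset.mem_Ioc.mpr ⟨Nat.lt_succ_self _, by omega⟩))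
    (hsub₁ (Finset.mem_Ioc.mpr ⟨Nat.lt_succ_self _, by omega⟩))

lemma isUnit_one_add (hX : IsChainUpper J X) : IsUnit (1 + X) := by
  have hupper : (1 + X).IsUpperTriangular := by
    intro p q (hqp : q < p)
    have hX0 : X p q = 0 := by
      by_contra h
      exact absurd (hX p q h).1 (by simpa using hqp.le)
    rw [Matrix.add_apply, one_apply_ne (ne_of_gt hqp), hX0, add_zero]
  have hdiag : ∀ p, (1 + X) p p = 1 := fun p => by
    have : X p p = 0 := by
      by_contra h
      exact (hX p p h).1.false
    simp [this]
  rw [isUnit_iff_isUnit_det, det_of_isUpperTriangular hupper,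
    Finset.prod_eq_one fun p _ => hdiag p]
  exact isUnit_one

end IsChainUpper

theorem IsChainUpper.exists_list_prod_one_add {L : List (Matrix (Fin m) (Fin m) R)}
    (hL : ∀ X ∈ L, IsChainUpper J X) :
    ∃ A, IsChainUpper J A ∧ (L.map (1 + ·)).prod = 1 + A ∧
      ∀ p q : Fin m, (q : ℕ) = p + 1 → A p q = (L.map (· p q)).sum := by
  induction L with
  | nil => exact ⟨0, IsChainUpper.zero, by simp, by simp⟩
  | cons X L ih =>
    obtain ⟨A, hA, hprod, hsuper⟩ := ih fun Y hY => hL Y (List.mem_cons_of_mem X hY)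
    have hX := hL X List.mem_cons_self
    refine ⟨X + A + X * A, (hX.add hA).add (hX.mul hA), ?_, fun p q hq => ?_⟩
    · rw [List.map_cons, List.prod_cons, hprod]
      noncomm_ring
    · simp [hsuper p q hq, hX.superdiag_mul_eq_zero hA hq]

lemma isChainUpper_chainShift (J : Finset ℕ) :
    IsChainUpper J (chainShift J : Matrix (Fin m) (Fin m) R) := by
  intro p q h
  by_cases hq : (q : ℕ) = p + 1 ∧ (q : ℕ) ∈ J
  · refine ⟨by omega, fun r hr => ?_⟩
    obtain ⟨h₁, h₂⟩ := Finset.mem_Ioc.mp hr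
    rw [show r = q by omega]
    exact hq.2
  · simp [chainShift, hq] at h

lemma chainShift_mul_apply (J : Finset ℕ) (M : Matrix (Fin m) (Fin m) R) (p c : Fin m) :
    ((chainShift J : Matrix (Fin m) (Fin m) R) * M) p c =
      if h : (p : ℕ) + 1 < m ∧ (p : ℕ) + 1 ∈ J then M ⟨p + 1, h.1⟩ c else 0 := by
  rw [mul_apply]
  split_ifs with h
  · rw [Finset.sum_eq_single ⟨p + 1, h.1⟩
      (fun r _ hr => by simp [chainShift, Fin.ext_iff] at hr ⊢; omega) (by simp)]
    simp [chainShift, h.2]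
  · refine Finset.sum_eq_zero fun r _ => ?_
    have : ¬((r : ℕ) = p + 1 ∧ (r : ℕ) ∈ J) := fun hr => h ⟨hr.1 ▸ r.2, hr.1 ▸ hr.2⟩
    simp [chainShift, this]

/-- Row `p` is `e_s A^(p - s)` with `s` the lowest index in the block of `p`: these rows form a
cyclic basis of each block, in which `A` becomes the shift. -/
def chainRow (J : Finset ℕ) (A : Matrix (Fin m) (Fin m) R) : ℕ → Fin m → R
  | 0 => fun c => if (c : ℕ) = 0 then 1 else 0
  | p + 1 => if p + 1 ∈ J then chainRow J A p ᵥ* A else fun c => if (c : ℕ) = p + 1 then 1 else 0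

section chainRow

variable {A : Matrix (Fin m) (Fin m) R} (hA : IsChainUpper J A)
include hA

lemma IsChainUpper.vecMul_apply_ne_zero {v : Fin m → R} {p : ℕ}
    (hv : ∀ c, v c ≠ 0 → p ≤ c ∧ Finset.Ioc p c ⊆ J) {c : Fin m} (h : (v ᵥ* A) c ≠ 0) :
    p < c ∧ Finset.Ioc p c ⊆ J := by
  obtain ⟨r, -, hr⟩ := Finset.exists_ne_zero_of_sum_ne_zero (by simpa [vecMul, dotProduct] using h)
  obtain ⟨hpr, hsub₁⟩ := hv r (left_ne_zero_of_mul hr)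
  obtain ⟨hrc, hsub₂⟩ := hA r c (right_ne_zero_of_mul hr)
  exact ⟨hpr.trans_lt hrc, Ioc_subset_of_Ioc_subset_of_Ioc_subset hpr hrc.le hsub₁ hsub₂⟩

lemma chainRow_ne_zero (p : ℕ) (c : Fin m) (h : chainRow J A p c ≠ 0) :
    p ≤ c ∧ Finset.Ioc p c ⊆ J := by
  induction p generalizing c with
  | zero =>
    have hc : (c : ℕ) = 0 := by by_contra hc; simp [chainRow, hc] at h
    simp [hc]
  | succ p ih =>
    by_cases hp : p + 1 ∈ J
    · simp only [chainRow, hp, if_true] at h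
      obtain ⟨hlt, hsub⟩ := hA.vecMul_apply_ne_zero ih h
      exact ⟨hlt, (Finset.Ioc_subset_Ioc_left p.le_succ).trans hsub⟩
    · have hc : (c : ℕ) = p + 1 := by by_contra hc; simp [chainRow, hp, hc] at h
      simp [hc]

lemma chainRow_self (hA₁ : ∀ p q : Fin m, (q : ℕ) = p + 1 → (q : ℕ) ∈ J → A p q = 1)
    (c : Fin m) : chainRow J A c c = 1 := by
  obtain ⟨c, hc⟩ := c
  induction c with
  | zero => simp [chainRow]
  | succ p ih =>
    by_cases hp : p + 1 ∈ J
    · simp only [chainRow, hp, if_true, vecMul, dotProduct]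
      rw [Finset.sum_eq_single ⟨p, by omega⟩, ih (by omega), hA₁ _ _ rfl hp, one_mul]
      · intro r _ hr
        by_contra h
        have h₁ := (chainRow_ne_zero hA p r (left_ne_zero_of_mul h)).1
        have h₂ : (r : ℕ) < p + 1 := (hA r _ (right_ne_zero_of_mul h)).1
        exact hr (Fin.ext (by simp only; omega))
      · simp
    · simp [chainRow, hp]

end chainRow

theorem IsChainUpper.exists_semiconj_chainShift {A : Matrix (Fin m) (Fin m) R}
    (hA : IsChainUpper J A)
    (hA₁ : ∀ p q : Fin m, (q : ℕ) = p + 1 → (q : ℕ) ∈ J → A p q = 1) :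
    ∃ X, IsChainUpper J X ∧ (1 + X) * A = chainShift J * (1 + X) := by
  set P : Matrix (Fin m) (Fin m) R := of fun p c => chainRow J A p c
  refine ⟨P - 1, fun p c h => ?_, ?_⟩
  · have hpc : p ≠ c := by
      rintro rfl
      simp [P, chainRow_self hA hA₁] at h
    have hP : P p c ≠ 0 := by simpa [one_apply_ne hpc] using h
    obtain ⟨hle, hsub⟩ := chainRow_ne_zero hA p c hP
    exact ⟨lt_of_le_of_ne hle (Fin.val_ne_of_ne hpc), hsub⟩
  · rw [add_sub_cancel]
    ext p c
    rw [chainShift_mul_apply]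
    split_ifs with h
    · simp [P, chainRow, h.2, vecMul, mul_apply, dotProduct]
    · by_contra hne
      obtain ⟨hlt, hsub⟩ := hA.vecMul_apply_ne_zero (chainRow_ne_zero hA p)
        (by simpa [P, mul_apply, vecMul, dotProduct] using hne)
      exact h ⟨by omega, hsub (by simp; omega)⟩

theorem IsChainUpper.isConj_chainShift_of_superdiag_eq_one {A C : Matrix (Fin m) (Fin m) R}
    (hd : Disjoint J₁ J₂) (hA : IsChainUpper J₁ A)
    (hA₁ : ∀ p q : Fin m, (q : ℕ) = p + 1 → (q : ℕ) ∈ J₁ → A p q = 1)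
    (hC : IsChainUpper J₂ Cᵀ) : IsConj (1 + A + C) (1 + chainShift J₁ + C) := by
  obtain ⟨X, hX, hXA⟩ := hA.exists_semiconj_chainShift hA₁
  obtain ⟨u, hu⟩ := hX.isUnit_one_add
  refine ⟨u, ?_⟩
  rw [SemiconjBy, hu]
  calc (1 + X) * (1 + A + C) = (1 + X) + (1 + X) * A + (C + X * C) := by noncomm_ring
    _ = (1 + X) + chainShift J₁ * (1 + X) + (C + C * X) := by
      rw [hXA, hX.mul_lower_eq_zero hd hC, hX.lower_mul_eq_zero hd hC]
    _ = (1 + chainShift J₁ + C) * (1 + X) := by noncomm_ring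

end ChainUpper

lemma IsConj.matrix_transpose {ι R : Type*} [Fintype ι] [DecidableEq ι] [CommRing R]
    {M N : Matrix ι ι R} (h : IsConj M N) : IsConj Mᵀ Nᵀ := by
  obtain ⟨u, hu⟩ := h
  obtain ⟨v, hv⟩ : IsUnit (u : Matrix ι ι R)ᵀ := (isUnit_transpose _).mpr u.isUnit
  refine isConj_comm.mp ⟨v, ?_⟩
  rw [SemiconjBy, hv, ← transpose_mul, ← transpose_mul, hu.eq]

section Scaling

variable {K : Type*} [Field K] {m : ℕ}

lemma isConj_diagonal_mul_mul {ι : Type*} [Fintype ι] [DecidableEq ι] {d : ι → K}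
    (hd : ∀ i, d i ≠ 0) (M : Matrix ι ι K) : IsConj M (diagonal d * M * diagonal d⁻¹) := by
  obtain ⟨u, hu⟩ := isUnit_diagonal.mpr (Pi.isUnit_iff.mpr fun i => (hd i).isUnit)
  refine ⟨u, ?_⟩
  rw [SemiconjBy, hu, mul_assoc _ (diagonal d⁻¹), diagonal_mul_diagonal]
  simp [hd]

lemma exists_path_potential (ρ : Fin m → Fin m → K)
    (hρ : ∀ p q : Fin m, (q : ℕ) = p + 1 → ρ p q ≠ 0) :
    ∃ d : Fin m → K, (∀ p, d p ≠ 0) ∧ ∀ p q : Fin m, (q : ℕ) = p + 1 → d q = d p * ρ p q := by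
  let ρ' : ℕ → K := fun r => if h : r + 1 < m then ρ ⟨r, by omega⟩ ⟨r + 1, h⟩ else 1
  have hρ' : ∀ r, ρ' r ≠ 0 := fun r => by
    by_cases h : r + 1 < m
    · simpa [ρ', h] using hρ ⟨r, by omega⟩ ⟨r + 1, h⟩ rfl
    · simp [ρ', h]
  refine ⟨fun p => ∏ r ∈ Finset.range p, ρ' r,
    fun p => Finset.prod_ne_zero_iff.mpr fun r _ => hρ' r, fun p q hq => ?_⟩
  have hρpq : ρ' p = ρ p q := by
    have h : (p : ℕ) + 1 < m := hq ▸ q.2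
    obtain rfl : q = ⟨p + 1, h⟩ := Fin.ext hq
    simp [ρ', h]
  change ∏ r ∈ Finset.range q, ρ' r = (∏ r ∈ Finset.range p, ρ' r) * ρ p q
  rw [hq, Finset.prod_range_succ, hρpq]

theorem isConj_one_add_add_chainShift {J₁ J₂ : Finset ℕ} {A B : Matrix (Fin m) (Fin m) K}
    (hd : Disjoint J₁ J₂) (hA : IsChainUpper J₁ A) (hB : IsChainUpper J₂ Bᵀ)
    (hA₀ : ∀ p q : Fin m, (q : ℕ) = p + 1 → (q : ℕ) ∈ J₁ → A p q ≠ 0)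
    (hB₀ : ∀ p q : Fin m, (q : ℕ) = p + 1 → (q : ℕ) ∈ J₂ → B q p ≠ 0) :
    IsConj (1 + A + B) (1 + chainShift J₁ + (chainShift J₂)ᵀ) := by
  obtain ⟨d, hd₀, hdρ⟩ := exists_path_potential
    (fun p q => if (q : ℕ) ∈ J₁ then A p q else if (q : ℕ) ∈ J₂ then (B q p)⁻¹ else 1)
    (fun p q hq => by
      split_ifs with h₁ h₂
      exacts [hA₀ p q hq h₁, inv_ne_zero (hB₀ p q hq h₂), one_ne_zero])
  set A' := diagonal d * A * diagonal d⁻¹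
  set B' := diagonal d * B * diagonal d⁻¹
  have hA' : IsChainUpper J₁ A' := hA.diagonal_mul_mul d d⁻¹
  have hB' : IsChainUpper J₂ B'ᵀ := by
    simpa [B', transpose_mul, mul_assoc] using hB.diagonal_mul_mul d⁻¹ d
  have hA'₁ : ∀ p q : Fin m, (q : ℕ) = p + 1 → (q : ℕ) ∈ J₁ → A' p q = 1 := by
    intro p q hq h₁
    have := hA₀ p q hq h₁
    have := hd₀ p
    simp only [A', mul_diagonal, diagonal_mul, Pi.inv_apply, hdρ p q hq, h₁, if_true]
    field_simp
  have hB'₁ : ∀ p q : Fin m, (q : ℕ) = p + 1 → (q : ℕ) ∈ J₂ → B'ᵀ p q = 1 := by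
    intro p q hq h₂
    have h₁ : (q : ℕ) ∉ J₁ := Finset.disjoint_right.mp hd h₂
    simp [B', hdρ p q hq, h₁, h₂, hd₀ p, hB₀ p q hq h₂]
  have hscale : IsConj (1 + A + B) (1 + A' + B') := by
    convert isConj_diagonal_mul_mul hd₀ (1 + A + B) using 1
    simp [A', B', mul_add, add_mul, hd₀]
  have hupper : IsConj (1 + A' + B') (1 + chainShift J₁ + B') :=
    hA'.isConj_chainShift_of_superdiag_eq_one hd hA'₁ hB'
  have hlower : IsConj (1 + B'ᵀ + (chainShift J₁)ᵀ) (1 + chainShift J₂ + (chainShift J₁)ᵀ) :=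
    hB'.isConj_chainShift_of_superdiag_eq_one hd.symm hB'₁
      (by simpa using isChainUpper_chainShift J₁)
  have hlower' := hlower.matrix_transpose
  simp only [transpose_add, transpose_one, transpose_transpose] at hlower'
  rw [add_right_comm, add_right_comm _ (chainShift J₂)ᵀ] at hlower'
  exact hscale.trans (hupper.trans hlower')

end Scaling

section Ecplx

variable {n : ℕ}

lemma transpose_Ecplx (a b : ℕ) : (Ecplx n a b)ᵀ = Ecplx n b a := by
  ext p q
  simp [Ecplx, and_comm]

lemma Ecplx_apply_of_val_eq_succ (i : ℕ) {p q : Fin (n + 1)} (hq : (q : ℕ) = p + 1) :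
    Ecplx n i (i + 1) p q = if (q : ℕ) = i then 1 else 0 := by
  simp only [Ecplx, of_apply]
  congr 1
  apply propext
  omega

lemma isChainUpper_smul_Ecplx {J : Finset ℕ} {i : ℕ} (hi : i ∈ J) (c : ℂ) :
    IsChainUpper J (c • Ecplx n i (i + 1)) := by
  intro p q h
  have hpq : (p : ℕ) + 1 = i ∧ (q : ℕ) = i := by
    by_contra hpq
    simp [Ecplx] at h
    omega
  refine ⟨by omega, fun r hr => ?_⟩
  rw [Finset.mem_Ioc] at hr
  rwa [show r = i by omega]

lemma list_sum_Ecplx_ne_zero {k : ℕ} {i : Fin k → ℕ} {a : Fin k → ℝ} (ha : ∀ t, 0 < a t)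
    {p q : Fin (n + 1)} (hq : (q : ℕ) = p + 1) (hi : ∃ t, i t = q) :
    ((List.ofFn fun t => (a t : ℂ) • Ecplx n (i t) (i t + 1)).map (· p q)).sum ≠ 0 := by
  obtain ⟨t, ht⟩ := hi
  have hpos : 0 < ∑ s, if (q : ℕ) = i s then a s else 0 :=
    Finset.sum_pos' (fun s _ => by split_ifs <;> simp [(ha s).le])
      ⟨t, Finset.mem_univ t, by simp [ht, ha t]⟩
  simpa [List.map_ofFn, List.sum_ofFn, Ecplx_apply_of_val_eq_succ _ hq, apply_ite] using
    Complex.ofReal_ne_zero.mpr hpos.ne'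

theorem isConj_prod_mul_prod_Ecplx {J₁ J₂ : Finset ℕ} (hd : Disjoint J₁ J₂) {k l : ℕ}
    {i : Fin k → ℕ} {j : Fin l → ℕ} (hi : ∀ t, i t ∈ J₁) (hisurj : ∀ c ∈ J₁, ∃ t, i t = c)
    (hj : ∀ s, j s ∈ J₂) (hjsurj : ∀ c ∈ J₂, ∃ s, j s = c) {a : Fin k → ℝ} {b : Fin l → ℝ}
    (ha : ∀ t, 0 < a t) (hb : ∀ s, 0 < b s) :
    IsConj ((List.ofFn fun t => 1 + (a t : ℂ) • Ecplx n (i t) (i t + 1)).prod *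
        (List.ofFn fun s => 1 + (b s : ℂ) • Ecplx n (j s + 1) (j s)).prod)
      (1 + chainShift J₁ + (chainShift J₂)ᵀ) := by
  obtain ⟨A, hA, hU, hAsuper⟩ := IsChainUpper.exists_list_prod_one_add
    (L := List.ofFn fun t => (a t : ℂ) • Ecplx n (i t) (i t + 1))
    fun X hX => by
      obtain ⟨t, rfl⟩ := List.mem_ofFn.mp hX
      exact isChainUpper_smul_Ecplx (hi t) _
  obtain ⟨B, hB, hL, hBsuper⟩ := IsChainUpper.exists_list_prod_one_add
    (L := (List.ofFn fun s => (b s : ℂ) • Ecplx n (j s) (j s + 1)).reverse)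
    fun X hX => by
      obtain ⟨s, rfl⟩ := List.mem_ofFn.mp (List.mem_reverse.mp hX)
      exact isChainUpper_smul_Ecplx (hj s) _
  have hU' : (List.ofFn fun t => 1 + (a t : ℂ) • Ecplx n (i t) (i t + 1)).prod = 1 + A := by
    rw [← hU, List.map_ofFn]
    rfl
  have hL' : (List.ofFn fun s => 1 + (b s : ℂ) • Ecplx n (j s + 1) (j s)).prod = 1 + Bᵀ := by
    apply transpose_injective
    rw [transpose_list_prod, transpose_add, transpose_one, transpose_transpose, ← hL,
      List.map_reverse, List.map_ofFn, List.map_ofFn]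
    simp [Function.comp_def, transpose_Ecplx]
  have hB' : IsChainUpper J₂ (Bᵀ)ᵀ := by rwa [transpose_transpose]
  have hUL : (1 + A) * (1 + Bᵀ) = 1 + A + Bᵀ := by
    rw [mul_add, add_mul, add_mul, hA.mul_lower_eq_zero hd hB']
    noncomm_ring
  rw [hU', hL', hUL]
  refine isConj_one_add_add_chainShift hd hA hB' (fun p q hq hq₁ => ?_) (fun p q hq hq₂ => ?_)
  · rw [hAsuper p q hq]
    exact list_sum_Ecplx_ne_zero ha hq (hisurj q hq₁)
  · rw [transpose_apply, hBsuper p q hq, List.map_reverse, List.sum_reverse]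
    exact list_sum_Ecplx_ne_zero hb hq (hjsurj q hq₂)

end Ecplx

theorem stmt7_general (n : ℕ) (J₁ J₂ : Finset ℕ) (hdisj : Disjoint J₁ J₂)
    (k k' l l' : ℕ) (i : Fin k → ℕ) (i' : Fin k' → ℕ) (j : Fin l → ℕ) (j' : Fin l' → ℕ)
    (hi : ∀ t, i t ∈ J₁) (hisurj : ∀ m ∈ J₁, ∃ t, i t = m)
    (hi' : ∀ t, i' t ∈ J₁) (hi'surj : ∀ m ∈ J₁, ∃ t, i' t = m)
    (hj : ∀ s, j s ∈ J₂) (hjsurj : ∀ m ∈ J₂, ∃ s, j s = m)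
    (hj' : ∀ s, j' s ∈ J₂) (hj'surj : ∀ m ∈ J₂, ∃ s, j' s = m)
    (a : Fin k → ℝ) (a' : Fin k' → ℝ) (b : Fin l → ℝ) (b' : Fin l' → ℝ)
    (ha : ∀ t, 0 < a t) (ha' : ∀ t, 0 < a' t) (hb : ∀ s, 0 < b s) (hb' : ∀ s, 0 < b' s) :
    ∃ g : (Matrix (Fin (n + 1)) (Fin (n + 1)) ℂ)ˣ,
      (g : Matrix (Fin (n + 1)) (Fin (n + 1)) ℂ) *
          (((List.ofFn fun t => (1 : Matrix (Fin (n + 1)) (Fin (n + 1)) ℂ)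
              + (a t : ℂ) • Ecplx n (i t) (i t + 1)).prod) *
            ((List.ofFn fun s => (1 : Matrix (Fin (n + 1)) (Fin (n + 1)) ℂ)
              + (b s : ℂ) • Ecplx n (j s + 1) (j s)).prod)) *
          ((g⁻¹ : (Matrix (Fin (n + 1)) (Fin (n + 1)) ℂ)ˣ) :
            Matrix (Fin (n + 1)) (Fin (n + 1)) ℂ)
        = ((List.ofFn fun t => (1 : Matrix (Fin (n + 1)) (Fin (n + 1)) ℂ)
              + (a' t : ℂ) • Ecplx n (i' t) (i' t + 1)).prod) *
            ((List.ofFn fun s => (1 : Matrix (Fin (n + 1)) (Fin (n + 1)) ℂ)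
              + (b' s : ℂ) • Ecplx n (j' s + 1) (j' s)).prod) := by
  obtain ⟨g, hg⟩ := (isConj_prod_mul_prod_Ecplx hdisj hi hisurj hj hjsurj ha hb).trans
    (isConj_prod_mul_prod_Ecplx hdisj hi' hi'surj hj' hj'surj ha' hb').symm
  exact ⟨g, by rw [hg.eq, Units.mul_inv_cancel_right]⟩

/-- For disjoint `J₁, J₂ ⊆ {1,…,n}`: given sequences `i`, `i'` with set of values exactly
`J₁`, sequences `j`, `j'` with set of values exactly `J₂`, and positive real coefficients,
the matrices `[∏ₜ (I + aₜ E_{iₜ,iₜ+1})]·[∏ₛ (I + bₛ E_{jₛ+1,jₛ})]` and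
`[∏ₜ (I + a'ₜ E_{i'ₜ,i'ₜ+1})]·[∏ₛ (I + b'ₛ E_{j'ₛ+1,j'ₛ})]` are similar. -/
theorem stmt7 (n : ℕ) (hn : 1 ≤ n) (J₁ J₂ : Finset ℕ)
    (hJ₁ : J₁ ⊆ Finset.Icc 1 n) (hJ₂ : J₂ ⊆ Finset.Icc 1 n) (hdisj : Disjoint J₁ J₂)
    (k k' l l' : ℕ) (i : Fin k → ℕ) (i' : Fin k' → ℕ) (j : Fin l → ℕ) (j' : Fin l' → ℕ)
    (hi : ∀ t, i t ∈ J₁) (hisurj : ∀ m ∈ J₁, ∃ t, i t = m)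
    (hi' : ∀ t, i' t ∈ J₁) (hi'surj : ∀ m ∈ J₁, ∃ t, i' t = m)
    (hj : ∀ s, j s ∈ J₂) (hjsurj : ∀ m ∈ J₂, ∃ s, j s = m)
    (hj' : ∀ s, j' s ∈ J₂) (hj'surj : ∀ m ∈ J₂, ∃ s, j' s = m)
    (a : Fin k → ℝ) (a' : Fin k' → ℝ) (b : Fin l → ℝ) (b' : Fin l' → ℝ)
    (ha : ∀ t, 0 < a t) (ha' : ∀ t, 0 < a' t) (hb : ∀ s, 0 < b s) (hb' : ∀ s, 0 < b' s) :
    ∃ g : (Matrix (Fin (n + 1)) (Fin (n + 1)) ℂ)ˣ,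
      (g : Matrix (Fin (n + 1)) (Fin (n + 1)) ℂ) *
          (((List.ofFn fun t => (1 : Matrix (Fin (n + 1)) (Fin (n + 1)) ℂ)
              + (a t : ℂ) • Ecplx n (i t) (i t + 1)).prod) *
            ((List.ofFn fun s => (1 : Matrix (Fin (n + 1)) (Fin (n + 1)) ℂ)
              + (b s : ℂ) • Ecplx n (j s + 1) (j s)).prod)) *
          ((g⁻¹ : (Matrix (Fin (n + 1)) (Fin (n + 1)) ℂ)ˣ) :
            Matrix (Fin (n + 1)) (Fin (n + 1)) ℂ)
        = ((List.ofFn fun t => (1 : Matrix (Fin (n + 1)) (Fin (n + 1)) ℂ)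
              + (a' t : ℂ) • Ecplx n (i' t) (i' t + 1)).prod) *
            ((List.ofFn fun s => (1 : Matrix (Fin (n + 1)) (Fin (n + 1)) ℂ)
              + (b' s : ℂ) • Ecplx n (j' s + 1) (j' s)).prod) :=
  stmt7_general n J₁ J₂ hdisj k k' l l' i i' j j' hi hisurj hi' hi'surj hj hjsurj hj' hj'surj a a' b
    b' ha ha' hb hb'
end

section
/- Let n ≥ 1 and let J_1, J_2 be disjoint subsets of {1,…,n}. Then the (n+1)×(n+1) complex matrix X(J_1,J_2) = ∑_{i∈J_1} E_{i,i+1} + ∑_{i∈J_2} E_{i+1,i} is nilpotent. -/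
open Matrix BigOperators

/-- `X(J₁,J₂) = ∑_{i∈J₁} E_{i,i+1} + ∑_{i∈J₂} E_{i+1,i}`. -/
noncomputable def XA (n : ℕ) (J₁ J₂ : Finset ℕ) : Matrix (Fin (n + 1)) (Fin (n + 1)) ℂ :=
  ∑ i ∈ J₁, Ecplx n i (i + 1) + ∑ i ∈ J₂, Ecplx n (i + 1) i

/-- Height function: goes down by 1 at step `k+1` if `k+1 ∈ J₁`, up by 1 otherwise. -/
def gAux (J₁ : Finset ℕ) : ℕ → ℤ
  | Nat.zero => 0
  | Nat.succ k => if k + 1 ∈ J₁ then gAux J₁ k - 1 else gAux J₁ k + 1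

lemma gAux_bound (J₁ : Finset ℕ) : ∀ k : ℕ, -(k : ℤ) ≤ gAux J₁ k ∧ gAux J₁ k ≤ k := by
  intro k
  induction k with
  | zero => simp [gAux]
  | succ k ih =>
    unfold gAux
    split <;> push_cast <;> omega

lemma pow_entry_le {N : ℕ} (X : Matrix (Fin N) (Fin N) ℂ) (f : Fin N → ℤ)
    (hf : ∀ p q, X p q ≠ 0 → f q < f p) :
    ∀ (m : ℕ) (p q), (X ^ m) p q ≠ 0 → f q + (m : ℤ) ≤ f p := by
  intro m
  induction m with
  | zero =>
    intro p q h
    rw [pow_zero] at h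
    rcases eq_or_ne p q with rfl | hne
    · simp
    · simp [Matrix.one_apply, hne] at h
  | succ m ih =>
    intro p q h
    rw [pow_succ, Matrix.mul_apply] at h
    obtain ⟨r, -, hr⟩ := Finset.exists_ne_zero_of_sum_ne_zero h
    have h1 : (X ^ m) p r ≠ 0 := fun e => hr (by simp [e])
    have h2 : X r q ≠ 0 := fun e => hr (by simp [e])
    have := ih p r h1
    have := hf r q h2
    push_cast
    omega

lemma XA_entry_lt (n : ℕ) (J₁ J₂ : Finset ℕ) (hdisj : Disjoint J₁ J₂)
    (p q : Fin (n + 1)) (h : XA n J₁ J₂ p q ≠ 0) :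
    gAux J₁ (q : ℕ) < gAux J₁ (p : ℕ) := by
  rw [XA, Matrix.add_apply] at h
  rcases (by by_contra hc; push_neg at hc; rw [hc.1, hc.2] at h; simp at h :
      (∑ i ∈ J₁, Ecplx n i (i + 1)) p q ≠ 0 ∨ (∑ i ∈ J₂, Ecplx n (i + 1) i) p q ≠ 0) with
      h1 | h2
  · simp only [Matrix.sum_apply] at h1
    obtain ⟨i, hi, hne⟩ := Finset.exists_ne_zero_of_sum_ne_zero h1
    simp only [Ecplx, Matrix.of_apply] at hne
    split at hne
    · rename_i hcond
      obtain ⟨hp, hq⟩ := hcond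
      have hq' : (q : ℕ) = (p : ℕ) + 1 := by omega
      have hp1 : (p : ℕ) + 1 ∈ J₁ := hp ▸ hi
      rw [hq']
      simp [gAux, hp1]
    · exact absurd rfl hne
  · simp only [Matrix.sum_apply] at h2
    obtain ⟨i, hi, hne⟩ := Finset.exists_ne_zero_of_sum_ne_zero h2
    simp only [Ecplx, Matrix.of_apply] at hne
    split at hne
    · rename_i hcond
      obtain ⟨hp, hq⟩ := hcond
      have hp' : (p : ℕ) = (q : ℕ) + 1 := by omega
      have hq2 : (q : ℕ) + 1 ∈ J₂ := hq ▸ hi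
      have hq1 : (q : ℕ) + 1 ∉ J₁ := fun hmem => Finset.disjoint_left.mp hdisj hmem hq2
      rw [hp']
      simp [gAux, hq1]
    · exact absurd rfl hne

/-- For disjoint `J₁, J₂ ⊆ {1,…,n}`, the matrix `X(J₁,J₂)` is nilpotent. -/
theorem stmt8 (n : ℕ) (hn : 1 ≤ n) (J₁ J₂ : Finset ℕ)
    (hJ₁ : J₁ ⊆ Finset.Icc 1 n) (hJ₂ : J₂ ⊆ Finset.Icc 1 n) (hdisj : Disjoint J₁ J₂) :
    IsNilpotent (XA n J₁ J₂) := by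
  refine ⟨2 * n + 1, ?_⟩
  ext p q
  by_contra h
  have key := pow_entry_le (XA n J₁ J₂) (fun r => gAux J₁ (r : ℕ))
    (fun r s hrs => XA_entry_lt n J₁ J₂ hdisj r s hrs) (2 * n + 1) p q (by simpa using h)
  have hbp := gAux_bound J₁ (p : ℕ)
  have hbq := gAux_bound J₁ (q : ℕ)
  have hp := p.isLt
  have hq := q.isLt
  push_cast at key
  omega
end

section
/- Let n ≥ 1 and let J_1, J_2 be disjoint subsets of {1,…,n}, and let X(J_1,J_2) = ∑_{i∈J_1} E_{i,i+1} + ∑_{i∈J_2} E_{i+1,i}. Let m be the largest k ≥ 0 such that there exists a ∈ {1,…,n} with {a, a+1, …, a+k−1} ⊆ J_1 or {a, a+1, …, a+k−1} ⊆ J_2 (so m = 0 when J_1 = J_2 = ∅). Then X(J_1,J_2)^{m} ≠ 0 and X(J_1,J_2)^{m+1} = 0; in particular the largest Jordan block of X(J_1,J_2) has size m+1. -/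
open Matrix BigOperators

lemma Xentry (n : ℕ) (J₁ J₂ : Finset ℕ) (p q : Fin (n + 1)) :
    XA n J₁ J₂ p q =
      if ((q : ℕ) = (p : ℕ) + 1 ∧ (q : ℕ) ∈ J₁) ∨ ((p : ℕ) = (q : ℕ) + 1 ∧ (p : ℕ) ∈ J₂)
      then 1 else 0 := by
  classical
  simp only [XA, Ecplx, Matrix.add_apply, Matrix.sum_apply, Matrix.of_apply]
  have e1 : ∀ i : ℕ, ((p : ℕ) + 1 = i ∧ (q : ℕ) + 1 = i + 1) ↔
      (i = (p : ℕ) + 1 ∧ (q : ℕ) = (p : ℕ) + 1) := by intro i; omega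
  have e2 : ∀ i : ℕ, ((p : ℕ) + 1 = i + 1 ∧ (q : ℕ) + 1 = i) ↔
      (i = (q : ℕ) + 1 ∧ (p : ℕ) = (q : ℕ) + 1) := by intro i; omega
  simp only [e1, e2]
  by_cases hA : (q : ℕ) = (p : ℕ) + 1 <;> by_cases hB : (p : ℕ) = (q : ℕ) + 1
  · omega
  · have hf : ¬ ((p : ℕ) = (p : ℕ) + 1 + 1) := by omega
    by_cases hm : (q : ℕ) ∈ J₁ <;>
      simp [hA, hB, hm, hf, Finset.sum_ite_eq']
  · have hf : ¬ ((q : ℕ) = (q : ℕ) + 1 + 1) := by omega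
    by_cases hm : (p : ℕ) ∈ J₂ <;>
      simp [hA, hB, hm, hf, Finset.sum_ite_eq']
  · simp [hA, hB]

lemma Xsupport (n : ℕ) (J₁ J₂ : Finset ℕ) (hdisj : Disjoint J₁ J₂) :
    ∀ k (p q : Fin (n + 1)), (XA n J₁ J₂ ^ k) p q ≠ 0 →
      ((q : ℕ) = (p : ℕ) + k ∧ Finset.Ico ((p : ℕ) + 1) ((p : ℕ) + k + 1) ⊆ J₁) ∨
      ((p : ℕ) = (q : ℕ) + k ∧ Finset.Ico ((q : ℕ) + 1) ((q : ℕ) + k + 1) ⊆ J₂) := by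
  intro k
  induction k with
  | zero =>
    intro p q h
    rw [pow_zero, Matrix.one_apply] at h
    have hpq : p = q := by by_contra hne; simp [hne] at h
    left
    refine ⟨by rw [hpq]; omega, ?_⟩
    intro x hx
    rw [Finset.mem_Ico] at hx
    omega
  | succ k ih =>
    intro p q h
    rw [pow_succ', Matrix.mul_apply] at h
    obtain ⟨r, -, hr⟩ := Finset.exists_ne_zero_of_sum_ne_zero h
    have h1 := left_ne_zero_of_mul hr
    have h2 := right_ne_zero_of_mul hr
    rw [Xentry] at h1
    have h1' : ((r : ℕ) = (p : ℕ) + 1 ∧ (r : ℕ) ∈ J₁) ∨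
        ((p : ℕ) = (r : ℕ) + 1 ∧ (p : ℕ) ∈ J₂) := by
      by_contra hc; simp only [if_neg hc] at h1; exact h1 rfl
    have hdisj' := Finset.disjoint_left.mp hdisj
    rcases h1' with ⟨hr1, hrJ⟩ | ⟨hr1, hpJ⟩ <;> rcases ih r q h2 with ⟨hq1, hsub⟩ | ⟨hq1, hsub⟩
    · left
      refine ⟨by omega, fun x hx => ?_⟩
      rw [Finset.mem_Ico] at hx
      rcases eq_or_ne x ((p : ℕ) + 1) with hxe | hxe
      · rw [hxe, ← hr1]; exact hrJ
      · exact hsub (Finset.mem_Ico.mpr ⟨by omega, by omega⟩)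
    · rcases Nat.eq_zero_or_pos k with hk | hk
      · subst hk
        left
        refine ⟨by omega, fun x hx => ?_⟩
        rw [Finset.mem_Ico] at hx
        have : x = (r : ℕ) := by omega
        rw [this]; exact hrJ
      · exact absurd (hsub (Finset.mem_Ico.mpr ⟨by omega, by omega⟩)) (hdisj' hrJ)
    · rcases Nat.eq_zero_or_pos k with hk | hk
      · subst hk
        right
        refine ⟨by omega, fun x hx => ?_⟩
        rw [Finset.mem_Ico] at hx
        have : x = (p : ℕ) := by omega
        rw [this]; exact hpJ
      · exact absurd hpJ (hdisj' (hsub (Finset.mem_Ico.mpr ⟨by omega, by omega⟩)))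
    · right
      refine ⟨by omega, fun x hx => ?_⟩
      rw [Finset.mem_Ico] at hx
      rcases eq_or_ne x ((q : ℕ) + k + 1) with hxe | hxe
      · rw [hxe, show (q : ℕ) + k + 1 = (p : ℕ) by omega]; exact hpJ
      · exact hsub (Finset.mem_Ico.mpr ⟨by omega, by omega⟩)

lemma Xpath (n : ℕ) (J₁ J₂ : Finset ℕ) (hdisj : Disjoint J₁ J₂) :
    ∀ k p : ℕ, (hp : p + k ≤ n) → Finset.Ico (p + 1) (p + 1 + k) ⊆ J₁ →
      (XA n J₁ J₂ ^ k) ⟨p, by omega⟩ ⟨p + k, by omega⟩ = 1 := by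
  intro k
  induction k with
  | zero =>
    intro p hp _
    rw [pow_zero]
    exact Matrix.one_apply_eq _
  | succ k ih =>
    intro p hp hsub
    rw [pow_succ', Matrix.mul_apply]
    have hmem : p + 1 ∈ J₁ := hsub (Finset.mem_Ico.mpr ⟨le_refl _, by omega⟩)
    rw [Finset.sum_eq_single (⟨p + 1, by omega⟩ : Fin (n + 1))]
    · have e1 : XA n J₁ J₂ ⟨p, by omega⟩ ⟨p + 1, by omega⟩ = 1 := by
        rw [Xentry, if_pos]
        left
        exact ⟨rfl, hmem⟩
      have e2 : (XA n J₁ J₂ ^ k) ⟨p + 1, by omega⟩ ⟨p + (k + 1), by omega⟩ = 1 := by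
        have := ih (p + 1) (by omega) (by
          intro x hx
          apply hsub
          rw [Finset.mem_Ico] at hx ⊢
          omega)
        have hq : (⟨p + 1 + k, by omega⟩ : Fin (n + 1)) = ⟨p + (k + 1), by omega⟩ :=
          by rw [Fin.mk_eq_mk]; omega
        rwa [hq] at this
      rw [e1, e2, one_mul]
    · intro r _ hne
      by_cases hX : XA n J₁ J₂ ⟨p, by omega⟩ r = 0
      · rw [hX, zero_mul]
      · rw [Xentry] at hX
        have hc : ((r : ℕ) = ((⟨p, by omega⟩ : Fin (n + 1)) : ℕ) + 1 ∧ (r : ℕ) ∈ J₁) ∨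
            (((⟨p, by omega⟩ : Fin (n + 1)) : ℕ) = (r : ℕ) + 1 ∧
              ((⟨p, by omega⟩ : Fin (n + 1)) : ℕ) ∈ J₂) := by
          by_contra hcc; rw [if_neg hcc] at hX; exact hX rfl
        simp only [Fin.val_mk] at hc
        rcases hc with ⟨hr1, _⟩ | ⟨hr1, _⟩
        · exact absurd (Fin.ext hr1 : r = ⟨p + 1, by omega⟩) hne
        · by_cases hY : (XA n J₁ J₂ ^ k) r ⟨p + (k + 1), by omega⟩ = 0
          · rw [hY, mul_zero]
          · rcases Xsupport n J₁ J₂ hdisj k r _ hY with ⟨hh, -⟩ | ⟨hh, -⟩ <;>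
              simp only [Fin.val_mk] at hh <;> omega
    · intro hr
      exact absurd (Finset.mem_univ _) hr

lemma XAtrans (n : ℕ) (J₁ J₂ : Finset ℕ) : (XA n J₁ J₂)ᵀ = XA n J₂ J₁ := by
  ext p q
  rw [Matrix.transpose_apply, Xentry, Xentry]
  exact if_congr (by tauto) rfl rfl

/-- If `m` is the largest `k ≥ 0` such that some `k` consecutive integers
`{a,…,a+k-1}` (with `a ∈ {1,…,n}`) all lie in `J₁` or all lie in `J₂`, then
`X(J₁,J₂)^m ≠ 0` and `X(J₁,J₂)^(m+1) = 0`. -/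
theorem stmt10 (n : ℕ) (hn : 1 ≤ n) (J₁ J₂ : Finset ℕ)
    (hJ₁ : J₁ ⊆ Finset.Icc 1 n) (hJ₂ : J₂ ⊆ Finset.Icc 1 n) (hdisj : Disjoint J₁ J₂)
    (m : ℕ)
    (hex : ∃ a : ℕ, 1 ≤ a ∧ a ≤ n ∧
      (Finset.Ico a (a + m) ⊆ J₁ ∨ Finset.Ico a (a + m) ⊆ J₂))
    (hmax : ∀ k : ℕ, (∃ a : ℕ, 1 ≤ a ∧ a ≤ n ∧
      (Finset.Ico a (a + k) ⊆ J₁ ∨ Finset.Ico a (a + k) ⊆ J₂)) → k ≤ m) :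
    XA n J₁ J₂ ^ m ≠ 0 ∧ XA n J₁ J₂ ^ (m + 1) = 0 := by
  constructor
  · obtain ⟨a, ha1, ha2, hJ | hJ⟩ := hex
    · have hb : a + m ≤ n + 1 := by
        rcases Nat.eq_zero_or_pos m with hm | hm
        · omega
        · have hmem : a + m - 1 ∈ J₁ := hJ (Finset.mem_Ico.mpr ⟨by omega, by omega⟩)
          have := (Finset.mem_Icc.mp (hJ₁ hmem)).2
          omega
      intro h0
      have := Xpath n J₁ J₂ hdisj m (a - 1) (by omega) (by
        intro x hx
        apply hJ
        rw [Finset.mem_Ico] at hx ⊢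
        omega)
      rw [h0] at this
      simp at this
    · have hb : a + m ≤ n + 1 := by
        rcases Nat.eq_zero_or_pos m with hm | hm
        · omega
        · have hmem : a + m - 1 ∈ J₂ := hJ (Finset.mem_Ico.mpr ⟨by omega, by omega⟩)
          have := (Finset.mem_Icc.mp (hJ₂ hmem)).2
          omega
      intro h0
      have h0' : XA n J₂ J₁ ^ m = 0 := by
        rw [← XAtrans, ← Matrix.transpose_pow, h0, Matrix.transpose_zero]
      have := Xpath n J₂ J₁ hdisj.symm m (a - 1) (by omega) (by
        intro x hx
        apply hJ
        rw [Finset.mem_Ico] at hx ⊢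
        omega)
      rw [h0'] at this
      simp at this
  · ext p q
    rw [Matrix.zero_apply]
    by_contra h
    rcases Xsupport n J₁ J₂ hdisj (m + 1) p q h with ⟨h1, hsub⟩ | ⟨h1, hsub⟩
    · have hmem : (p : ℕ) + 1 ∈ J₁ := hsub (Finset.mem_Ico.mpr ⟨le_refl _, by omega⟩)
      have hle := (Finset.mem_Icc.mp (hJ₁ hmem)).2
      have := hmax (m + 1) ⟨(p : ℕ) + 1, by omega, hle, Or.inl (by
        intro x hx
        apply hsub
        rw [Finset.mem_Ico] at hx ⊢
        omega)⟩
      omega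
    · have hmem : (q : ℕ) + 1 ∈ J₂ := hsub (Finset.mem_Ico.mpr ⟨le_refl _, by omega⟩)
      have hle := (Finset.mem_Icc.mp (hJ₂ hmem)).2
      have := hmax (m + 1) ⟨(q : ℕ) + 1, by omega, hle, Or.inr (by
        intro x hx
        apply hsub
        rw [Finset.mem_Ico] at hx ⊢
        omega)⟩
      omega
end

section
/- Let n ≥ 1 and let J_1, J_2 be disjoint subsets of {1,…,n} with J_1 ∪ J_2 ≠ ∅, and let X(J_1,J_2) = ∑_{i∈J_1} E_{i,i+1} + ∑_{i∈J_2} E_{i+1,i}. Let m ≥ 1 be the largest k such that some k consecutive integers {a,…,a+k−1} are all contained in J_1 or all contained in J_2. Then the rank of X(J_1,J_2)^m equals the maximum cardinality of a family of pairwise disjoint subsets of {1,…,n+1}, each of the form {a, a+1, …, a+m} with {a, a+1, …, a+m−1} ⊆ J_1 or {a, a+1, …, a+m−1} ⊆ J_2. -/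
open Matrix BigOperators Finset Submodule

lemma XA_apply (n : ℕ) (J₁ J₂ : Finset ℕ) (p q : Fin (n + 1)) :
    XA n J₁ J₂ p q =
      (if ((q : ℕ) = (p : ℕ) + 1 ∧ ((p : ℕ) + 1) ∈ J₁) then 1 else 0)
      + (if ((p : ℕ) = (q : ℕ) + 1 ∧ ((q : ℕ) + 1) ∈ J₂) then 1 else 0) := by
  classical
  unfold XA Ecplx
  simp only [Matrix.add_apply, Matrix.sum_apply, Matrix.of_apply]
  congr 1
  · rw [show (∑ i ∈ J₁, if (p : ℕ) + 1 = i ∧ (q : ℕ) + 1 = i + 1 then (1:ℂ) else 0)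
        = ∑ i ∈ J₁, if i = (p : ℕ) + 1 ∧ (q : ℕ) = (p : ℕ) + 1 then (1:ℂ) else 0 from
      Finset.sum_congr rfl (fun i _ => if_congr (by constructor <;> (rintro ⟨h1, h2⟩; omega)) rfl rfl)]
    by_cases hq : (q : ℕ) = (p : ℕ) + 1
    · simp only [hq, and_true]
      rw [Finset.sum_ite_eq' J₁ ((p : ℕ) + 1) (fun _ => (1:ℂ))]
      simp
    · simp [hq]
  · rw [show (∑ i ∈ J₂, if (p : ℕ) + 1 = i + 1 ∧ (q : ℕ) + 1 = i then (1:ℂ) else 0)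
        = ∑ i ∈ J₂, if i = (q : ℕ) + 1 ∧ (p : ℕ) = (q : ℕ) + 1 then (1:ℂ) else 0 from
      Finset.sum_congr rfl (fun i _ => if_congr (by constructor <;> (rintro ⟨h1, h2⟩; omega)) rfl rfl)]
    by_cases hq : (p : ℕ) = (q : ℕ) + 1
    · simp only [hq, and_true]
      rw [Finset.sum_ite_eq' J₂ ((q : ℕ) + 1) (fun _ => (1:ℂ))]
      simp
    · simp [hq]

lemma sum_fin_ind (n : ℕ) (C : Prop) [Decidable C] (v : ℕ) (hv : C → v ≤ n) :
    (∑ r : Fin (n + 1), if C ∧ (r : ℕ) = v then (1:ℂ) else 0) = if C then 1 else 0 := by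
  by_cases hC : C
  · simp only [hC, true_and, if_true]
    rw [Finset.sum_eq_single (⟨v, by have := hv hC; omega⟩ : Fin (n + 1))]
    · simp
    · intro b _ hb
      rw [if_neg]
      intro hbv
      exact hb (Fin.ext (by simpa using hbv))
    · intro h; exact absurd (Finset.mem_univ _) h
  · simp [hC]

lemma XA_pow_apply (n : ℕ) (J₁ J₂ : Finset ℕ) (hdisj : Disjoint J₁ J₂) :
    ∀ k, 1 ≤ k → ∀ p q : Fin (n + 1),
    (XA n J₁ J₂ ^ k) p q =
      (if ((q : ℕ) = (p : ℕ) + k ∧ Finset.Ico ((p : ℕ) + 1) ((p : ℕ) + 1 + k) ⊆ J₁)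
        then 1 else 0)
      + (if ((p : ℕ) = (q : ℕ) + k ∧ Finset.Ico ((q : ℕ) + 1) ((q : ℕ) + 1 + k) ⊆ J₂)
        then 1 else 0) := by
  intro k
  induction k with
  | zero => omega
  | succ k ih =>
    intro _ p q
    rcases Nat.eq_zero_or_pos k with hk | hk
    · subst hk
      rw [pow_one, XA_apply]
      congr 1
      · apply if_congr _ rfl rfl
        constructor
        · rintro ⟨h1, h2⟩
          refine ⟨h1, fun x hx => ?_⟩
          rw [Finset.mem_Ico] at hx
          have : x = (p : ℕ) + 1 := by omega
          subst this; exact h2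
        · rintro ⟨h1, h2⟩
          exact ⟨h1, h2 (by rw [Finset.mem_Ico]; omega)⟩
      · apply if_congr _ rfl rfl
        constructor
        · rintro ⟨h1, h2⟩
          refine ⟨h1, fun x hx => ?_⟩
          rw [Finset.mem_Ico] at hx
          have : x = (q : ℕ) + 1 := by omega
          subst this; exact h2
        · rintro ⟨h1, h2⟩
          exact ⟨h1, h2 (by rw [Finset.mem_Ico]; omega)⟩
    · have ihk := ih hk
      rw [pow_succ, Matrix.mul_apply]
      have expand : ∀ r : Fin (n + 1),
          (XA n J₁ J₂ ^ k) p r * XA n J₁ J₂ r q =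
          ((if (((r : ℕ) = (p : ℕ) + k ∧ Finset.Ico ((p : ℕ) + 1) ((p : ℕ) + 1 + k) ⊆ J₁)
              ∧ ((q : ℕ) = (r : ℕ) + 1 ∧ ((r : ℕ) + 1) ∈ J₁)) then 1 else 0)
          + (if (((r : ℕ) = (p : ℕ) + k ∧ Finset.Ico ((p : ℕ) + 1) ((p : ℕ) + 1 + k) ⊆ J₁)
              ∧ ((r : ℕ) = (q : ℕ) + 1 ∧ ((q : ℕ) + 1) ∈ J₂)) then 1 else 0))
          + ((if (((p : ℕ) = (r : ℕ) + k ∧ Finset.Ico ((r : ℕ) + 1) ((r : ℕ) + 1 + k) ⊆ J₂)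
              ∧ ((q : ℕ) = (r : ℕ) + 1 ∧ ((r : ℕ) + 1) ∈ J₁)) then 1 else 0)
          + (if (((p : ℕ) = (r : ℕ) + k ∧ Finset.Ico ((r : ℕ) + 1) ((r : ℕ) + 1 + k) ⊆ J₂)
              ∧ ((r : ℕ) = (q : ℕ) + 1 ∧ ((q : ℕ) + 1) ∈ J₂)) then 1 else 0)) := by
        intro r
        have ite_mul_ite : ∀ (A B : Prop) [Decidable A] [Decidable B],
            (if A then (1:ℂ) else 0) * (if B then 1 else 0) = if A ∧ B then 1 else 0 := by
          intro A B dA dB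
          by_cases hA : A <;> by_cases hB : B <;> simp [hA, hB]
        rw [ihk p r, XA_apply, add_mul, mul_add, mul_add,
          ite_mul_ite, ite_mul_ite, ite_mul_ite, ite_mul_ite]
      rw [Finset.sum_congr rfl (fun r _ => expand r)]
      rw [Finset.sum_add_distrib, Finset.sum_add_distrib, Finset.sum_add_distrib]
      have S12 : (∑ r : Fin (n + 1), if (((r : ℕ) = (p : ℕ) + k ∧
          Finset.Ico ((p : ℕ) + 1) ((p : ℕ) + 1 + k) ⊆ J₁)
          ∧ ((r : ℕ) = (q : ℕ) + 1 ∧ ((q : ℕ) + 1) ∈ J₂)) then (1:ℂ) else 0) = 0 := by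
        apply Finset.sum_eq_zero
        intro r _
        rw [if_neg]
        rintro ⟨⟨h1, h2⟩, ⟨h3, h4⟩⟩
        have hmem : (q : ℕ) + 1 ∈ J₁ := h2 (by rw [Finset.mem_Ico]; omega)
        exact (Finset.disjoint_left.mp hdisj hmem) h4
      have S21 : (∑ r : Fin (n + 1), if (((p : ℕ) = (r : ℕ) + k ∧
          Finset.Ico ((r : ℕ) + 1) ((r : ℕ) + 1 + k) ⊆ J₂)
          ∧ ((q : ℕ) = (r : ℕ) + 1 ∧ ((r : ℕ) + 1) ∈ J₁)) then (1:ℂ) else 0) = 0 := by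
        apply Finset.sum_eq_zero
        intro r _
        rw [if_neg]
        rintro ⟨⟨h1, h2⟩, ⟨h3, h4⟩⟩
        have hmem : (r : ℕ) + 1 ∈ J₂ := h2 (by rw [Finset.mem_Ico]; omega)
        exact (Finset.disjoint_left.mp hdisj h4) hmem
      have S11 : (∑ r : Fin (n + 1), if (((r : ℕ) = (p : ℕ) + k ∧
          Finset.Ico ((p : ℕ) + 1) ((p : ℕ) + 1 + k) ⊆ J₁)
          ∧ ((q : ℕ) = (r : ℕ) + 1 ∧ ((r : ℕ) + 1) ∈ J₁)) then (1:ℂ) else 0)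
          = if ((q : ℕ) = (p : ℕ) + (k + 1) ∧
              Finset.Ico ((p : ℕ) + 1) ((p : ℕ) + 1 + (k + 1)) ⊆ J₁) then 1 else 0 := by
        rw [show (∑ r : Fin (n + 1), if (((r : ℕ) = (p : ℕ) + k ∧
            Finset.Ico ((p : ℕ) + 1) ((p : ℕ) + 1 + k) ⊆ J₁)
            ∧ ((q : ℕ) = (r : ℕ) + 1 ∧ ((r : ℕ) + 1) ∈ J₁)) then (1:ℂ) else 0)
            = ∑ r : Fin (n + 1), if (((q : ℕ) = (p : ℕ) + (k + 1) ∧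
              Finset.Ico ((p : ℕ) + 1) ((p : ℕ) + 1 + (k + 1)) ⊆ J₁) ∧ (r : ℕ) = (p : ℕ) + k)
              then (1:ℂ) else 0 from Finset.sum_congr rfl (fun r _ => if_congr ?_ rfl rfl)]
        · exact sum_fin_ind n _ _ (fun hC => by have := q.isLt; omega)
        · constructor
          · rintro ⟨⟨h1, h2⟩, ⟨h3, h4⟩⟩
            refine ⟨⟨by omega, fun x hx => ?_⟩, h1⟩
            rw [Finset.mem_Ico] at hx
            by_cases hx2 : x < (p : ℕ) + 1 + k
            · exact h2 (by rw [Finset.mem_Ico]; omega)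
            · have : x = (p : ℕ) + k + 1 := by omega
              subst this
              rwa [show (p : ℕ) + k + 1 = (r : ℕ) + 1 by omega]
          · rintro ⟨⟨h1, h2⟩, h3⟩
            refine ⟨⟨h3, fun x hx => h2 ?_⟩, by omega, ?_⟩
            · rw [Finset.mem_Ico] at hx ⊢; omega
            · exact h2 (by rw [Finset.mem_Ico]; omega)
      have S22 : (∑ r : Fin (n + 1), if (((p : ℕ) = (r : ℕ) + k ∧
          Finset.Ico ((r : ℕ) + 1) ((r : ℕ) + 1 + k) ⊆ J₂)
          ∧ ((r : ℕ) = (q : ℕ) + 1 ∧ ((q : ℕ) + 1) ∈ J₂)) then (1:ℂ) else 0)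
          = if ((p : ℕ) = (q : ℕ) + (k + 1) ∧
              Finset.Ico ((q : ℕ) + 1) ((q : ℕ) + 1 + (k + 1)) ⊆ J₂) then 1 else 0 := by
        rw [show (∑ r : Fin (n + 1), if (((p : ℕ) = (r : ℕ) + k ∧
            Finset.Ico ((r : ℕ) + 1) ((r : ℕ) + 1 + k) ⊆ J₂)
            ∧ ((r : ℕ) = (q : ℕ) + 1 ∧ ((q : ℕ) + 1) ∈ J₂)) then (1:ℂ) else 0)
            = ∑ r : Fin (n + 1), if (((p : ℕ) = (q : ℕ) + (k + 1) ∧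
              Finset.Ico ((q : ℕ) + 1) ((q : ℕ) + 1 + (k + 1)) ⊆ J₂) ∧ (r : ℕ) = (q : ℕ) + 1)
              then (1:ℂ) else 0 from Finset.sum_congr rfl (fun r _ => if_congr ?_ rfl rfl)]
        · exact sum_fin_ind n _ _ (fun hC => by have := p.isLt; omega)
        · constructor
          · rintro ⟨⟨h1, h2⟩, ⟨h3, h4⟩⟩
            refine ⟨⟨by omega, fun x hx => ?_⟩, h3⟩
            rw [Finset.mem_Ico] at hx
            by_cases hx2 : x = (q : ℕ) + 1
            · subst hx2; exact h4
            · exact h2 (by rw [Finset.mem_Ico]; omega)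
          · rintro ⟨⟨h1, h2⟩, h3⟩
            refine ⟨⟨by omega, fun x hx => h2 ?_⟩, h3, ?_⟩
            · rw [Finset.mem_Ico] at hx ⊢; omega
            · exact h2 (by rw [Finset.mem_Ico]; omega)
      rw [S11, S12, S21, S22]
      push_cast
      ring

section AuxDefs

variable (n m : ℕ) (J₁ J₂ : Finset ℕ)

/-- starting points of maximal-length runs -/
def runP : Finset ℕ :=
  (Finset.Icc 1 n).filter
    (fun a => Finset.Ico a (a + m) ⊆ J₁ ∨ Finset.Ico a (a + m) ⊆ J₂)

/-- depth of a run start within its chain -/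
def depthP (p : ℕ) : ℕ :=
  Nat.findGreatest (fun k => ∀ i ∈ Finset.Icc 1 k, p - i * m ∈ runP n m J₁ J₂) n

def AstarP : Finset ℕ :=
  (runP n m J₁ J₂).filter (fun a => Even (depthP n m J₁ J₂ a))

end AuxDefs

section AuxLemmas

variable {n m : ℕ} {J₁ J₂ : Finset ℕ}

lemma mem_runP_iff {p : ℕ} :
    p ∈ runP n m J₁ J₂ ↔ (1 ≤ p ∧ p ≤ n) ∧
      (Finset.Ico p (p + m) ⊆ J₁ ∨ Finset.Ico p (p + m) ⊆ J₂) := by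
  simp [runP, Finset.mem_filter, Finset.mem_Icc]

lemma runP_add_le (hm : 1 ≤ m) (hJ₁ : J₁ ⊆ Finset.Icc 1 n) (hJ₂ : J₂ ⊆ Finset.Icc 1 n)
    {p : ℕ} (hp : p ∈ runP n m J₁ J₂) : p + m ≤ n + 1 := by
  rw [mem_runP_iff] at hp
  have hmem : p + m - 1 ∈ Finset.Ico p (p + m) := by
    rw [Finset.mem_Ico]; omega
  rcases hp.2 with h | h
  · have := hJ₁ (h hmem); rw [Finset.mem_Icc] at this; omega
  · have := hJ₂ (h hmem); rw [Finset.mem_Icc] at this; omega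

lemma not_both (hm : 1 ≤ m) (hdisj : Disjoint J₁ J₂) {p : ℕ}
    (h1 : Finset.Ico p (p + m) ⊆ J₁) (h2 : Finset.Ico p (p + m) ⊆ J₂) : False := by
  have hp : p ∈ Finset.Ico p (p + m) := by rw [Finset.mem_Ico]; omega
  exact (Finset.disjoint_left.mp hdisj (h1 hp)) (h2 hp)

/-- two distinct runs are at distance at least m -/
lemma gap (hm : 1 ≤ m) (hdisj : Disjoint J₁ J₂)
    (hmax : ∀ k : ℕ, (∃ a : ℕ, 1 ≤ a ∧ a ≤ n ∧
      (Finset.Ico a (a + k) ⊆ J₁ ∨ Finset.Ico a (a + k) ⊆ J₂)) → k ≤ m)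
    {p q : ℕ} (hp : p ∈ runP n m J₁ J₂) (hq : q ∈ runP n m J₁ J₂) (hlt : p < q) :
    p + m ≤ q := by
  by_contra hcon
  push_neg at hcon
  rw [mem_runP_iff] at hp hq
  have hqq : q ∈ Finset.Ico q (q + m) := by rw [Finset.mem_Ico]; omega
  have hqp : q ∈ Finset.Ico p (p + m) := by rw [Finset.mem_Ico]; omega
  rcases hp.2 with h1 | h1 <;> rcases hq.2 with h2 | h2
  · -- both J₁ : long run
    have hsub : Finset.Ico p (p + (q + m - p)) ⊆ J₁ := by
      intro x hx
      rw [Finset.mem_Ico] at hx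
      by_cases hx2 : x < p + m
      · exact h1 (by rw [Finset.mem_Ico]; omega)
      · exact h2 (by rw [Finset.mem_Ico]; omega)
    have := hmax (q + m - p) ⟨p, hp.1.1, hp.1.2, Or.inl hsub⟩
    omega
  · exact (Finset.disjoint_left.mp hdisj (h1 hqp)) (h2 hqq)
  · exact (Finset.disjoint_left.mp hdisj (h2 hqq)) (h1 hqp)
  · have hsub : Finset.Ico p (p + (q + m - p)) ⊆ J₂ := by
      intro x hx
      rw [Finset.mem_Ico] at hx
      by_cases hx2 : x < p + m
      · exact h1 (by rw [Finset.mem_Ico]; omega)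
      · exact h2 (by rw [Finset.mem_Ico]; omega)
    have := hmax (q + m - p) ⟨p, hp.1.1, hp.1.2, Or.inr hsub⟩
    omega

/-- abutting runs have opposite types -/
lemma abut_flip (hm : 1 ≤ m)
    (hmax : ∀ k : ℕ, (∃ a : ℕ, 1 ≤ a ∧ a ≤ n ∧
      (Finset.Ico a (a + k) ⊆ J₁ ∨ Finset.Ico a (a + k) ⊆ J₂)) → k ≤ m)
    {p : ℕ} (hp : p ∈ runP n m J₁ J₂) :
    ¬ (Finset.Ico p (p + m) ⊆ J₁ ∧ Finset.Ico (p + m) (p + m + m) ⊆ J₁) ∧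
    ¬ (Finset.Ico p (p + m) ⊆ J₂ ∧ Finset.Ico (p + m) (p + m + m) ⊆ J₂) := by
  rw [mem_runP_iff] at hp
  constructor <;> rintro ⟨h1, h2⟩
  · have hsub : Finset.Ico p (p + (m + m)) ⊆ J₁ := by
      intro x hx
      rw [Finset.mem_Ico] at hx
      by_cases hx2 : x < p + m
      · exact h1 (by rw [Finset.mem_Ico]; omega)
      · exact h2 (by rw [Finset.mem_Ico]; omega)
    have := hmax (m + m) ⟨p, hp.1.1, hp.1.2, Or.inl hsub⟩
    omega
  · have hsub : Finset.Ico p (p + (m + m)) ⊆ J₂ := by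
      intro x hx
      rw [Finset.mem_Ico] at hx
      by_cases hx2 : x < p + m
      · exact h1 (by rw [Finset.mem_Ico]; omega)
      · exact h2 (by rw [Finset.mem_Ico]; omega)
    have := hmax (m + m) ⟨p, hp.1.1, hp.1.2, Or.inr hsub⟩
    omega


lemma depthP_spec (p : ℕ) :
    ∀ i ∈ Finset.Icc 1 (depthP n m J₁ J₂ p), p - i * m ∈ runP n m J₁ J₂ :=
  Nat.findGreatest_spec
    (P := fun k => ∀ i ∈ Finset.Icc 1 k, p - i * m ∈ runP n m J₁ J₂)
    (m := 0) (Nat.zero_le n) (fun i hi => by simp at hi)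

lemma depthP_le (p : ℕ) : depthP n m J₁ J₂ p ≤ n := Nat.findGreatest_le n

lemma depthP_pos_iff (hn : 1 ≤ n) {p : ℕ} :
    0 < depthP n m J₁ J₂ p ↔ p - m ∈ runP n m J₁ J₂ := by
  constructor
  · intro h
    have := depthP_spec (n := n) (m := m) (J₁ := J₁) (J₂ := J₂) p 1 (by rw [Finset.mem_Icc]; omega)
    simpa using this
  · intro h
    apply Nat.le_findGreatest hn
    intro i hi
    rw [Finset.mem_Icc] at hi
    have : i = 1 := by omega
    subst this
    simpa using h

lemma depthP_succ (hn : 1 ≤ n) (hm : 1 ≤ m) {p : ℕ}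
    (hp : p ∈ runP n m J₁ J₂) (hq : p + m ∈ runP n m J₁ J₂) :
    depthP n m J₁ J₂ (p + m) = depthP n m J₁ J₂ p + 1 := by
  have hQp := depthP_spec (n := n) (m := m) (J₁ := J₁) (J₂ := J₂) p
  have hple : 1 ≤ p ∧ p ≤ n := (mem_runP_iff.mp hp).1
  have hdbound : depthP n m J₁ J₂ p + 1 ≤ n := by
    rcases Nat.eq_zero_or_pos (depthP n m J₁ J₂ p) with h0 | h0
    · omega
    · have := hQp (depthP n m J₁ J₂ p) (by rw [Finset.mem_Icc]; omega)
      have hge := (mem_runP_iff.mp this).1.1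
      have : depthP n m J₁ J₂ p * m ≤ p - 1 := by omega
      have hmm : depthP n m J₁ J₂ p ≤ depthP n m J₁ J₂ p * m := Nat.le_mul_of_pos_right _ hm
      omega
  apply le_antisymm
  · -- ≤
    by_contra hcon
    push_neg at hcon
    have hD : 0 < depthP n m J₁ J₂ (p + m) := by omega
    have hQ := depthP_spec (n := n) (m := m) (J₁ := J₁) (J₂ := J₂) (p + m)
    have hQ' : ∀ i ∈ Finset.Icc 1 (depthP n m J₁ J₂ (p + m) - 1),
        p - i * m ∈ runP n m J₁ J₂ := by
      intro i hi
      rw [Finset.mem_Icc] at hi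
      have := hQ (i + 1) (by rw [Finset.mem_Icc]; omega)
      have harith : p + m - (i + 1) * m = p - i * m := by
        have : (i + 1) * m = i * m + m := by ring
        omega
      rwa [harith] at this
    have hle := depthP_le (n := n) (m := m) (J₁ := J₁) (J₂ := J₂) (p + m)
    have := Nat.findGreatest_is_greatest (P := fun k => ∀ i ∈ Finset.Icc 1 k,
        p - i * m ∈ runP n m J₁ J₂) (n := n)
        (k := depthP n m J₁ J₂ (p + m) - 1)
        (show depthP n m J₁ J₂ p < _ by omega) (by omega)
    exact this hQ'
  · -- ≥
    apply Nat.le_findGreatest hdbound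
    intro i hi
    rw [Finset.mem_Icc] at hi
    rcases Nat.eq_or_lt_of_le hi.1 with h1 | h1
    · have : i = 1 := h1.symm
      subst this
      simpa using hp
    · have := hQp (i - 1) (by rw [Finset.mem_Icc]; omega)
      have harith : p + m - i * m = p - (i - 1) * m := by
        have : i * m = (i - 1) * m + m := by
          have : i = (i - 1) + 1 := by omega
          nth_rewrite 1 [this]; ring
        omega
      rwa [harith]

end AuxLemmas

section Rank

lemma mem_AstarP_iff {n m : ℕ} {J₁ J₂ : Finset ℕ} {a : ℕ} :
    a ∈ AstarP n m J₁ J₂ ↔ a ∈ runP n m J₁ J₂ ∧ Even (depthP n m J₁ J₂ a) :=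
  Finset.mem_filter

lemma rank_lower (n m : ℕ) (hn : 1 ≤ n) (hm : 1 ≤ m) (J₁ J₂ : Finset ℕ)
    (hJ₁ : J₁ ⊆ Finset.Icc 1 n) (hJ₂ : J₂ ⊆ Finset.Icc 1 n) (hdisj : Disjoint J₁ J₂)
    (hmax : ∀ k : ℕ, (∃ a : ℕ, 1 ≤ a ∧ a ≤ n ∧
      (Finset.Ico a (a + k) ⊆ J₁ ∨ Finset.Ico a (a + k) ⊆ J₂)) → k ≤ m) :
    (AstarP n m J₁ J₂).card ≤ (XA n J₁ J₂ ^ m).rank := by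
  classical
  have hent := XA_pow_apply n J₁ J₂ hdisj m hm
  set X := XA n J₁ J₂ ^ m with hX
  have hPm : ∀ a : {a : ℕ // a ∈ AstarP n m J₁ J₂}, a.1 ∈ runP n m J₁ J₂ :=
    fun a => (mem_AstarP_iff.mp a.2).1
  have hEv : ∀ a : {a : ℕ // a ∈ AstarP n m J₁ J₂}, Even (depthP n m J₁ J₂ a.1) :=
    fun a => (mem_AstarP_iff.mp a.2).2
  have hb : ∀ a : {a : ℕ // a ∈ AstarP n m J₁ J₂}, 1 ≤ a.1 ∧ a.1 ≤ n ∧ a.1 + m ≤ n + 1 :=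
    fun a => ⟨(mem_runP_iff.mp (hPm a)).1.1, (mem_runP_iff.mp (hPm a)).1.2,
      runP_add_le hm hJ₁ hJ₂ (hPm a)⟩
  let rowF : {a : ℕ // a ∈ AstarP n m J₁ J₂} → Fin (n + 1) := fun a =>
    ⟨if Finset.Ico a.1 (a.1 + m) ⊆ J₁ then a.1 - 1 else a.1 + m - 1,
      by have := hb a; split <;> omega⟩
  let colF : {a : ℕ // a ∈ AstarP n m J₁ J₂} → Fin (n + 1) := fun a =>
    ⟨if Finset.Ico a.1 (a.1 + m) ⊆ J₁ then a.1 + m - 1 else a.1 - 1,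
      by have := hb a; split <;> omega⟩
  let v : {a : ℕ // a ∈ AstarP n m J₁ J₂} → (Fin (n + 1) → ℂ) := fun a p => X p (colF a)
  let κ : {a : ℕ // a ∈ AstarP n m J₁ J₂} → ℕ := fun a =>
    if Finset.Ico a.1 (a.1 + m) ⊆ J₁ then 2 * n + 4 - a.1 else a.1
  have hrowv : ∀ a, ((rowF a : Fin (n+1)) : ℕ)
      = if Finset.Ico a.1 (a.1 + m) ⊆ J₁ then a.1 - 1 else a.1 + m - 1 := fun a => rfl
  have hcolv : ∀ a, ((colF a : Fin (n+1)) : ℕ)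
      = if Finset.Ico a.1 (a.1 + m) ⊆ J₁ then a.1 + m - 1 else a.1 - 1 := fun a => rfl
  have hκv : ∀ a, κ a = if Finset.Ico a.1 (a.1 + m) ⊆ J₁ then 2 * n + 4 - a.1 else a.1 :=
    fun a => rfl
  have hkill : ∀ a b : {a : ℕ // a ∈ AstarP n m J₁ J₂}, b.1 = a.1 + m → False := by
    intro a b hE
    have h1 : depthP n m J₁ J₂ (a.1 + m) = depthP n m J₁ J₂ a.1 + 1 :=
      depthP_succ hn hm (hPm a) (by rw [← hE]; exact hPm b)
    obtain ⟨x, hx⟩ := hEv a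
    obtain ⟨y, hy⟩ := hEv b
    rw [hE, h1] at hy
    omega
  have hdiag : ∀ b, v b (rowF b) = 1 := by
    intro b
    have hbb := hb b
    show X (rowF b) (colF b) = 1
    rw [hent (rowF b) (colF b), hrowv, hcolv]
    have e1 : b.1 - 1 + 1 = b.1 := by omega
    by_cases hτ : Finset.Ico b.1 (b.1 + m) ⊆ J₁
    · rw [if_pos hτ, if_pos hτ, e1, if_pos ⟨by omega, hτ⟩, if_neg (by rintro ⟨h, -⟩; omega)]
      norm_num
    · have hτ2 : Finset.Ico b.1 (b.1 + m) ⊆ J₂ :=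
        ((mem_runP_iff.mp (hPm b)).2).resolve_left hτ
      rw [if_neg hτ, if_neg hτ, e1, if_neg (by rintro ⟨h, -⟩; omega), if_pos ⟨by omega, hτ2⟩]
      norm_num
  have hoff : ∀ a b, a ≠ b → v a (rowF b) ≠ 0 → κ b < κ a := by
    intro a b hne hnz
    have hba := hb a
    have hbbb := hb b
    have hvab : v a (rowF b) = X (rowF b) (colF a) := rfl
    rw [hvab, hent (rowF b) (colF a)] at hnz
    have hcases : ((colF a : ℕ) = (rowF b : ℕ) + m ∧
        Finset.Ico ((rowF b : ℕ) + 1) ((rowF b : ℕ) + 1 + m) ⊆ J₁) ∨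
        ((rowF b : ℕ) = (colF a : ℕ) + m ∧
        Finset.Ico ((colF a : ℕ) + 1) ((colF a : ℕ) + 1 + m) ⊆ J₂) := by
      by_contra hcon
      rw [not_or] at hcon
      rw [if_neg hcon.1, if_neg hcon.2] at hnz
      simp at hnz
    rw [hrowv, hcolv] at hcases
    rw [hκv, hκv]
    by_cases hτa : Finset.Ico a.1 (a.1 + m) ⊆ J₁ <;>
      by_cases hτb : Finset.Ico b.1 (b.1 + m) ⊆ J₁
    · -- both τ1
      rw [if_pos hτa, if_pos hτb]
      rw [if_pos hτa, if_pos hτb] at hcases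
      rcases hcases with ⟨h1, h2⟩ | ⟨h1, h2⟩
      · -- a+m-1 = b-1+m : a = b, contradiction
        exfalso; exact hne (Subtype.ext (by omega))
      · -- b-1 = a+m-1+m : b = a + 2m
        omega
    · rw [if_pos hτa, if_neg hτb]
      rw [if_pos hτa, if_neg hτb] at hcases
      rcases hcases with ⟨h1, h2⟩ | ⟨h1, h2⟩
      · -- a+m-1 = b+m-1+m : a = b+m : kill
        exact absurd (show a.1 = b.1 + m by omega) (fun h => hkill b a h)
      · -- b+m-1 = a+m-1+m : b = a+m : kill
        exact absurd (show b.1 = a.1 + m by omega) (fun h => hkill a b h)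
    · rw [if_neg hτa, if_pos hτb]
      rw [if_neg hτa, if_pos hτb] at hcases
      rcases hcases with ⟨h1, h2⟩ | ⟨h1, h2⟩
      · -- a-1 = b-1+m : a = b+m : kill
        exact absurd (show a.1 = b.1 + m by omega) (fun h => hkill b a h)
      · -- b-1 = a-1+m : b = a+m : kill
        exact absurd (show b.1 = a.1 + m by omega) (fun h => hkill a b h)
    · rw [if_neg hτa, if_neg hτb]
      rw [if_neg hτa, if_neg hτb] at hcases
      rcases hcases with ⟨h1, h2⟩ | ⟨h1, h2⟩
      · -- a-1 = b+m-1+m : a = b+2m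
        omega
      · -- b+m-1 = a-1+m : b = a : contradiction
        exfalso; exact hne (Subtype.ext (by omega))
  have hind : LinearIndependent ℂ v := by
    rw [Fintype.linearIndependent_iff]
    intro g hg
    have key : ∀ t, ∀ b, 2 * n + 4 ≤ κ b + t → g b = 0 := by
      intro t
      induction t with
      | zero =>
        intro b hbk
        exfalso
        have := hb b
        rw [hκv] at hbk
        split at hbk <;> omega
      | succ t ih =>
        intro b hbk
        have h0 := congrFun hg (rowF b)
        rw [Finset.sum_apply] at h0
        simp only [Pi.smul_apply, smul_eq_mul] at h0
        rw [Finset.sum_eq_single b] at h0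
        · rw [hdiag b, mul_one] at h0
          exact h0
        · intro c _ hcb
          by_cases hz : v c (rowF b) = 0
          · rw [hz, mul_zero]
          · rw [ih c (by have := hoff c b hcb hz; omega), zero_mul]
        · intro hb'
          exact absurd (Finset.mem_univ b) hb'
    intro i
    exact key (2 * n + 4) i (by omega)
  have hmemr : ∀ a, v a ∈ LinearMap.range X.mulVecLin := by
    intro a
    refine ⟨Pi.single (colF a) 1, ?_⟩
    rw [Matrix.mulVecLin_apply, Matrix.mulVec_single_one]
    rfl
  have hspan : Submodule.span ℂ (Set.range v) ≤ LinearMap.range X.mulVecLin :=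
    Submodule.span_le.mpr (by rintro _ ⟨a, rfl⟩; exact hmemr a)
  calc (AstarP n m J₁ J₂).card
      = Fintype.card {a : ℕ // a ∈ AstarP n m J₁ J₂} := (Fintype.card_coe _).symm
    _ = Module.finrank ℂ (Submodule.span ℂ (Set.range v)) := (finrank_span_eq_card hind).symm
    _ ≤ Module.finrank ℂ (LinearMap.range X.mulVecLin) := Submodule.finrank_mono hspan
    _ = X.rank := rfl

end Rank

section RankUpper

lemma rank_upper (n m : ℕ) (hn : 1 ≤ n) (hm : 1 ≤ m) (J₁ J₂ : Finset ℕ)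
    (hJ₁ : J₁ ⊆ Finset.Icc 1 n) (hJ₂ : J₂ ⊆ Finset.Icc 1 n) (hdisj : Disjoint J₁ J₂)
    (hmax : ∀ k : ℕ, (∃ a : ℕ, 1 ≤ a ∧ a ≤ n ∧
      (Finset.Ico a (a + k) ⊆ J₁ ∨ Finset.Ico a (a + k) ⊆ J₂)) → k ≤ m) :
    (XA n J₁ J₂ ^ m).rank ≤ (AstarP n m J₁ J₂).card := by
  classical
  have hent := XA_pow_apply n J₁ J₂ hdisj m hm
  set X := XA n J₁ J₂ ^ m with hX
  have hPm : ∀ a : {a : ℕ // a ∈ AstarP n m J₁ J₂}, a.1 ∈ runP n m J₁ J₂ :=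
    fun a => (mem_AstarP_iff.mp a.2).1
  have hb : ∀ a : {a : ℕ // a ∈ AstarP n m J₁ J₂}, 1 ≤ a.1 ∧ a.1 ≤ n ∧ a.1 + m ≤ n + 1 :=
    fun a => ⟨(mem_runP_iff.mp (hPm a)).1.1, (mem_runP_iff.mp (hPm a)).1.2,
      runP_add_le hm hJ₁ hJ₂ (hPm a)⟩
  let colF : {a : ℕ // a ∈ AstarP n m J₁ J₂} → Fin (n + 1) := fun a =>
    ⟨if Finset.Ico a.1 (a.1 + m) ⊆ J₁ then a.1 + m - 1 else a.1 - 1,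
      by have := hb a; split <;> omega⟩
  let v : {a : ℕ // a ∈ AstarP n m J₁ J₂} → (Fin (n + 1) → ℂ) := fun a p => X p (colF a)
  let C : Finset (Fin (n + 1) → ℂ) := Finset.image v Finset.univ
  have hvC : ∀ a, v a ∈ Submodule.span ℂ (C : Set (Fin (n + 1) → ℂ)) := fun a =>
    Submodule.subset_span (Finset.mem_coe.mpr (Finset.mem_image_of_mem v (Finset.mem_univ a)))
  -- column of an even-depth τ2-run `b`: rows at `b - m` (if extension) and `b + m`
  have hvτ2 : ∀ (b : {a : ℕ // a ∈ AstarP n m J₁ J₂}),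
      Finset.Ico b.1 (b.1 + m) ⊆ J₂ → ∀ p : Fin (n + 1),
      v b p = (if ((p : ℕ) + 1 + m = b.1 ∧ m < b.1 ∧ b.1 - m ∈ runP n m J₁ J₂ ∧
                Finset.Ico (b.1 - m) (b.1 - m + m) ⊆ J₁) then 1 else 0)
            + (if ((p : ℕ) + 1 = b.1 + m) then 1 else 0) := by
    intro b hτ2 p
    have hbb := hb b
    have hτ1 : ¬ Finset.Ico b.1 (b.1 + m) ⊆ J₁ := fun h => not_both hm hdisj h hτ2
    have hcolb : ((colF b : Fin (n+1)) : ℕ) = b.1 - 1 := by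
      show (if Finset.Ico b.1 (b.1 + m) ⊆ J₁ then b.1 + m - 1 else b.1 - 1) = b.1 - 1
      rw [if_neg hτ1]
    show X p (colF b) = _
    rw [hent p (colF b), hcolb]
    congr 1
    · -- first component
      apply if_congr _ rfl rfl
      constructor
      · rintro ⟨h1, h2⟩
        have hp1 : (p : ℕ) + 1 = b.1 - m := by omega
        have hmem : (p : ℕ) + 1 ∈ runP n m J₁ J₂ := by
          rw [mem_runP_iff]
          exact ⟨⟨by omega, by omega⟩, Or.inl h2⟩
        refine ⟨by omega, by omega, by rwa [← hp1], ?_⟩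
        rw [← hp1]
        exact h2
      · rintro ⟨h1, h2, h3, h4⟩
        have hp1 : (p : ℕ) + 1 = b.1 - m := by omega
        refine ⟨by omega, ?_⟩
        rw [show (p : ℕ) + 1 + m = b.1 - m + m from by omega, hp1]
        exact h4
    · apply if_congr _ rfl rfl
      constructor
      · rintro ⟨h1, h2⟩; omega
      · intro h1
        refine ⟨by omega, ?_⟩
        rw [show b.1 - 1 + 1 = b.1 from by omega]
        exact hτ2
  -- telescoping: unit vectors at odd-depth τ1-runs are in the span
  have hTel : ∀ d x, x ∈ runP n m J₁ J₂ → Finset.Ico x (x + m) ⊆ J₁ →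
      depthP n m J₁ J₂ x = 2 * d + 1 → ∀ p0 : Fin (n + 1), (p0 : ℕ) + 1 = x →
      Pi.single p0 (1 : ℂ) ∈ Submodule.span ℂ (C : Set (Fin (n + 1) → ℂ)) := by
    intro d
    induction d with
    | zero =>
      intro x hx h1 hd p0 hp0
      have hpos : 0 < depthP n m J₁ J₂ x := by omega
      have hbP : x - m ∈ runP n m J₁ J₂ := (depthP_pos_iff hn).mp hpos
      have hb1 : 1 ≤ x - m ∧ x - m ≤ n := (mem_runP_iff.mp hbP).1
      have hbm : x - m + m = x := by omega
      have hstep : depthP n m J₁ J₂ x = depthP n m J₁ J₂ (x - m) + 1 := by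
        have := depthP_succ hn hm hbP (by rwa [hbm])
        rwa [hbm] at this
      have hτ2b : Finset.Ico (x - m) (x - m + m) ⊆ J₂ := by
        rcases (mem_runP_iff.mp hbP).2 with h | h
        · exfalso
          exact (abut_flip hm hmax hbP).1 ⟨h, by rwa [hbm]⟩
        · exact h
      have hAb : x - m ∈ AstarP n m J₁ J₂ :=
        mem_AstarP_iff.mpr ⟨hbP, ⟨0, by omega⟩⟩
      set b : {a : ℕ // a ∈ AstarP n m J₁ J₂} := ⟨x - m, hAb⟩ with hbdef
      have hbv : (b.1 : ℕ) = x - m := rfl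
      have hnoleft : ¬ (m < x - m ∧ x - m - m ∈ runP n m J₁ J₂) := by
        rintro ⟨h1', h2'⟩
        have : 0 < depthP n m J₁ J₂ (x - m) := (depthP_pos_iff hn).mpr h2'
        omega
      have hvb : ∀ p, v b p = if p = p0 then (1:ℂ) else 0 := by
        intro p
        rw [hvτ2 b hτ2b p,
          if_neg (by rintro ⟨e1, e2, e3, -⟩; exact hnoleft ⟨by omega, e3⟩), zero_add]
        exact if_congr
          (by rw [Fin.ext_iff]
              show (p : ℕ) + 1 = (x - m) + m ↔ (p : ℕ) = (p0 : ℕ)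
              omega) rfl rfl
      have : Pi.single p0 (1:ℂ) = v b := by
        funext p
        rw [hvb p, Pi.single_apply]
      rw [this]
      exact hvC b
    | succ d ih =>
      intro x hx h1 hd p0 hp0
      have hpos : 0 < depthP n m J₁ J₂ x := by omega
      have hbP : x - m ∈ runP n m J₁ J₂ := (depthP_pos_iff hn).mp hpos
      have hb1 : 1 ≤ x - m ∧ x - m ≤ n := (mem_runP_iff.mp hbP).1
      have hbm : x - m + m = x := by omega
      have hstep : depthP n m J₁ J₂ x = depthP n m J₁ J₂ (x - m) + 1 := by
        have := depthP_succ hn hm hbP (by rwa [hbm])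
        rwa [hbm] at this
      have hτ2b : Finset.Ico (x - m) (x - m + m) ⊆ J₂ := by
        rcases (mem_runP_iff.mp hbP).2 with h | h
        · exfalso
          exact (abut_flip hm hmax hbP).1 ⟨h, by rwa [hbm]⟩
        · exact h
      have hAb : x - m ∈ AstarP n m J₁ J₂ :=
        mem_AstarP_iff.mpr ⟨hbP, ⟨d + 1, by omega⟩⟩
      set b : {a : ℕ // a ∈ AstarP n m J₁ J₂} := ⟨x - m, hAb⟩ with hbdef
      have hbv : (b.1 : ℕ) = x - m := rfl
      -- depth (x - m) = 2d + 2 ≥ 1 so there is a left extension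
      have hpos2 : 0 < depthP n m J₁ J₂ (x - m) := by omega
      have hccP : x - m - m ∈ runP n m J₁ J₂ := (depthP_pos_iff hn).mp hpos2
      have hc1 : 1 ≤ x - m - m ∧ x - m - m ≤ n := (mem_runP_iff.mp hccP).1
      have hcm : x - m - m + m = x - m := by omega
      have hstep2 : depthP n m J₁ J₂ (x - m) = depthP n m J₁ J₂ (x - m - m) + 1 := by
        have := depthP_succ hn hm hccP (by rwa [hcm])
        rwa [hcm] at this
      have hτ1c : Finset.Ico (x - m - m) (x - m - m + m) ⊆ J₁ := by
        rcases (mem_runP_iff.mp hccP).2 with h | h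
        · exact h
        · exfalso
          exact (abut_flip hm hmax hccP).2 ⟨h, by rw [hcm]; exact hτ2b⟩
      set p1 : Fin (n + 1) := ⟨x - m - m - 1, by omega⟩ with hp1def
      have hp1v : (p1 : ℕ) + 1 = x - m - m := by
        show x - m - m - 1 + 1 = x - m - m
        omega
      have hmem1 := ih (x - m - m) hccP hτ1c (by omega) p1 hp1v
      have hvb : ∀ p, v b p = (if p = p1 then (1:ℂ) else 0) + (if p = p0 then (1:ℂ) else 0) := by
        intro p
        rw [hvτ2 b hτ2b p]
        congr 1
        · apply if_congr _ rfl rfl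
          rw [Fin.ext_iff]
          show ((p : ℕ) + 1 + m = x - m ∧ m < x - m ∧ x - m - m ∈ runP n m J₁ J₂ ∧
            Finset.Ico (x - m - m) (x - m - m + m) ⊆ J₁) ↔ (p : ℕ) = (p1 : ℕ)
          constructor
          · rintro ⟨e1, -, -, -⟩
            show (p : ℕ) = x - m - m - 1
            omega
          · intro e
            have : (p : ℕ) = x - m - m - 1 := e
            exact ⟨by omega, by omega, hccP, hτ1c⟩
        · apply if_congr _ rfl rfl
          rw [Fin.ext_iff]
          show (p : ℕ) + 1 = (x - m) + m ↔ (p : ℕ) = (p0 : ℕ)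
          omega
      have hsingle : Pi.single p0 (1:ℂ) = v b - Pi.single p1 (1:ℂ) := by
        funext p
        rw [Pi.sub_apply, hvb p, Pi.single_apply, Pi.single_apply]
        ring
      rw [hsingle]
      exact sub_mem (hvC b) hmem1
  -- every column is in the span of C
  have hcols : ∀ q : Fin (n + 1),
      (fun p => X p q) ∈ Submodule.span ℂ (C : Set (Fin (n + 1) → ℂ)) := by
    intro q
    by_cases hc1 : (q : ℕ) + 1 - m ∈ runP n m J₁ J₂ ∧ m < (q : ℕ) + 1 ∧
        Finset.Ico ((q : ℕ) + 1 - m) ((q : ℕ) + 1 - m + m) ⊆ J₁ ∧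
        Even (depthP n m J₁ J₂ ((q : ℕ) + 1 - m))
    · -- column of the τ1-run (q+1-m) ∈ A*
      obtain ⟨hP1, hlt1, hτ1, hev1⟩ := hc1
      have hA : (q : ℕ) + 1 - m ∈ AstarP n m J₁ J₂ := mem_AstarP_iff.mpr ⟨hP1, hev1⟩
      have hqn : (q : ℕ) ≤ n := by have := q.isLt; omega
      let a : {a : ℕ // a ∈ AstarP n m J₁ J₂} := ⟨(q : ℕ) + 1 - m, hA⟩
      have : colF a = q := by
        apply Fin.ext
        show (if Finset.Ico ((q : ℕ) + 1 - m) ((q : ℕ) + 1 - m + m) ⊆ J₁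
            then (q : ℕ) + 1 - m + m - 1 else (q : ℕ) + 1 - m - 1) = (q : ℕ)
        rw [if_pos hτ1]
        omega
      have hva : (fun p => X p q) = v a := by
        funext p
        show X p q = X p (colF a)
        rw [this]
      rw [hva]
      exact hvC a
    · by_cases hc2 : (q : ℕ) + 1 ∈ runP n m J₁ J₂ ∧
          ¬ Finset.Ico ((q : ℕ) + 1) ((q : ℕ) + 1 + m) ⊆ J₁ ∧
          Even (depthP n m J₁ J₂ ((q : ℕ) + 1))
      · obtain ⟨hP2, hτ2, hev2⟩ := hc2
        have hA : (q : ℕ) + 1 ∈ AstarP n m J₁ J₂ := mem_AstarP_iff.mpr ⟨hP2, hev2⟩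
        let a : {a : ℕ // a ∈ AstarP n m J₁ J₂} := ⟨(q : ℕ) + 1, hA⟩
        have : colF a = q := by
          apply Fin.ext
          show (if Finset.Ico ((q : ℕ) + 1) ((q : ℕ) + 1 + m) ⊆ J₁
              then (q : ℕ) + 1 + m - 1 else (q : ℕ) + 1 - 1) = (q : ℕ)
          rw [if_neg hτ2]
          omega
        have hva : (fun p => X p q) = v a := by
          funext p
          show X p q = X p (colF a)
          rw [this]
        rw [hva]
        exact hvC a
      · -- residual case : second entry-component vanishes
        have hif2 : ∀ p : Fin (n + 1),
            (if ((p : ℕ) = (q : ℕ) + m ∧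
              Finset.Ico ((q : ℕ) + 1) ((q : ℕ) + 1 + m) ⊆ J₂) then (1:ℂ) else 0) = 0 := by
          intro p
          rw [if_neg]
          rintro ⟨e1, e2⟩
          have hqP : (q : ℕ) + 1 ∈ runP n m J₁ J₂ := by
            rw [mem_runP_iff]
            have := p.isLt
            exact ⟨⟨by omega, by omega⟩, Or.inr e2⟩
          have hnτ1 : ¬ Finset.Ico ((q : ℕ) + 1) ((q : ℕ) + 1 + m) ⊆ J₁ :=
            fun h => not_both hm hdisj h e2
          have hodd : ¬ Even (depthP n m J₁ J₂ ((q : ℕ) + 1)) :=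
            fun he => hc2 ⟨hqP, hnτ1, he⟩
          have hpos : 0 < depthP n m J₁ J₂ ((q : ℕ) + 1) := by
            rcases Nat.even_or_odd (depthP n m J₁ J₂ ((q : ℕ) + 1)) with h | h
            · exact absurd h hodd
            · obtain ⟨t, ht⟩ := h
              omega
          have hsm : (q : ℕ) + 1 - m ∈ runP n m J₁ J₂ := (depthP_pos_iff hn).mp hpos
          have hb1 : 1 ≤ (q : ℕ) + 1 - m := (mem_runP_iff.mp hsm).1.1
          have hbm : (q : ℕ) + 1 - m + m = (q : ℕ) + 1 := by omega
          have hstep : depthP n m J₁ J₂ ((q : ℕ) + 1)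
              = depthP n m J₁ J₂ ((q : ℕ) + 1 - m) + 1 := by
            have := depthP_succ hn hm hsm (by rwa [hbm])
            rwa [hbm] at this
          have hτ1sm : Finset.Ico ((q : ℕ) + 1 - m) ((q : ℕ) + 1 - m + m) ⊆ J₁ := by
            rcases (mem_runP_iff.mp hsm).2 with h | h
            · exact h
            · exfalso
              exact (abut_flip hm hmax hsm).2 ⟨h, by rw [hbm]; exact e2⟩
          have hev : Even (depthP n m J₁ J₂ ((q : ℕ) + 1 - m)) := by
            rcases Nat.even_or_odd (depthP n m J₁ J₂ ((q : ℕ) + 1 - m)) with h | h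
            · exact h
            · exfalso
              apply hodd
              obtain ⟨t, ht⟩ := h
              exact ⟨t + 1, by omega⟩
          exact hc1 ⟨hsm, by omega, hτ1sm, hev⟩
        by_cases hc3 : (q : ℕ) + 1 - m ∈ runP n m J₁ J₂ ∧ m < (q : ℕ) + 1 ∧
            Finset.Ico ((q : ℕ) + 1 - m) ((q : ℕ) + 1 - m + m) ⊆ J₁
        · -- single unit column, odd depth
          obtain ⟨hP3, hlt3, hτ3⟩ := hc3
          have hodd3 : ¬ Even (depthP n m J₁ J₂ ((q : ℕ) + 1 - m)) :=
            fun he => hc1 ⟨hP3, hlt3, hτ3, he⟩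
          obtain ⟨d, hd⟩ : ∃ d, depthP n m J₁ J₂ ((q : ℕ) + 1 - m) = 2 * d + 1 := by
            rcases Nat.even_or_odd (depthP n m J₁ J₂ ((q : ℕ) + 1 - m)) with h | h
            · exact absurd h hodd3
            · obtain ⟨t, ht⟩ := h
              exact ⟨t, by omega⟩
          have hq1 : 1 ≤ (q : ℕ) + 1 - m := (mem_runP_iff.mp hP3).1.1
          set p0 : Fin (n + 1) := ⟨(q : ℕ) + 1 - m - 1, by omega⟩ with hp0def
          have hp0v : (p0 : ℕ) + 1 = (q : ℕ) + 1 - m := by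
            show (q : ℕ) + 1 - m - 1 + 1 = (q : ℕ) + 1 - m
            omega
          have hmem := hTel d ((q : ℕ) + 1 - m) hP3 hτ3 hd p0 hp0v
          have hcol : (fun p => X p q) = Pi.single p0 (1:ℂ) := by
            funext p
            rw [hent p q, hif2 p, add_zero, Pi.single_apply]
            apply if_congr _ rfl rfl
            rw [Fin.ext_iff]
            constructor
            · rintro ⟨e1, -⟩
              show (p : ℕ) = (q : ℕ) + 1 - m - 1
              omega
            · intro e
              have he : (p : ℕ) = (q : ℕ) + 1 - m - 1 := e
              refine ⟨by omega, ?_⟩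
              rw [show (p : ℕ) + 1 = (q : ℕ) + 1 - m from by omega]
              exact hτ3
          rw [hcol]
          exact hmem
        · -- zero column
          have hcol : (fun p => X p q) = (0 : Fin (n + 1) → ℂ) := by
            funext p
            rw [hent p q, hif2 p, add_zero]
            rw [if_neg]
            · rfl
            · rintro ⟨e1, e2⟩
              apply hc3
              have hp1 : (p : ℕ) + 1 = (q : ℕ) + 1 - m := by omega
              have hmem : (p : ℕ) + 1 ∈ runP n m J₁ J₂ := by
                rw [mem_runP_iff]
                have := q.isLt
                exact ⟨⟨by omega, by omega⟩, Or.inl e2⟩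
              refine ⟨by rwa [← hp1], by omega, ?_⟩
              rw [← hp1]
              exact e2
          rw [hcol]
          exact Submodule.zero_mem _
  -- conclude
  rw [Matrix.rank_eq_finrank_span_cols]
  have hsub : Submodule.span ℂ (Set.range Xᵀ) ≤ Submodule.span ℂ (C : Set (Fin (n + 1) → ℂ)) := by
    rw [Submodule.span_le]
    rintro _ ⟨q, rfl⟩
    exact hcols q
  calc Module.finrank ℂ (Submodule.span ℂ (Set.range Xᵀ))
      ≤ Module.finrank ℂ (Submodule.span ℂ (C : Set (Fin (n + 1) → ℂ))) :=
        Submodule.finrank_mono hsub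
    _ ≤ C.card := finrank_span_finset_le_card C
    _ ≤ (AstarP n m J₁ J₂).card := by
        refine Finset.card_image_le.trans ?_
        rw [Finset.card_univ, Fintype.card_coe]

end RankUpper

/-- If `J₁ ∪ J₂ ≠ ∅` and `m ≥ 1` is the largest `k` such that some `k` consecutive
integers all lie in `J₁` or all lie in `J₂`, then the rank of `X(J₁,J₂)^m` is the
maximum cardinality of a family of pairwise disjoint subsets of `{1,…,n+1}`, each of
the form `{a,…,a+m}` with `{a,…,a+m-1} ⊆ J₁` or `{a,…,a+m-1} ⊆ J₂`.  (A family of such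
intervals is encoded by the finite set `A` of its starting points.) -/
theorem stmt11 (n : ℕ) (hn : 1 ≤ n) (J₁ J₂ : Finset ℕ)
    (hJ₁ : J₁ ⊆ Finset.Icc 1 n) (hJ₂ : J₂ ⊆ Finset.Icc 1 n) (hdisj : Disjoint J₁ J₂)
    (hne : (J₁ ∪ J₂).Nonempty) (m : ℕ) (hm : 1 ≤ m)
    (hex : ∃ a : ℕ, 1 ≤ a ∧ a ≤ n ∧
      (Finset.Ico a (a + m) ⊆ J₁ ∨ Finset.Ico a (a + m) ⊆ J₂))
    (hmax : ∀ k : ℕ, (∃ a : ℕ, 1 ≤ a ∧ a ≤ n ∧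
      (Finset.Ico a (a + k) ⊆ J₁ ∨ Finset.Ico a (a + k) ⊆ J₂)) → k ≤ m) :
    IsGreatest
      {c : ℕ | ∃ A : Finset ℕ,
        (∀ a ∈ A, 1 ≤ a ∧ a + m ≤ n + 1 ∧
          (Finset.Ico a (a + m) ⊆ J₁ ∨ Finset.Ico a (a + m) ⊆ J₂)) ∧
        (∀ a ∈ A, ∀ b ∈ A, a ≠ b →
          Disjoint (Finset.Icc a (a + m)) (Finset.Icc b (b + m))) ∧
        A.card = c}
      ((XA n J₁ J₂ ^ m).rank) := by
  classical
  have hrank : (XA n J₁ J₂ ^ m).rank = (AstarP n m J₁ J₂).card :=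
    le_antisymm (rank_upper n m hn hm J₁ J₂ hJ₁ hJ₂ hdisj hmax)
      (rank_lower n m hn hm J₁ J₂ hJ₁ hJ₂ hdisj hmax)
  have hkill : ∀ a b : ℕ, a ∈ AstarP n m J₁ J₂ → b ∈ AstarP n m J₁ J₂ →
      b = a + m → False := by
    intro a b ha hb hE
    have h1 : depthP n m J₁ J₂ (a + m) = depthP n m J₁ J₂ a + 1 :=
      depthP_succ hn hm (mem_AstarP_iff.mp ha).1 (by rw [← hE]; exact (mem_AstarP_iff.mp hb).1)
    obtain ⟨x, hx⟩ := (mem_AstarP_iff.mp ha).2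
    obtain ⟨y, hy⟩ := (mem_AstarP_iff.mp hb).2
    rw [hE, h1] at hy
    omega
  constructor
  · -- membership : A* realizes the rank
    refine ⟨AstarP n m J₁ J₂, ?_, ?_, hrank.symm⟩
    · intro a ha
      have hp := (mem_AstarP_iff.mp ha).1
      have h1 := (mem_runP_iff.mp hp).1
      exact ⟨h1.1, runP_add_le hm hJ₁ hJ₂ hp, (mem_runP_iff.mp hp).2⟩
    · intro a ha b hb hab
      have key : ∀ x y : ℕ, x ∈ AstarP n m J₁ J₂ → y ∈ AstarP n m J₁ J₂ → x < y →
          x + m + 1 ≤ y := by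
        intro x y hx hy hlt
        have hg := gap hm hdisj hmax (mem_AstarP_iff.mp hx).1 (mem_AstarP_iff.mp hy).1 hlt
        rcases Nat.eq_or_lt_of_le hg with h | h
        · exact absurd h.symm (fun hE => hkill x y hx hy hE)
        · omega
      rcases lt_trichotomy a b with h | h | h
      · have := key a b ha hb h
        rw [Finset.disjoint_left]
        intro x hx hx2
        rw [Finset.mem_Icc] at hx hx2
        omega
      · exact absurd h hab
      · have := key b a hb ha h
        rw [Finset.disjoint_left]
        intro x hx hx2
        rw [Finset.mem_Icc] at hx hx2
        omega
  · -- upper bound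
    rintro c ⟨A, h1, h2, rfl⟩
    rw [hrank]
    apply Finset.card_le_card_of_injOn
      (fun a => if Even (depthP n m J₁ J₂ a) then a else a - m)
    · intro a ha
      have haP : a ∈ runP n m J₁ J₂ := by
        rw [mem_runP_iff]
        obtain ⟨e1, e2, e3⟩ := h1 a ha
        exact ⟨⟨e1, by omega⟩, e3⟩
      by_cases he : Even (depthP n m J₁ J₂ a)
      · simp only [if_pos he]
        exact mem_AstarP_iff.mpr ⟨haP, he⟩
      · simp only [if_neg he]
        have hpos : 0 < depthP n m J₁ J₂ a := by
          rcases Nat.even_or_odd (depthP n m J₁ J₂ a) with h | h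
          · exact absurd h he
          · obtain ⟨t, ht⟩ := h
            omega
        have hsm : a - m ∈ runP n m J₁ J₂ := (depthP_pos_iff hn).mp hpos
        have hb1 : 1 ≤ a - m := (mem_runP_iff.mp hsm).1.1
        have hbm : a - m + m = a := by omega
        have hstep : depthP n m J₁ J₂ a = depthP n m J₁ J₂ (a - m) + 1 := by
          have := depthP_succ hn hm hsm (by rwa [hbm])
          rwa [hbm] at this
        refine mem_AstarP_iff.mpr ⟨hsm, ?_⟩
        rcases Nat.even_or_odd (depthP n m J₁ J₂ (a - m)) with h | h
        · exact h
        · exfalso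
          apply he
          obtain ⟨t, ht⟩ := h
          exact ⟨t + 1, by omega⟩
    · intro a ha b hb hfe
      by_contra hne2
      have hsep : ∀ x y : ℕ, x ∈ A → y ∈ A → x < y → x + m < y := by
        intro x y hx hy hlt
        have hd := h2 x hx y hy (by omega)
        by_contra hc
        push_neg at hc
        have hx1 : y ∈ Finset.Icc x (x + m) := Finset.mem_Icc.mpr ⟨by omega, by omega⟩
        have hx2 : y ∈ Finset.Icc y (y + m) := Finset.mem_Icc.mpr ⟨le_refl y, by omega⟩
        exact (Finset.disjoint_left.mp hd hx1) hx2
      have hva : (if Even (depthP n m J₁ J₂ a) then a else a - m) ≤ a := by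
        split <;> omega
      have hva2 : a ≤ (if Even (depthP n m J₁ J₂ a) then a else a - m) + m := by
        split <;> omega
      have hvb : (if Even (depthP n m J₁ J₂ b) then b else b - m) ≤ b := by
        split <;> omega
      have hvb2 : b ≤ (if Even (depthP n m J₁ J₂ b) then b else b - m) + m := by
        split <;> omega
      have hfe' : (if Even (depthP n m J₁ J₂ a) then a else a - m)
          = (if Even (depthP n m J₁ J₂ b) then b else b - m) := hfe
      rcases lt_trichotomy a b with h | h | h
      · have := hsep a b ha hb h
        omega
      · exact hne2 h
      · have := hsep b a hb ha h
        omega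
end

section
/- Let n ≥ 4. Define 2n×2n complex matrices X_i := E_{i,i+1} − E_{n+i+1,n+i} for 1 ≤ i ≤ n−1, X_n := E_{n−1,2n} − E_{n,2n−1}, and Y_i := (X_i)ᵀ for 1 ≤ i ≤ n. Then for any disjoint subsets J_1, J_2 of {1,…,n}, the matrix X^D(J_1,J_2) := ∑_{i∈J_1} X_i + ∑_{i∈J_2} Y_i is nilpotent. -/
open Matrix BigOperators

/-- The `2n × 2n` complex matrix with entry `1` in (1-based) position `(a, b)`
and `0` elsewhere. -/
noncomputable def ED (n a b : ℕ) : Matrix (Fin (2 * n)) (Fin (2 * n)) ℂ :=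
  Matrix.of fun p q => if (p : ℕ) + 1 = a ∧ (q : ℕ) + 1 = b then 1 else 0

/-- The simple root vectors of type `Dₙ` in `so_{2n}`:
`Xᵢ = E_{i,i+1} − E_{n+i+1,n+i}` for `1 ≤ i ≤ n−1` and `Xₙ = E_{n−1,2n} − E_{n,2n−1}`. -/
noncomputable def XD (n i : ℕ) : Matrix (Fin (2 * n)) (Fin (2 * n)) ℂ :=
  if i = n then ED n (n - 1) (2 * n) - ED n n (2 * n - 1)
  else ED n i (i + 1) - ED n (n + i + 1) (n + i)

/-- Sign data: `2` on `J₁`, `-2` on `J₂`, `0` elsewhere. -/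
def sigD (J₁ J₂ : Finset ℕ) (i : ℕ) : ℤ :=
  if i ∈ J₁ then 2 else if i ∈ J₂ then -2 else 0

/-- The (doubled) weight of the `i`-th basis vector. -/
def hwD (J₁ J₂ : Finset ℕ) (n i : ℕ) : ℤ :=
  sigD J₁ J₂ n - sigD J₁ J₂ (n - 1) + 2 * ∑ j ∈ Finset.Ico i n, sigD J₁ J₂ j

/-- The weight function on indices of `Fin (2n)`. -/
def FwD (J₁ J₂ : Finset ℕ) (n : ℕ) (p : Fin (2 * n)) : ℤ :=
  if (p : ℕ) < n then hwD J₁ J₂ n ((p : ℕ) + 1) else - hwD J₁ J₂ n ((p : ℕ) + 1 - n)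

lemma sigD_abs_le (J₁ J₂ : Finset ℕ) (i : ℕ) : |sigD J₁ J₂ i| ≤ 2 := by
  unfold sigD; split_ifs <;> norm_num

lemma hwD_step (J₁ J₂ : Finset ℕ) (n i : ℕ) (h : i < n) :
    hwD J₁ J₂ n i = hwD J₁ J₂ n (i + 1) + 2 * sigD J₁ J₂ i := by
  unfold hwD
  rw [Finset.sum_eq_sum_Ico_succ_bot h]
  ring

lemma hwD_top (J₁ J₂ : Finset ℕ) (n : ℕ) (hn : 2 ≤ n) :
    hwD J₁ J₂ n (n - 1) + hwD J₁ J₂ n n = 2 * sigD J₁ J₂ n := by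
  have h1 : n - 1 < n := by omega
  have := hwD_step J₁ J₂ n (n - 1) h1
  have h2 : n - 1 + 1 = n := by omega
  rw [h2] at this
  have h3 : hwD J₁ J₂ n n = sigD J₁ J₂ n - sigD J₁ J₂ (n - 1) := by
    unfold hwD; simp
  rw [this, h3]
  ring

lemma hwD_abs_le (J₁ J₂ : Finset ℕ) (n i : ℕ) :
    |hwD J₁ J₂ n i| ≤ 4 + 4 * n := by
  unfold hwD
  have hsum : |∑ j ∈ Finset.Ico i n, sigD J₁ J₂ j| ≤ 2 * n := by
    calc |∑ j ∈ Finset.Ico i n, sigD J₁ J₂ j|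
        ≤ ∑ j ∈ Finset.Ico i n, |sigD J₁ J₂ j| := Finset.abs_sum_le_sum_abs _ _
      _ ≤ ∑ _j ∈ Finset.Ico i n, (2 : ℤ) := Finset.sum_le_sum fun j _ => sigD_abs_le J₁ J₂ j
      _ = 2 * (Finset.Ico i n).card := by rw [Finset.sum_const]; ring
      _ ≤ 2 * n := by
          have : (Finset.Ico i n).card ≤ n := by
            rw [Nat.card_Ico]; omega
          exact_mod_cast Nat.mul_le_mul_left 2 this
  have h1 := sigD_abs_le J₁ J₂ n
  have h2 := sigD_abs_le J₁ J₂ (n - 1)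
  have := abs_add_le (sigD J₁ J₂ n - sigD J₁ J₂ (n - 1)) (2 * ∑ j ∈ Finset.Ico i n, sigD J₁ J₂ j)
  have hsub := abs_sub (sigD J₁ J₂ n) (sigD J₁ J₂ (n - 1))
  have habs2 : |2 * ∑ j ∈ Finset.Ico i n, sigD J₁ J₂ j| = 2 * |∑ j ∈ Finset.Ico i n, sigD J₁ J₂ j| := by
    rw [abs_mul]; norm_num
  rw [habs2] at this
  linarith

lemma FwD_abs_le (J₁ J₂ : Finset ℕ) (n : ℕ) (p : Fin (2 * n)) :
    |FwD J₁ J₂ n p| ≤ 4 + 4 * n := by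
  unfold FwD
  split_ifs
  · exact hwD_abs_le _ _ _ _
  · rw [abs_neg]; exact hwD_abs_le _ _ _ _

lemma XD_ne_zero (n i : ℕ) (hi1 : 1 ≤ i) (hin : i ≤ n) (hn : 4 ≤ n) (p q : Fin (2 * n))
    (h : XD n i p q ≠ 0) :
    (i ≠ n ∧ (((p : ℕ) + 1 = i ∧ (q : ℕ) + 1 = i + 1) ∨
      ((p : ℕ) + 1 = n + i + 1 ∧ (q : ℕ) + 1 = n + i))) ∨
    (i = n ∧ (((p : ℕ) + 1 = n - 1 ∧ (q : ℕ) + 1 = 2 * n) ∨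
      ((p : ℕ) + 1 = n ∧ (q : ℕ) + 1 = 2 * n - 1))) := by
  by_cases hi : i = n
  · right
    refine ⟨hi, ?_⟩
    rw [XD, if_pos hi] at h
    simp only [Matrix.sub_apply, ED, Matrix.of_apply] at h
    split_ifs at h with h1 h2 h2
    · omega
    · exact Or.inl h1
    · exact Or.inr h2
    · simp at h
  · left
    refine ⟨hi, ?_⟩
    rw [XD, if_neg hi] at h
    simp only [Matrix.sub_apply, ED, Matrix.of_apply] at h
    split_ifs at h with h1 h2 h2
    · omega
    · exact Or.inl h1
    · exact Or.inr h2
    · simp at h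

/-- key entry lemma: every nonzero entry of the matrix raises the weight by 4. -/
lemma key_entry (n : ℕ) (hn : 4 ≤ n) (J₁ J₂ : Finset ℕ)
    (hJ₁ : J₁ ⊆ Finset.Icc 1 n) (hJ₂ : J₂ ⊆ Finset.Icc 1 n) (hdisj : Disjoint J₁ J₂)
    (p q : Fin (2 * n))
    (h : (∑ i ∈ J₁, XD n i + ∑ i ∈ J₂, (XD n i)ᵀ) p q ≠ 0) :
    FwD J₁ J₂ n p = FwD J₁ J₂ n q + 4 := by
  have hp2 := p.isLt
  have hq2 := q.isLt
  have hcase : (∃ i ∈ J₁, XD n i p q ≠ 0) ∨ (∃ i ∈ J₂, XD n i q p ≠ 0) := by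
    rw [Matrix.add_apply, Matrix.sum_apply, Matrix.sum_apply] at h
    by_contra hc
    push_neg at hc
    apply h
    rw [Finset.sum_eq_zero hc.1, Finset.sum_eq_zero (fun i hi => ?_), add_zero]
    rw [Matrix.transpose_apply]
    exact hc.2 i hi
  rcases hcase with ⟨i, hiJ, hne⟩ | ⟨i, hiJ, hne⟩
  · -- i ∈ J₁
    have hmem := Finset.mem_Icc.mp (hJ₁ hiJ)
    have hsig : sigD J₁ J₂ i = 2 := by simp [sigD, hiJ]
    rcases XD_ne_zero n i hmem.1 hmem.2 hn p q hne with ⟨hin, hA | hB⟩ | ⟨hin, hA | hB⟩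
    · have hi_lt : i < n := lt_of_le_of_ne hmem.2 hin
      have hstep := hwD_step J₁ J₂ n i hi_lt
      have hp : (p : ℕ) < n := by omega
      have hq : (q : ℕ) < n := by omega
      unfold FwD
      rw [if_pos hp, if_pos hq, hA.1, hA.2, hstep, hsig]
      ring
    · have hi_lt : i < n := lt_of_le_of_ne hmem.2 hin
      have hstep := hwD_step J₁ J₂ n i hi_lt
      have hp : ¬ ((p : ℕ) < n) := by omega
      have hq : ¬ ((q : ℕ) < n) := by omega
      have e1 : (p : ℕ) + 1 - n = i + 1 := by omega
      have e2 : (q : ℕ) + 1 - n = i := by omega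
      unfold FwD
      rw [if_neg hp, if_neg hq, e1, e2]
      rw [hsig] at hstep
      linarith
    · have htop := hwD_top J₁ J₂ n (by omega)
      rw [hin] at hsig
      rw [hsig] at htop
      have hp : (p : ℕ) < n := by omega
      have hq : ¬ ((q : ℕ) < n) := by omega
      have e2 : (q : ℕ) + 1 - n = n := by omega
      unfold FwD
      rw [if_pos hp, if_neg hq, hA.1, e2]
      linarith
    · have htop := hwD_top J₁ J₂ n (by omega)
      rw [hin] at hsig
      rw [hsig] at htop
      have hp : (p : ℕ) < n := by omega
      have hq : ¬ ((q : ℕ) < n) := by omega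
      have e2 : (q : ℕ) + 1 - n = n - 1 := by omega
      unfold FwD
      rw [if_pos hp, if_neg hq, hB.1, e2]
      linarith
  · -- i ∈ J₂
    have hmem := Finset.mem_Icc.mp (hJ₂ hiJ)
    have hni : i ∉ J₁ := Finset.disjoint_right.mp hdisj hiJ
    have hsig : sigD J₁ J₂ i = -2 := by simp [sigD, hni, hiJ]
    rcases XD_ne_zero n i hmem.1 hmem.2 hn q p hne with ⟨hin, hA | hB⟩ | ⟨hin, hA | hB⟩
    · have hi_lt : i < n := lt_of_le_of_ne hmem.2 hin
      have hstep := hwD_step J₁ J₂ n i hi_lt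
      have hp : (p : ℕ) < n := by omega
      have hq : (q : ℕ) < n := by omega
      unfold FwD
      rw [if_pos hp, if_pos hq, hA.1, hA.2, hstep, hsig]
      ring
    · have hi_lt : i < n := lt_of_le_of_ne hmem.2 hin
      have hstep := hwD_step J₁ J₂ n i hi_lt
      have hp : ¬ ((p : ℕ) < n) := by omega
      have hq : ¬ ((q : ℕ) < n) := by omega
      have e1 : (p : ℕ) + 1 - n = i := by omega
      have e2 : (q : ℕ) + 1 - n = i + 1 := by omega
      unfold FwD
      rw [if_neg hp, if_neg hq, e1, e2]
      rw [hsig] at hstep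
      linarith
    · have htop := hwD_top J₁ J₂ n (by omega)
      rw [hin] at hsig
      rw [hsig] at htop
      have hp : ¬ ((p : ℕ) < n) := by omega
      have hq : (q : ℕ) < n := by omega
      have e1 : (p : ℕ) + 1 - n = n := by omega
      unfold FwD
      rw [if_neg hp, if_pos hq, hA.1, e1]
      linarith
    · have htop := hwD_top J₁ J₂ n (by omega)
      rw [hin] at hsig
      rw [hsig] at htop
      have hp : ¬ ((p : ℕ) < n) := by omega
      have hq : (q : ℕ) < n := by omega
      have e1 : (p : ℕ) + 1 - n = n - 1 := by omega
      unfold FwD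
      rw [if_neg hp, if_pos hq, hB.1, e1]
      linarith

lemma key_pow (n : ℕ) (hn : 4 ≤ n) (J₁ J₂ : Finset ℕ)
    (hJ₁ : J₁ ⊆ Finset.Icc 1 n) (hJ₂ : J₂ ⊆ Finset.Icc 1 n) (hdisj : Disjoint J₁ J₂) :
    ∀ (k : ℕ) (p q : Fin (2 * n)),
      ((∑ i ∈ J₁, XD n i + ∑ i ∈ J₂, (XD n i)ᵀ) ^ k) p q ≠ 0 →
      FwD J₁ J₂ n p = FwD J₁ J₂ n q + 4 * (k : ℤ) := by
  intro k
  induction k with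
  | zero =>
    intro p q h
    rw [pow_zero, Matrix.one_apply] at h
    split_ifs at h with hpq
    · rw [hpq]; push_cast; ring
    · simp at h
  | succ k ih =>
    intro p q h
    rw [pow_succ, Matrix.mul_apply] at h
    obtain ⟨r, _, hr⟩ := Finset.exists_ne_zero_of_sum_ne_zero h
    have h1 := ih p r (left_ne_zero_of_mul hr)
    have h2 := key_entry n hn J₁ J₂ hJ₁ hJ₂ hdisj r q (right_ne_zero_of_mul hr)
    push_cast
    push_cast at h1
    linarith

/-- For disjoint `J₁, J₂ ⊆ {1,…,n}`, the matrix
`X^D(J₁,J₂) = ∑_{i∈J₁} Xᵢ + ∑_{i∈J₂} Xᵢᵀ` is nilpotent. -/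
theorem stmt12 (n : ℕ) (hn : 4 ≤ n) (J₁ J₂ : Finset ℕ)
    (hJ₁ : J₁ ⊆ Finset.Icc 1 n) (hJ₂ : J₂ ⊆ Finset.Icc 1 n) (hdisj : Disjoint J₁ J₂) :
    IsNilpotent (∑ i ∈ J₁, XD n i + ∑ i ∈ J₂, (XD n i)ᵀ) := by
  refine ⟨2 * n + 3, ?_⟩
  ext p q
  rw [Matrix.zero_apply]
  by_contra hne
  have hk := key_pow n hn J₁ J₂ hJ₁ hJ₂ hdisj (2 * n + 3) p q hne
  have hb1 := FwD_abs_le J₁ J₂ n p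
  have hb2 := FwD_abs_le J₁ J₂ n q
  rw [abs_le] at hb1 hb2
  push_cast at hk
  linarith
end

section
/- Let n ≥ 4, and define 2n×2n complex matrices X_i := E_{i,i+1} − E_{n+i+1,n+i} for 1 ≤ i ≤ n−1, X_n := E_{n−1,2n} − E_{n,2n−1}, Y_i := (X_i)ᵀ, and let S be the 2n×2n matrix with S_{a,b} = 1 if |a−b| = n and 0 otherwise. Let J_1, J_2 be disjoint subsets of {1,…,n} and let a_i (i ∈ J_1) and b_i (i ∈ J_2) be nonzero complex numbers. Then there exists an invertible 2n×2n complex matrix g with gᵀ S g = S such that g (∑_{i∈J_1} a_i X_i + ∑_{i∈J_2} b_i Y_i) g^{-1} = ∑_{i∈J_1} X_i + ∑_{i∈J_2} Y_i. -/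
open Matrix BigOperators

/-- The symmetric bilinear form defining `so_{2n}`: `S_{a,b} = 1` iff `|a − b| = n`
(1-based indices `a = p + 1`, `b = q + 1`). -/
noncomputable def SD (n : ℕ) : Matrix (Fin (2 * n)) (Fin (2 * n)) ℂ :=
  Matrix.of fun p q =>
    if (p : ℕ) + 1 + n = (q : ℕ) + 1 ∨ (q : ℕ) + 1 + n = (p : ℕ) + 1 then 1 else 0

/-- For disjoint `J₁, J₂ ⊆ {1,…,n}` and nonzero coefficients, the matrix
`∑_{i∈J₁} aᵢ Xᵢ + ∑_{i∈J₂} bᵢ Yᵢ` is conjugate, by an element `g` of the orthogonal group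
of `S` (i.e. `gᵀ S g = S`), to `∑_{i∈J₁} Xᵢ + ∑_{i∈J₂} Yᵢ`, where `Yᵢ = Xᵢᵀ`. -/
theorem stmt13 (n : ℕ) (hn : 4 ≤ n) (J₁ J₂ : Finset ℕ)
    (hJ₁ : J₁ ⊆ Finset.Icc 1 n) (hJ₂ : J₂ ⊆ Finset.Icc 1 n) (hdisj : Disjoint J₁ J₂)
    (a b : ℕ → ℂ) (ha : ∀ i ∈ J₁, a i ≠ 0) (hb : ∀ i ∈ J₂, b i ≠ 0) :
    ∃ g : (Matrix (Fin (2 * n)) (Fin (2 * n)) ℂ)ˣ,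
      (g : Matrix (Fin (2 * n)) (Fin (2 * n)) ℂ)ᵀ * SD n *
          (g : Matrix (Fin (2 * n)) (Fin (2 * n)) ℂ) = SD n ∧
      (g : Matrix (Fin (2 * n)) (Fin (2 * n)) ℂ) *
          (∑ i ∈ J₁, a i • XD n i + ∑ i ∈ J₂, b i • (XD n i)ᵀ) *
          ((g⁻¹ : (Matrix (Fin (2 * n)) (Fin (2 * n)) ℂ)ˣ) :
            Matrix (Fin (2 * n)) (Fin (2 * n)) ℂ)
        = ∑ i ∈ J₁, XD n i + ∑ i ∈ J₂, (XD n i)ᵀ := by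
  classical
  -- target scaling factors
  set c : ℕ → ℂ := fun i => if i ∈ J₁ then (a i)⁻¹ else if i ∈ J₂ then b i else 1 with hc
  have hc0 : ∀ i, c i ≠ 0 := by
    intro i
    simp only [hc]
    split_ifs with h1 h2
    · exact inv_ne_zero (ha i h1)
    · exact hb i h2
    · exact one_ne_zero
  obtain ⟨s, hs⟩ : ∃ s : ℂ, s ^ 2 = c (n - 1) * c n :=
    IsAlgClosed.exists_pow_nat_eq (c (n - 1) * c n) (by norm_num)
  have hs0 : s ≠ 0 := by
    intro h
    rw [h] at hs
    exact mul_ne_zero (hc0 (n - 1)) (hc0 n) (by rw [← hs]; ring)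
  -- the torus coordinates
  set t : ℕ → ℂ := fun i =>
    if i = n then s / c (n - 1) else s * ∏ j ∈ Finset.Ico i (n - 1), c j with ht
  have ht0 : ∀ i, t i ≠ 0 := by
    intro i
    simp only [ht]
    split_ifs with h
    · exact div_ne_zero hs0 (hc0 (n - 1))
    · exact mul_ne_zero hs0 (Finset.prod_ne_zero_iff.mpr fun j _ => hc0 j)
  have htn : t n = s / c (n - 1) := by simp only [ht]; simp
  have htn1 : t (n - 1) = s := by
    simp only [ht]
    rw [if_neg (by omega), Finset.Ico_self, Finset.prod_empty, mul_one]
  have hstep' : ∀ i, i + 1 ≤ n → t i = c i * t (i + 1) := by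
    intro i hi
    rcases eq_or_lt_of_le hi with h | h
    · rw [show i = n - 1 from by omega, show n - 1 + 1 = n from by omega, htn, htn1,
        mul_div_assoc', mul_comm (c (n - 1)) s, mul_div_assoc, div_self (hc0 (n - 1)), mul_one]
    · simp only [ht]
      rw [if_neg (by omega), if_neg (by omega),
        Finset.prod_eq_prod_Ico_succ_bot (show i < n - 1 from by omega)]
      ring
  have hlast : t (n - 1) * t n = c n := by
    rw [htn, htn1]
    field_simp [hc0 (n - 1)]
    linear_combination hs
  -- the diagonal matrix
  set d : Fin (2 * n) → ℂ := fun p =>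
    if (p : ℕ) < n then t ((p : ℕ) + 1) else (t ((p : ℕ) + 1 - n))⁻¹ with hd
  have hd0 : ∀ p, d p ≠ 0 := by
    intro p
    simp only [hd]
    split_ifs with h
    · exact ht0 _
    · exact inv_ne_zero (ht0 _)
  have hdlt : ∀ p : Fin (2 * n), (p : ℕ) < n → d p = t ((p : ℕ) + 1) := by
    intro p hp; simp only [hd]; rw [if_pos hp]
  have hdge : ∀ p : Fin (2 * n), n ≤ (p : ℕ) → d p = (t ((p : ℕ) + 1 - n))⁻¹ := by
    intro p hp; simp only [hd]; rw [if_neg (by omega)]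
  set d' : Fin (2 * n) → ℂ := fun p => (d p)⁻¹ with hd'
  have hdd : ∀ p, d p * d' p = 1 := fun p => by
    simp only [hd']; exact mul_inv_cancel₀ (hd0 p)
  have hdd' : ∀ p, d' p * d p = 1 := fun p => by
    simp only [hd']; exact inv_mul_cancel₀ (hd0 p)
  have hmul1 : Matrix.diagonal d * Matrix.diagonal d' = 1 := by
    rw [Matrix.diagonal_mul_diagonal]
    ext p q
    rw [Matrix.diagonal_apply, Matrix.one_apply]
    split_ifs with h
    · exact hdd p
    · rfl
  have hmul2 : Matrix.diagonal d' * Matrix.diagonal d = 1 := by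
    rw [Matrix.diagonal_mul_diagonal]
    ext p q
    rw [Matrix.diagonal_apply, Matrix.one_apply]
    split_ifs with h
    · exact hdd' p
    · rfl
  -- key conjugation computations
  have key : ∀ i, 1 ≤ i → i ≤ n →
      Matrix.diagonal d * XD n i * Matrix.diagonal d' = c i • XD n i := by
    intro i h1 h2
    ext p q
    have hq2n : (q : ℕ) < 2 * n := q.isLt
    have hp2n : (p : ℕ) < 2 * n := p.isLt
    rw [Matrix.mul_diagonal, Matrix.diagonal_mul, Matrix.smul_apply, smul_eq_mul]
    simp only [hd']
    by_cases hin : i = n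
    · rw [hin]
      simp only [XD, eq_self_iff_true, if_true, ED, Matrix.sub_apply, Matrix.of_apply]
      by_cases hA : (p : ℕ) + 1 = n - 1 ∧ (q : ℕ) + 1 = 2 * n
      · have hB : ¬((p : ℕ) + 1 = n ∧ (q : ℕ) + 1 = 2 * n - 1) := by omega
        rw [if_pos hA, if_neg hB]
        obtain ⟨hp, hq⟩ := hA
        rw [hdlt p (by omega), hdge q (by omega), hp,
          show (q : ℕ) + 1 - n = n from by omega, inv_inv]
        linear_combination hlast
      · rw [if_neg hA]
        by_cases hB : (p : ℕ) + 1 = n ∧ (q : ℕ) + 1 = 2 * n - 1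
        · rw [if_pos hB]
          obtain ⟨hp, hq⟩ := hB
          rw [hdlt p (by omega), hdge q (by omega), hp,
            show (q : ℕ) + 1 - n = n - 1 from by omega, inv_inv]
          linear_combination -hlast
        · rw [if_neg hB]; ring
    · have hstep := hstep' i (by omega)
      have hstepr : t i * (t (i + 1))⁻¹ = c i := by
        rw [hstep, mul_assoc, mul_inv_cancel₀ (ht0 (i + 1)), mul_one]
      simp only [XD, if_neg hin, ED, Matrix.sub_apply, Matrix.of_apply]
      by_cases hA : (p : ℕ) + 1 = i ∧ (q : ℕ) + 1 = i + 1
      · have hB : ¬((p : ℕ) + 1 = n + i + 1 ∧ (q : ℕ) + 1 = n + i) := by omega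
        rw [if_pos hA, if_neg hB]
        obtain ⟨hp, hq⟩ := hA
        rw [hdlt p (by omega), hdlt q (by omega), hp, hq]
        linear_combination hstepr
      · rw [if_neg hA]
        by_cases hB : (p : ℕ) + 1 = n + i + 1 ∧ (q : ℕ) + 1 = n + i
        · rw [if_pos hB]
          obtain ⟨hp, hq⟩ := hB
          rw [hdge p (by omega), hdge q (by omega),
            show (p : ℕ) + 1 - n = i + 1 from by omega,
            show (q : ℕ) + 1 - n = i from by omega, inv_inv]
          linear_combination -hstepr
        · rw [if_neg hB]; ring
  have hlastinv : (t n)⁻¹ * (t (n - 1))⁻¹ = (c n)⁻¹ := by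
    rw [← mul_inv, mul_comm (t n) (t (n - 1)), hlast]
  have keyT : ∀ i, 1 ≤ i → i ≤ n →
      Matrix.diagonal d * (XD n i)ᵀ * Matrix.diagonal d' = (c i)⁻¹ • (XD n i)ᵀ := by
    intro i h1 h2
    ext p q
    have hq2n : (q : ℕ) < 2 * n := q.isLt
    have hp2n : (p : ℕ) < 2 * n := p.isLt
    rw [Matrix.mul_diagonal, Matrix.diagonal_mul, Matrix.smul_apply, smul_eq_mul,
      Matrix.transpose_apply]
    simp only [hd']
    by_cases hin : i = n
    · rw [hin]
      simp only [XD, eq_self_iff_true, if_true, ED, Matrix.sub_apply, Matrix.of_apply]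
      by_cases hA : (q : ℕ) + 1 = n - 1 ∧ (p : ℕ) + 1 = 2 * n
      · have hB : ¬((q : ℕ) + 1 = n ∧ (p : ℕ) + 1 = 2 * n - 1) := by omega
        rw [if_pos hA, if_neg hB]
        obtain ⟨hq, hp⟩ := hA
        rw [hdge p (by omega), hdlt q (by omega), hq,
          show (p : ℕ) + 1 - n = n from by omega]
        linear_combination hlastinv
      · rw [if_neg hA]
        by_cases hB : (q : ℕ) + 1 = n ∧ (p : ℕ) + 1 = 2 * n - 1
        · rw [if_pos hB]
          obtain ⟨hq, hp⟩ := hB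
          rw [hdge p (by omega), hdlt q (by omega), hq,
            show (p : ℕ) + 1 - n = n - 1 from by omega]
          linear_combination -hlastinv
        · rw [if_neg hB]; ring
    · have hstep := hstep' i (by omega)
      have hstepinv : t (i + 1) * (t i)⁻¹ = (c i)⁻¹ := by
        rw [hstep, mul_inv]
        linear_combination (c i)⁻¹ * mul_inv_cancel₀ (ht0 (i + 1))
      simp only [XD, if_neg hin, ED, Matrix.sub_apply, Matrix.of_apply]
      by_cases hA : (q : ℕ) + 1 = i ∧ (p : ℕ) + 1 = i + 1
      · have hB : ¬((q : ℕ) + 1 = n + i + 1 ∧ (p : ℕ) + 1 = n + i) := by omega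
        rw [if_pos hA, if_neg hB]
        obtain ⟨hq, hp⟩ := hA
        rw [hdlt p (by omega), hdlt q (by omega), hp, hq]
        linear_combination hstepinv
      · rw [if_neg hA]
        by_cases hB : (q : ℕ) + 1 = n + i + 1 ∧ (p : ℕ) + 1 = n + i
        · rw [if_pos hB]
          obtain ⟨hq, hp⟩ := hB
          rw [hdge p (by omega), hdge q (by omega),
            show (p : ℕ) + 1 - n = i from by omega,
            show (q : ℕ) + 1 - n = i + 1 from by omega, inv_inv]
          linear_combination -hstepinv
        · rw [if_neg hB]; ring
  refine ⟨⟨Matrix.diagonal d, Matrix.diagonal d', hmul1, hmul2⟩, ?_, ?_⟩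
  · show (Matrix.diagonal d)ᵀ * SD n * Matrix.diagonal d = SD n
    rw [Matrix.diagonal_transpose]
    ext p q
    have hq2n : (q : ℕ) < 2 * n := q.isLt
    have hp2n : (p : ℕ) < 2 * n := p.isLt
    rw [Matrix.mul_diagonal, Matrix.diagonal_mul]
    simp only [SD, Matrix.of_apply]
    split_ifs with h
    · rcases h with h | h
      · rw [hdlt p (by omega), hdge q (by omega),
          show (q : ℕ) + 1 - n = (p : ℕ) + 1 from by omega]
        rw [mul_one, mul_inv_cancel₀ (ht0 _)]
      · rw [hdge p (by omega), hdlt q (by omega),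
          show (p : ℕ) + 1 - n = (q : ℕ) + 1 from by omega]
        rw [mul_one, inv_mul_cancel₀ (ht0 _)]
    · ring
  · show Matrix.diagonal d * (∑ i ∈ J₁, a i • XD n i + ∑ i ∈ J₂, b i • (XD n i)ᵀ) *
        Matrix.diagonal d' = _
    rw [mul_add, add_mul, Finset.mul_sum, Finset.mul_sum, Finset.sum_mul, Finset.sum_mul]
    congr 1
    · refine Finset.sum_congr rfl fun i hi => ?_
      obtain ⟨h1, h2⟩ := Finset.mem_Icc.mp (hJ₁ hi)
      rw [mul_smul_comm, smul_mul_assoc, key i h1 h2, smul_smul]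
      have hci : c i = (a i)⁻¹ := by simp only [hc]; rw [if_pos hi]
      rw [hci, mul_inv_cancel₀ (ha i hi), one_smul]
    · refine Finset.sum_congr rfl fun i hi => ?_
      obtain ⟨h1, h2⟩ := Finset.mem_Icc.mp (hJ₂ hi)
      rw [mul_smul_comm, smul_mul_assoc, keyT i h1 h2, smul_smul]
      have hci : c i = b i := by
        simp only [hc]
        rw [if_neg (Finset.disjoint_right.mp hdisj hi), if_pos hi]
      rw [hci, mul_inv_cancel₀ (hb i hi), one_smul]
end

section
/- Let n ≥ 2 and let J_1, J_2 be disjoint subsets of {1,…,n}. Suppose i ∈ J_1 and i+1 ∈ J_2, and suppose that i−1 ∈ J_1 whenever i ≥ 2 and that i+2 ∈ J_1 whenever i+2 ≤ n. Then X(J_1, J_2) is similar to X(J_1, J_2 ∖ {i+1}). -/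
open Matrix BigOperators

lemma Ecplx_mul_ne (n a b c d : ℕ) (h : b ≠ c) :
    Ecplx n a b * Ecplx n c d = 0 := by
  ext p q
  simp only [Ecplx, Matrix.mul_apply, Matrix.of_apply, Matrix.zero_apply]
  apply Finset.sum_eq_zero
  intro r _
  by_cases hb : (r : ℕ) + 1 = b
  · have hc : ¬((r : ℕ) + 1 = c) := fun hc => h (by omega)
    simp [hc]
  · simp [hb]

lemma Ecplx_mul_eq (n a b d : ℕ) (hb1 : 1 ≤ b) (hb2 : b ≤ n + 1) :
    Ecplx n a b * Ecplx n b d = Ecplx n a d := by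
  ext p q
  simp only [Ecplx, Matrix.mul_apply, Matrix.of_apply]
  have hlt : b - 1 < n + 1 := by omega
  rw [Finset.sum_eq_single (⟨b - 1, hlt⟩ : Fin (n + 1))]
  · have : (b - 1) + 1 = b := by omega
    simp [this, ite_and]
    by_cases h1 : (p : ℕ) + 1 = a <;> by_cases h2 : (q : ℕ) + 1 = d <;> simp [h1, h2]
  · intro r _ hr
    have : (r : ℕ) + 1 ≠ b := by
      intro h
      apply hr
      apply Fin.ext
      simp; omega
    simp [this]
  · intro h; exact absurd (Finset.mem_univ _) h

/-- Local pattern (1) of Lemma 6.1 in type `Aₙ`: if `i ∈ J₁`, `i+1 ∈ J₂`, and the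
neighbors of this `A₂` subdiagram lie in `J₁` (`i−1 ∈ J₁` when `i ≥ 2`, `i+2 ∈ J₁`
when `i+2 ≤ n`), then `X(J₁,J₂)` is similar to `X(J₁, J₂ ∖ {i+1})`. -/
theorem stmt17 (n : ℕ) (hn : 2 ≤ n) (J₁ J₂ : Finset ℕ)
    (hJ₁ : J₁ ⊆ Finset.Icc 1 n) (hJ₂ : J₂ ⊆ Finset.Icc 1 n) (hdisj : Disjoint J₁ J₂)
    (i : ℕ) (hi₁ : i ∈ J₁) (hi₂ : i + 1 ∈ J₂)
    (hleft : 2 ≤ i → i - 1 ∈ J₁) (hright : i + 2 ≤ n → i + 2 ∈ J₁) :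
    ∃ g : (Matrix (Fin (n + 1)) (Fin (n + 1)) ℂ)ˣ,
      (g : Matrix (Fin (n + 1)) (Fin (n + 1)) ℂ) * XA n J₁ J₂ *
          ((g⁻¹ : (Matrix (Fin (n + 1)) (Fin (n + 1)) ℂ)ˣ) :
            Matrix (Fin (n + 1)) (Fin (n + 1)) ℂ)
        = XA n J₁ (J₂.erase (i + 1)) := by
  have hiIcc := hJ₁ hi₁
  rw [Finset.mem_Icc] at hiIcc
  have hi1Icc := hJ₂ hi₂
  rw [Finset.mem_Icc] at hi1Icc
  set E : Matrix (Fin (n + 1)) (Fin (n + 1)) ℂ := Ecplx n (i + 2) i with hE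
  set X : Matrix (Fin (n + 1)) (Fin (n + 1)) ℂ := XA n J₁ J₂ with hX
  -- E * E = 0
  have hEE : E * E = 0 := Ecplx_mul_ne n _ _ _ _ (by omega)
  -- E * X = Ecplx n (i+2) (i+1)
  have hEX : E * X = Ecplx n (i + 2) (i + 1) := by
    rw [hX, XA, mul_add, Finset.mul_sum, Finset.mul_sum]
    rw [Finset.sum_eq_single i]
    · have h2 : ∀ j ∈ J₂, E * Ecplx n (j + 1) j = 0 := by
        intro j hj
        apply Ecplx_mul_ne
        intro h
        have hjIcc := hJ₂ hj
        rw [Finset.mem_Icc] at hjIcc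
        -- i = j + 1, so j = i - 1, 2 ≤ i
        have h2i : 2 ≤ i := by omega
        have : i - 1 ∈ J₁ := hleft h2i
        have : j ∈ J₁ := by
          have : j = i - 1 := by omega
          rwa [this]
        exact (Finset.disjoint_left.mp hdisj this) hj
      rw [Finset.sum_eq_zero h2, add_zero]
      exact Ecplx_mul_eq n (i + 2) i (i + 1) (by omega) (by omega)
    · intro j _ hj
      exact Ecplx_mul_ne n _ _ _ _ (Ne.symm hj)
    · intro h; exact absurd hi₁ h
  -- X * E = 0
  have hXE : X * E = 0 := by
    rw [hX, XA, add_mul, Finset.sum_mul, Finset.sum_mul]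
    rw [Finset.sum_eq_zero, Finset.sum_eq_zero, add_zero]
    · intro j hj
      apply Ecplx_mul_ne
      intro h
      -- j = i + 2 ∈ J₂
      have hjIcc := hJ₂ hj
      rw [Finset.mem_Icc] at hjIcc
      have : i + 2 ≤ n := by omega
      have h1 : i + 2 ∈ J₁ := hright this
      have : j ∈ J₁ := by rwa [h]
      exact (Finset.disjoint_left.mp hdisj this) hj
    · intro j hj
      apply Ecplx_mul_ne
      intro h
      -- j + 1 = i + 2, so j = i + 1 ∈ J₁, contradiction with i+1 ∈ J₂
      have : j = i + 1 := by omega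
      rw [this] at hj
      exact (Finset.disjoint_left.mp hdisj hj) hi₂
  have hEXE : E * X * E = 0 := by
    rw [hEX]
    exact Ecplx_mul_ne n _ _ _ _ (by omega)
  have hmul1 : (1 - E) * (1 + E) = 1 := by
    rw [sub_mul, one_mul, mul_add, mul_one, hEE, add_zero]
    abel
  have hmul2 : (1 + E) * (1 - E) = 1 := by
    rw [add_mul, one_mul, mul_sub, mul_one, hEE, sub_zero]
    abel
  refine ⟨⟨1 - E, 1 + E, hmul1, hmul2⟩, ?_⟩
  show (1 - E) * X * (1 + E) = XA n J₁ (J₂.erase (i + 1))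
  have key : (1 - E) * X * (1 + E) = X - Ecplx n (i + 2) (i + 1) := by
    rw [sub_mul, one_mul, sub_mul, mul_add, mul_add, mul_one, mul_one, hXE, hEXE, hEX]
    abel
  rw [key, hX, XA, XA]
  have : ∑ j ∈ J₂, Ecplx n (j + 1) j
      = Ecplx n (i + 2) (i + 1) + ∑ j ∈ J₂.erase (i + 1), Ecplx n (j + 1) j := by
    exact (Finset.add_sum_erase J₂ (fun j => Ecplx n (j + 1) j) hi₂).symm
  rw [this]
  abel
end

section
/- Let n ≥ 4 and let J_1, J_2 be disjoint subsets of {1,…,n}. Suppose i, i+1 ∈ J_1 and i+2, i+3 ∈ J_2, and suppose that i−1 ∈ J_1 whenever i ≥ 2 and that i+4 ∈ J_1 whenever i+4 ≤ n. Then X(J_1, J_2) is similar to X(J_1, J_2 ∖ {i+2}). -/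
open Matrix BigOperators

lemma Emul (n a b c d : ℕ) :
    Ecplx n a b * Ecplx n c d =
      if b = c ∧ 1 ≤ b ∧ b ≤ n + 1 then Ecplx n a d else 0 := by
  ext p q
  split_ifs with h
  · obtain ⟨rfl, hb1, hb2⟩ := h
    simp only [Matrix.mul_apply, Ecplx, Matrix.of_apply]
    rw [Finset.sum_eq_single (⟨b - 1, by omega⟩ : Fin (n + 1))]
    · split_ifs with h1 h2 h3 <;> simp_all <;> omega
    · intro r _ hr
      have hrb : ¬((r : ℕ) + 1 = b) := fun hc => hr (Fin.ext (by simp; omega))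
      split_ifs <;> simp_all
    · intro h; exact absurd (Finset.mem_univ _) h
  · simp only [Matrix.mul_apply, Ecplx, Matrix.of_apply, Matrix.zero_apply]
    apply Finset.sum_eq_zero
    intro r _
    split_ifs with h1 h2 <;> simp_all <;> omega

lemma Emul_same {n b : ℕ} (a d : ℕ) (hb1 : 1 ≤ b) (hb2 : b ≤ n + 1) :
    Ecplx n a b * Ecplx n b d = Ecplx n a d := by
  rw [Emul]; simp [hb1, hb2]

lemma Emul_ne {n b c : ℕ} (a d : ℕ) (h : b ≠ c) :
    Ecplx n a b * Ecplx n c d = 0 := by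
  rw [Emul]; simp [h]

/-- Local pattern (2) of Lemma 6.1 in type `Aₙ`: if `i, i+1 ∈ J₁`, `i+2, i+3 ∈ J₂`,
and the neighbors of this `A₄` subdiagram lie in `J₁` (`i−1 ∈ J₁` when `i ≥ 2`,
`i+4 ∈ J₁` when `i+4 ≤ n`), then `X(J₁,J₂)` is similar to `X(J₁, J₂ ∖ {i+2})`. -/
theorem stmt18 (n : ℕ) (hn : 4 ≤ n) (J₁ J₂ : Finset ℕ)
    (hJ₁ : J₁ ⊆ Finset.Icc 1 n) (hJ₂ : J₂ ⊆ Finset.Icc 1 n) (hdisj : Disjoint J₁ J₂)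
    (i : ℕ) (hi₁ : i ∈ J₁) (hi₂ : i + 1 ∈ J₁) (hi₃ : i + 2 ∈ J₂) (hi₄ : i + 3 ∈ J₂)
    (hleft : 2 ≤ i → i - 1 ∈ J₁) (hright : i + 4 ≤ n → i + 4 ∈ J₁) :
    ∃ g : (Matrix (Fin (n + 1)) (Fin (n + 1)) ℂ)ˣ,
      (g : Matrix (Fin (n + 1)) (Fin (n + 1)) ℂ) * XA n J₁ J₂ *
          ((g⁻¹ : (Matrix (Fin (n + 1)) (Fin (n + 1)) ℂ)ˣ) :
            Matrix (Fin (n + 1)) (Fin (n + 1)) ℂ)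
        = XA n J₁ (J₂.erase (i + 2)) := by
  have hin : i ∈ Finset.Icc 1 n := hJ₁ hi₁
  have hi1n : i + 1 ∈ Finset.Icc 1 n := hJ₁ hi₂
  have hi3n : i + 3 ∈ Finset.Icc 1 n := hJ₂ hi₄
  rw [Finset.mem_Icc] at hin hi1n hi3n
  set N : Matrix (Fin (n + 1)) (Fin (n + 1)) ℂ := Ecplx n (i + 3) (i + 1) with hNdef
  set M : Matrix (Fin (n + 1)) (Fin (n + 1)) ℂ := Ecplx n (i + 4) i with hMdef
  set X : Matrix (Fin (n + 1)) (Fin (n + 1)) ℂ := XA n J₁ J₂ with hXdef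
  -- key products
  have hNX : N * X = Ecplx n (i + 3) (i + 2) := by
    rw [hXdef, XA, mul_add, Finset.mul_sum, Finset.mul_sum]
    have h1 : ∑ j ∈ J₁, N * Ecplx n j (j + 1) = Ecplx n (i + 3) (i + 2) := by
      rw [Finset.sum_eq_single_of_mem (i + 1) hi₂
        (fun j _ hne => Emul_ne _ _ (fun h => hne (by omega)))]
      have e : i + 1 + 1 = i + 2 := by omega
      rw [e]
      exact Emul_same _ _ (by omega) (by omega)
    have h2 : ∑ j ∈ J₂, N * Ecplx n (j + 1) j = 0 := by
      apply Finset.sum_eq_zero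
      intro j hj
      have hji : j ≠ i := fun h => Finset.disjoint_left.mp hdisj hi₁ (h ▸ hj)
      exact Emul_ne _ _ (by omega)
    rw [h1, h2, add_zero]
  have hXN : X * N = Ecplx n (i + 4) (i + 1) := by
    rw [hXdef, XA, add_mul, Finset.sum_mul, Finset.sum_mul]
    have h1 : ∑ j ∈ J₁, Ecplx n j (j + 1) * N = 0 := by
      apply Finset.sum_eq_zero
      intro j hj
      have hji : j ≠ i + 2 := fun h => Finset.disjoint_left.mp hdisj hj (h ▸ hi₃)
      exact Emul_ne _ _ (by omega)
    have h2 : ∑ j ∈ J₂, Ecplx n (j + 1) j * N = Ecplx n (i + 4) (i + 1) := by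
      rw [Finset.sum_eq_single_of_mem (i + 3) hi₄
        (fun j _ hne => Emul_ne _ _ (fun h => hne (by omega)))]
      have e : i + 3 + 1 = i + 4 := by omega
      rw [e]
      exact Emul_same _ _ (by omega) (by omega)
    rw [h1, h2, zero_add]
  have hMX : M * X = Ecplx n (i + 4) (i + 1) := by
    rw [hXdef, XA, mul_add, Finset.mul_sum, Finset.mul_sum]
    have h1 : ∑ j ∈ J₁, M * Ecplx n j (j + 1) = Ecplx n (i + 4) (i + 1) := by
      rw [Finset.sum_eq_single_of_mem i hi₁
        (fun j _ hne => Emul_ne _ _ (fun h => hne (by omega)))]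
      exact Emul_same _ _ (by omega) (by omega)
    have h2 : ∑ j ∈ J₂, M * Ecplx n (j + 1) j = 0 := by
      apply Finset.sum_eq_zero
      intro j hj
      have hjn : 1 ≤ j := (Finset.mem_Icc.mp (hJ₂ hj)).1
      have hji : j + 1 ≠ i := by
        intro h
        have h2i : 2 ≤ i := by omega
        have hm : i - 1 ∈ J₁ := hleft h2i
        refine Finset.disjoint_left.mp hdisj hm ?_
        have : i - 1 = j := by omega
        rwa [this]
      exact Emul_ne _ _ (fun h => hji h.symm)
    rw [h1, h2, add_zero]
  have hXM : X * M = 0 := by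
    rw [hXdef, XA, add_mul, Finset.sum_mul, Finset.sum_mul]
    have h1 : ∑ j ∈ J₁, Ecplx n j (j + 1) * M = 0 := by
      apply Finset.sum_eq_zero
      intro j hj
      have hji : j ≠ i + 3 := fun h => Finset.disjoint_left.mp hdisj hj (h ▸ hi₄)
      exact Emul_ne _ _ (by omega)
    have h2 : ∑ j ∈ J₂, Ecplx n (j + 1) j * M = 0 := by
      apply Finset.sum_eq_zero
      intro j hj
      have hjn : j ≤ n := (Finset.mem_Icc.mp (hJ₂ hj)).2
      have hji : j ≠ i + 4 := by
        intro h
        have h4 : i + 4 ≤ n := by omega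
        exact Finset.disjoint_left.mp hdisj (hright h4) (h ▸ hj)
      exact Emul_ne _ _ hji
    rw [h1, h2, add_zero]
  have hNN : N * N = 0 := Emul_ne _ _ (by omega)
  have hMM : M * M = 0 := Emul_ne _ _ (by omega)
  have hE32N : Ecplx n (i + 3) (i + 2) * N = 0 := Emul_ne _ _ (by omega)
  have hE32M : Ecplx n (i + 3) (i + 2) * M = 0 := Emul_ne _ _ (by omega)
  have hE41M : Ecplx n (i + 4) (i + 1) * M = 0 := Emul_ne _ _ (by omega)
  have hME32 : M * Ecplx n (i + 3) (i + 2) = 0 := Emul_ne _ _ (by omega)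
  have hME41 : M * Ecplx n (i + 4) (i + 1) = 0 := Emul_ne _ _ (by omega)
  -- the unit
  have hNunit : (1 - N) * (1 + N) = 1 := by
    have e : (1 - N) * (1 + N) = 1 + N - N - N * N := by noncomm_ring
    rw [e, hNN]; abel
  have hNunit' : (1 + N) * (1 - N) = 1 := by
    have e : (1 + N) * (1 - N) = 1 - N + N - N * N := by noncomm_ring
    rw [e, hNN]; abel
  have hMunit : (1 - M) * (1 + M) = 1 := by
    have e : (1 - M) * (1 + M) = 1 + M - M - M * M := by noncomm_ring
    rw [e, hMM]; abel
  have hMunit' : (1 + M) * (1 - M) = 1 := by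
    have e : (1 + M) * (1 - M) = 1 - M + M - M * M := by noncomm_ring
    rw [e, hMM]; abel
  have hval_inv : ((1 - M) * (1 - N)) * ((1 + N) * (1 + M)) = 1 := by
    calc ((1 - M) * (1 - N)) * ((1 + N) * (1 + M))
        = (1 - M) * ((1 - N) * (1 + N)) * (1 + M) := by noncomm_ring
      _ = (1 - M) * (1 + M) := by rw [hNunit, mul_one]
      _ = 1 := hMunit
  have hinv_val : ((1 + N) * (1 + M)) * ((1 - M) * (1 - N)) = 1 := by
    calc ((1 + N) * (1 + M)) * ((1 - M) * (1 - N))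
        = (1 + N) * ((1 + M) * (1 - M)) * (1 - N) := by noncomm_ring
      _ = (1 + N) * (1 - N) := by rw [hMunit', mul_one]
      _ = 1 := hNunit'
  refine ⟨⟨(1 - M) * (1 - N), (1 + N) * (1 + M), hval_inv, hinv_val⟩, ?_⟩
  show ((1 - M) * (1 - N)) * X * ((1 + N) * (1 + M)) = _
  have hX1 : (1 - N) * X * (1 + N)
      = X - Ecplx n (i + 3) (i + 2) + Ecplx n (i + 4) (i + 1) := by
    have expand : (1 - N) * X * (1 + N) = X + X * N - N * X - N * X * N := by
      noncomm_ring
    rw [expand, hNX, hXN, hE32N]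
    abel
  have key : ((1 - M) * (1 - N)) * X * ((1 + N) * (1 + M))
      = X - Ecplx n (i + 3) (i + 2) := by
    have assoc : ((1 - M) * (1 - N)) * X * ((1 + N) * (1 + M))
        = (1 - M) * ((1 - N) * X * (1 + N)) * (1 + M) := by noncomm_ring
    rw [assoc, hX1]
    have expand : (1 - M) * (X - Ecplx n (i + 3) (i + 2) + Ecplx n (i + 4) (i + 1)) * (1 + M)
        = X - Ecplx n (i + 3) (i + 2) + Ecplx n (i + 4) (i + 1)
          + (X * M - Ecplx n (i + 3) (i + 2) * M + Ecplx n (i + 4) (i + 1) * M)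
          - (M * X - M * Ecplx n (i + 3) (i + 2) + M * Ecplx n (i + 4) (i + 1))
          - M * (X * M - Ecplx n (i + 3) (i + 2) * M + Ecplx n (i + 4) (i + 1) * M) := by
      noncomm_ring
    rw [expand, hXM, hE32M, hE41M, hMX, hME32, hME41]
    simp only [sub_zero, add_zero, sub_self, mul_zero]
    abel
  rw [key, hXdef, XA, XA]
  rw [← Finset.add_sum_erase J₂ _ hi₃]
  have e : i + 2 + 1 = i + 3 := by omega
  rw [e]
  abel
end
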